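/- arXiv:1706.08498 — 6 statements merged into one kernel-verified Lean document; each statement's English description precedes it below -/
import Mathlib

section
/- Let 𝒵 be a finite collection of nonempty index sets over the coordinates of ℝ^N, and suppose each coordinate j appears in at most m elements of 𝒵. Then the max-pooling operator P : ℝ^N → ℝ^{|𝒵|} defined by P(T)_Z = max_{j ∈ Z} T_j is m^{1/p}-Lipschitz with respect to the ℓ_p norm for any p ≥ 1. -/
open Finset

lemma maxpool_key {N : ℕ} (s : Finset (Fin N)) (hs : s.Nonempty) (T T' : Fin N → ℝ)
    (p : ℝ) (hp : 1 ≤ p) :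
    |s.sup' hs T - s.sup' hs T'| ^ p ≤ ∑ j ∈ s, |T j - T' j| ^ p := by
  have key : |s.sup' hs T - s.sup' hs T'| ≤ s.sup' hs (fun j => |T j - T' j|) := by
    rw [abs_sub_le_iff]
    constructor
    · rw [sub_le_iff_le_add, Finset.sup'_le_iff]
      intro j hj
      have h1 : T j ≤ |T j - T' j| + T' j := by cases abs_cases (T j - T' j) <;> linarith
      exact h1.trans (add_le_add (Finset.le_sup' (fun j => |T j - T' j|) hj)
        (Finset.le_sup' T' hj))
    · rw [sub_le_iff_le_add, Finset.sup'_le_iff]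
      intro j hj
      have h1 : T' j ≤ |T j - T' j| + T j := by cases abs_cases (T j - T' j) <;> linarith
      exact h1.trans (add_le_add (Finset.le_sup' (fun j => |T j - T' j|) hj)
        (Finset.le_sup' T hj))
  obtain ⟨j0, hj0, hj0eq⟩ := Finset.exists_mem_eq_sup' hs (fun j => |T j - T' j|)
  have h1 : |s.sup' hs T - s.sup' hs T'| ^ p ≤ |T j0 - T' j0| ^ p := by
    apply Real.rpow_le_rpow (abs_nonneg _) _ (by linarith)
    rw [← hj0eq]; exact key
  refine h1.trans (Finset.single_le_sum (f := fun j => |T j - T' j| ^ p) ?_ hj0)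
  intro j _; exact Real.rpow_nonneg (abs_nonneg _) _

/-- if each coordinate appears in at most `m` of the pooling sets,
the max-pooling operator is `m^(1/p)`-Lipschitz with respect to the ℓ_p norm, p ≥ 1. -/
theorem maxpool_lipschitz (N : ℕ) (ι : Type*) [Fintype ι] [DecidableEq ι]
    (Z : ι → Finset (Fin N)) (hne : ∀ i, (Z i).Nonempty)
    (m : ℕ) (hm : ∀ j : Fin N, (Finset.univ.filter (fun i => j ∈ Z i)).card ≤ m)
    (p : ℝ) (hp : 1 ≤ p) (T T' : Fin N → ℝ) :
    (∑ i : ι, |(Z i).sup' (hne i) T - (Z i).sup' (hne i) T'| ^ p) ^ (1/p)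
      ≤ (m : ℝ) ^ (1/p) * (∑ j : Fin N, |T j - T' j| ^ p) ^ (1/p) := by
  have hnn : ∀ j, (0:ℝ) ≤ |T j - T' j| ^ p := fun j => Real.rpow_nonneg (abs_nonneg _) _
  have hS : (0:ℝ) ≤ ∑ j : Fin N, |T j - T' j| ^ p := Finset.sum_nonneg fun j _ => hnn j
  have step1 : (∑ i : ι, |(Z i).sup' (hne i) T - (Z i).sup' (hne i) T'| ^ p)
      ≤ (m : ℝ) * ∑ j : Fin N, |T j - T' j| ^ p := by
    calc ∑ i : ι, |(Z i).sup' (hne i) T - (Z i).sup' (hne i) T'| ^ p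
        ≤ ∑ i : ι, ∑ j ∈ Z i, |T j - T' j| ^ p :=
          Finset.sum_le_sum fun i _ => maxpool_key (Z i) (hne i) T T' p hp
      _ = ∑ i : ι, ∑ j : Fin N, if j ∈ Z i then |T j - T' j| ^ p else 0 := by
          refine Finset.sum_congr rfl fun i _ => ?_
          rw [← Finset.sum_filter]
          congr 1
          ext j; simp
      _ = ∑ j : Fin N, ∑ i : ι, if j ∈ Z i then |T j - T' j| ^ p else 0 := Finset.sum_comm
      _ = ∑ j : Fin N, ((Finset.univ.filter (fun i => j ∈ Z i)).card : ℝ) * |T j - T' j| ^ p := by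
          refine Finset.sum_congr rfl fun j _ => ?_
          rw [← Finset.sum_filter, Finset.sum_const, nsmul_eq_mul]
      _ ≤ ∑ j : Fin N, (m : ℝ) * |T j - T' j| ^ p :=
          Finset.sum_le_sum fun j _ =>
            mul_le_mul_of_nonneg_right (by exact_mod_cast hm j) (hnn j)
      _ = (m : ℝ) * ∑ j : Fin N, |T j - T' j| ^ p := by rw [Finset.mul_sum]
  calc (∑ i : ι, |(Z i).sup' (hne i) T - (Z i).sup' (hne i) T'| ^ p) ^ (1/p)
      ≤ ((m : ℝ) * ∑ j : Fin N, |T j - T' j| ^ p) ^ (1/p) :=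
        Real.rpow_le_rpow (Finset.sum_nonneg fun i _ => Real.rpow_nonneg (abs_nonneg _) _)
          step1 (by positivity)
    _ = (m : ℝ) ^ (1/p) * (∑ j : Fin N, |T j - T' j| ^ p) ^ (1/p) :=
        Real.mul_rpow (Nat.cast_nonneg m) hS
end

section
/- (Maurey sparsification) Let H be a real Hilbert space and U = Σ_{i=1}^d α_i V_i with V_i ∈ H and α_i ≥ 0 not all zero. Then for every positive integer k there exist nonnegative integers k_1,…,k_d with Σ_i k_i = k such that ‖U − (‖α‖_1/k) Σ_i k_i V_i‖² ≤ (‖α‖_1/k) Σ_i α_i ‖V_i‖² ≤ (‖α‖_1²/k) max_i ‖V_i‖². -/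
open Finset

lemma maurey_weight_sum {d : ℕ} (p : Fin d → ℝ) (hp1 : ∑ i, p i = 1) (n : ℕ) :
    ∑ τ : Fin n → Fin d, ∏ j, p (τ j) = 1 := by
  rw [← Fintype.piFinset_univ, ← Finset.prod_univ_sum]
  simp [hp1]

lemma maurey_aux {H : Type*} [NormedAddCommGroup H] [InnerProductSpace ℝ H]
    {d : ℕ} (p : Fin d → ℝ) (W : Fin d → H) (U : H)
    (hp1 : ∑ i, p i = 1) (hpU : ∑ i, p i • W i = U) (k : ℕ) :
    ∑ ω : Fin k → Fin d, (∏ j, p (ω j)) * ‖(k : ℝ) • U - ∑ j, W (ω j)‖ ^ 2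
      = k * ((∑ i, p i * ‖W i‖ ^ 2) - ‖U‖ ^ 2) := by
  have hz : ∑ i, p i • (U - W i) = 0 := by
    simp only [smul_sub, Finset.sum_sub_distrib, hpU, ← Finset.sum_smul, hp1, one_smul,
      sub_self]
  have hinner : ∑ i, p i * (inner ℝ U (W i) : ℝ) = ‖U‖ ^ 2 := by
    have h1 : ∑ i, p i * (inner ℝ U (W i) : ℝ) = inner ℝ U (∑ i, p i • W i) := by
      rw [inner_sum]
      exact Finset.sum_congr rfl fun i _ => (real_inner_smul_right _ _ _).symm
    rw [h1, hpU, real_inner_self_eq_norm_sq]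
  have hB : ∑ i, p i * ‖U - W i‖ ^ 2 = (∑ i, p i * ‖W i‖ ^ 2) - ‖U‖ ^ 2 := by
    have h1 : ∀ i, p i * ‖U - W i‖ ^ 2
        = p i * ‖U‖ ^ 2 - 2 * (p i * (inner ℝ U (W i) : ℝ)) + p i * ‖W i‖ ^ 2 := by
      intro i; rw [norm_sub_sq_real]; ring
    rw [Finset.sum_congr rfl fun i _ => h1 i, Finset.sum_add_distrib, Finset.sum_sub_distrib,
      ← Finset.sum_mul, ← Finset.mul_sum, hp1, hinner]
    ring
  induction k with
  | zero => simp
  | succ k ih =>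
    have e := Equiv.sum_comp (Fin.consEquiv (fun _ : Fin (k+1) => Fin d))
      (fun ω : Fin (k+1) → Fin d =>
        (∏ j, p (ω j)) * ‖((k+1 : ℕ) : ℝ) • U - ∑ j, W (ω j)‖ ^ 2)
    rw [← e, Fintype.sum_prod_type]
    have hterm : ∀ (i : Fin d) (τ : Fin k → Fin d),
        (∏ j, p ((Fin.consEquiv (fun _ : Fin (k+1) => Fin d)) (i, τ) j)) *
          ‖((k+1 : ℕ) : ℝ) • U - ∑ j, W ((Fin.consEquiv (fun _ : Fin (k+1) => Fin d)) (i, τ) j)‖ ^ 2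
        = (p i * ∏ j, p (τ j)) *
          ‖(((k : ℝ) • U - ∑ j, W (τ j)) + (U - W i))‖ ^ 2 := by
      intro i τ
      have harg : ((k+1 : ℕ) : ℝ) • U - ∑ j : Fin (k+1), W ((Fin.cons i τ : ∀ _ : Fin (k+1), Fin d) j)
          = ((k : ℝ) • U - ∑ j, W (τ j)) + (U - W i) := by
        rw [Fin.sum_univ_succ]
        simp only [Fin.cons_zero, Fin.cons_succ]
        push_cast
        rw [add_smul, one_smul]
        abel
      simp only [Fin.consEquiv, Equiv.coe_fn_mk, Fin.prod_univ_succ, Fin.cons_zero,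
        Fin.cons_succ, harg]
    rw [Finset.sum_congr rfl fun i _ => Finset.sum_congr rfl fun τ _ => hterm i τ]
    rw [Finset.sum_comm]
    have hrow : ∀ τ : Fin k → Fin d,
        ∑ i, (p i * ∏ j, p (τ j)) *
          ‖(((k : ℝ) • U - ∑ j, W (τ j)) + (U - W i))‖ ^ 2
        = (∏ j, p (τ j)) * ‖(k : ℝ) • U - ∑ j, W (τ j)‖ ^ 2
          + (∏ j, p (τ j)) * ((∑ i, p i * ‖W i‖ ^ 2) - ‖U‖ ^ 2) := by
      intro τ
      set a := (k : ℝ) • U - ∑ j, W (τ j) with ha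
      set w := ∏ j, p (τ j) with hw
      have hcross : ∑ i, p i * (inner ℝ a (U - W i) : ℝ) = 0 := by
        have h1 : ∑ i, p i * (inner ℝ a (U - W i) : ℝ) = inner ℝ a (∑ i, p i • (U - W i)) := by
          rw [inner_sum]
          exact Finset.sum_congr rfl fun i _ => (real_inner_smul_right _ _ _).symm
        rw [h1, hz, inner_zero_right]
      have h1 : ∀ i, (p i * w) * ‖a + (U - W i)‖ ^ 2
          = w * (‖a‖ ^ 2 * p i) + w * (2 * (p i * (inner ℝ a (U - W i) : ℝ)))
            + w * (p i * ‖U - W i‖ ^ 2) := by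
        intro i; rw [norm_add_sq_real]; ring
      rw [Finset.sum_congr rfl fun i _ => h1 i, Finset.sum_add_distrib,
        Finset.sum_add_distrib, ← Finset.mul_sum, ← Finset.mul_sum, ← Finset.mul_sum,
        ← Finset.mul_sum, ← Finset.mul_sum, hcross, hp1, hB]
      ring
    rw [Finset.sum_congr rfl fun τ _ => hrow τ, Finset.sum_add_distrib, ih,
      ← Finset.sum_mul, maurey_weight_sum p hp1]
    push_cast
    ring

/-- Maurey sparsification: if U = Σ_i α_i • V_i with α_i ≥ 0 not all zero,
then for every positive integer k there are nonnegative integers k_1,…,k_d summing to k with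
‖U − (‖α‖₁/k) Σ_i k_i V_i‖² ≤ (‖α‖₁/k) Σ_i α_i ‖V_i‖² ≤ (‖α‖₁²/k) max_i ‖V_i‖². -/
theorem maurey_sparsification (H : Type*) [NormedAddCommGroup H] [InnerProductSpace ℝ H]
    (d : ℕ) (hd : 0 < d) (α : Fin d → ℝ) (hα : ∀ i, 0 ≤ α i) (hα0 : α ≠ 0)
    (V : Fin d → H) (U : H) (hU : U = ∑ i, α i • V i)
    (k : ℕ) (hk : 0 < k) :
    ∃ κ : Fin d → ℕ, (∑ i, κ i) = k ∧
      ‖U - ((∑ i, α i) / k) • ∑ i, (κ i : ℝ) • V i‖ ^ 2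
        ≤ ((∑ i, α i) / k) * ∑ i, α i * ‖V i‖ ^ 2
      ∧ ((∑ i, α i) / k) * ∑ i, α i * ‖V i‖ ^ 2
        ≤ ((∑ i, α i) ^ 2 / k) * (Finset.univ.sup' (by have := Fin.pos_iff_nonempty.mp hd; exact Finset.univ_nonempty) (fun i => ‖V i‖ ^ 2)) := by
  set S := ∑ i, α i with hSdef
  have hS0 : 0 < S := by
    obtain ⟨i, hi⟩ := Function.ne_iff.mp hα0
    exact Finset.sum_pos' (fun j _ => hα j)
      ⟨i, Finset.mem_univ i, lt_of_le_of_ne (hα i) (Ne.symm hi)⟩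
  set p : Fin d → ℝ := fun i => α i / S with hpdef
  set W : Fin d → H := fun i => S • V i with hWdef
  have hp1 : ∑ i, p i = 1 := by
    rw [hpdef, ← Finset.sum_div, div_self hS0.ne']
  have hpnn : ∀ i, 0 ≤ p i := fun i => div_nonneg (hα i) hS0.le
  have hpU : ∑ i, p i • W i = U := by
    rw [hU]
    refine Finset.sum_congr rfl fun i _ => ?_
    rw [hpdef, hWdef, smul_smul, div_mul_cancel₀ _ hS0.ne']
  have key := maurey_aux p W U hp1 hpU k
  set C : ℝ := (k : ℝ) * ((∑ i, p i * ‖W i‖ ^ 2) - ‖U‖ ^ 2) with hCdef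
  -- pick a good ω
  have hex : ∃ ω : Fin k → Fin d, ‖(k : ℝ) • U - ∑ j, W (ω j)‖ ^ 2 ≤ C := by
    by_contra hcon
    push_neg at hcon
    have hwsum := maurey_weight_sum p hp1 k
    obtain ⟨ω₀, -, hω₀⟩ := Finset.exists_ne_zero_of_sum_ne_zero (s := Finset.univ)
      (f := fun ω : Fin k → Fin d => ∏ j, p (ω j)) (by rw [hwsum]; norm_num)
    have hwnn : ∀ ω : Fin k → Fin d, 0 ≤ ∏ j, p (ω j) :=
      fun ω => Finset.prod_nonneg fun j _ => hpnn _
    have hlt : ∑ ω : Fin k → Fin d, (∏ j, p (ω j)) * C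
        < ∑ ω : Fin k → Fin d, (∏ j, p (ω j)) * ‖(k : ℝ) • U - ∑ j, W (ω j)‖ ^ 2 := by
      refine Finset.sum_lt_sum (fun ω _ => mul_le_mul_of_nonneg_left (hcon ω).le (hwnn ω))
        ⟨ω₀, Finset.mem_univ _, ?_⟩
      exact mul_lt_mul_of_pos_left (hcon ω₀) (lt_of_le_of_ne (hwnn ω₀) (Ne.symm hω₀))
    rw [key, ← Finset.sum_mul, hwsum, one_mul] at hlt
    exact lt_irrefl _ hlt
  obtain ⟨ω, hω⟩ := hex
  classical
  refine ⟨fun i => (Finset.univ.filter fun j => ω j = i).card, ?_, ?_, ?_⟩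
  · rw [← Finset.card_eq_sum_card_fiberwise (t := Finset.univ) fun x _ => Finset.mem_univ _]
    simp
  · -- first inequality
    have hsumV : ∑ i, (((Finset.univ.filter fun j => ω j = i).card : ℝ)) • V i
        = ∑ j, V (ω j) := by
      rw [← Finset.sum_fiberwise Finset.univ ω (fun j => V (ω j))]
      refine Finset.sum_congr rfl fun i _ => ?_
      rw [Nat.cast_smul_eq_nsmul, ← Finset.sum_const]
      refine Finset.sum_congr rfl fun j hj => ?_
      rw [(Finset.mem_filter.mp hj).2]
    have hvec : U - (S / k) • ∑ i, (((Finset.univ.filter fun j => ω j = i).card : ℝ)) • V i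
        = (1 / (k : ℝ)) • ((k : ℝ) • U - ∑ j, W (ω j)) := by
      rw [hsumV, smul_sub, smul_smul, one_div, inv_mul_cancel₀ (by positivity : (k:ℝ) ≠ 0),
        one_smul]
      congr 1
      simp only [Finset.smul_sum, hWdef, smul_smul]
      refine Finset.sum_congr rfl fun j _ => ?_
      rw [div_eq_inv_mul]
    have hWnorm : ∑ i, p i * ‖W i‖ ^ 2 = S * ∑ i, α i * ‖V i‖ ^ 2 := by
      rw [Finset.mul_sum]
      refine Finset.sum_congr rfl fun i _ => ?_
      rw [hpdef, hWdef, norm_smul, Real.norm_eq_abs, abs_of_nonneg hS0.le, mul_pow]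
      field_simp
    rw [hvec, norm_smul, mul_pow, Real.norm_eq_abs]
    have hC2 : C ≤ (k : ℝ) * (S * ∑ i, α i * ‖V i‖ ^ 2) := by
      rw [hCdef, hWnorm]
      have : S * ∑ i, α i * ‖V i‖ ^ 2 - ‖U‖ ^ 2 ≤ S * ∑ i, α i * ‖V i‖ ^ 2 := by
        nlinarith [sq_nonneg ‖U‖]
      exact mul_le_mul_of_nonneg_left this (by positivity)
    calc |1 / (k : ℝ)| ^ 2 * ‖(k : ℝ) • U - ∑ j, W (ω j)‖ ^ 2
        ≤ |1 / (k : ℝ)| ^ 2 * C := mul_le_mul_of_nonneg_left hω (by positivity)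
      _ ≤ |1 / (k : ℝ)| ^ 2 * ((k : ℝ) * (S * ∑ i, α i * ‖V i‖ ^ 2)) := by
          refine mul_le_mul_of_nonneg_left hC2 (by positivity)
      _ = (S / k) * ∑ i, α i * ‖V i‖ ^ 2 := by
          rw [abs_of_nonneg (by positivity : (0:ℝ) ≤ 1 / (k:ℝ))]
          field_simp
  · -- second inequality
    set M := Finset.univ.sup'
      (by have := Fin.pos_iff_nonempty.mp hd; exact Finset.univ_nonempty)
      (fun i => ‖V i‖ ^ 2) with hMdef
    have hsum_le : ∑ i, α i * ‖V i‖ ^ 2 ≤ S * M := by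
      rw [hSdef, Finset.sum_mul]
      exact Finset.sum_le_sum fun i _ =>
        mul_le_mul_of_nonneg_left (Finset.le_sup' (fun i => ‖V i‖ ^ 2) (Finset.mem_univ i))
          (hα i)
    calc (S / k) * ∑ i, α i * ‖V i‖ ^ 2 ≤ (S / k) * (S * M) :=
          mul_le_mul_of_nonneg_left hsum_le (by positivity)
      _ = (S ^ 2 / k) * M := by ring
end

section
/- (Matrix covering) Let conjugate exponents (p,q) and (r,s) be given with p ≤ 2, positive reals a, b, ε, and positive integer m. For any X ∈ ℝ^{n×d} with ‖X‖_p ≤ b (entrywise p-norm), the set {XA : A ∈ ℝ^{d×m}, ‖A‖_{q,s} ≤ a} admits a proper ε-cover in Frobenius norm of cardinality N with ln N ≤ ⌈a²b²m^{2/r}/ε²⌉ · ln(2dm). -/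
open Finset


/-- Entrywise p-norm of a matrix. -/
noncomputable def entryNorm {n d : ℕ} (p : ℝ) (X : Matrix (Fin n) (Fin d) ℝ) : ℝ :=
  (∑ i, ∑ j, |X i j| ^ p) ^ (1/p)

/-- Group (q,s)-norm of a matrix: the ℓ_s norm of the vector of column ℓ_q norms. -/
noncomputable def groupNorm {d m : ℕ} (q s : ℝ) (A : Matrix (Fin d) (Fin m) ℝ) : ℝ :=
  (∑ j, ((∑ i, |A i j| ^ q) ^ (1/q)) ^ s) ^ (1/s)

/-- Frobenius norm. -/
noncomputable def frobNorm {n m : ℕ} (Y : Matrix (Fin n) (Fin m) ℝ) : ℝ :=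
  Real.sqrt (∑ i, ∑ j, (Y i j) ^ 2)

/-- The linear equivalence between matrices and Euclidean space. -/
noncomputable def matE (n m : ℕ) : Matrix (Fin n) (Fin m) ℝ ≃ₗ[ℝ] EuclideanSpace ℝ (Fin n × Fin m) where
  toFun Y := WithLp.toLp 2 (fun ij : Fin n × Fin m => Y ij.1 ij.2)
  invFun x := fun i j => x (i, j)
  map_add' _ _ := rfl
  map_smul' _ _ := rfl
  left_inv _ := rfl
  right_inv _ := rfl

@[simp] lemma matE_apply {n m : ℕ} (Y : Matrix (Fin n) (Fin m) ℝ) (ij : Fin n × Fin m) :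
    matE n m Y ij = Y ij.1 ij.2 := rfl

@[simp] lemma matE_symm_apply {n m : ℕ} (x : EuclideanSpace ℝ (Fin n × Fin m)) (i : Fin n)
    (j : Fin m) : (matE n m).symm x i j = x (i, j) := rfl

lemma frob_eq_norm {n m : ℕ} (Y : Matrix (Fin n) (Fin m) ℝ) : frobNorm Y = ‖matE n m Y‖ := by
  rw [EuclideanSpace.norm_eq, frobNorm]
  congr 1
  rw [Fintype.sum_prod_type]
  exact Finset.sum_congr rfl fun i _ => Finset.sum_congr rfl fun j _ => by
    rw [matE_apply, Real.norm_eq_abs, sq_abs]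

section GN

variable {d m : ℕ} {q s : ℝ}

lemma colq_nonneg (q : ℝ) (A : Matrix (Fin d) (Fin m) ℝ) (j : Fin m) :
    0 ≤ (∑ i, |A i j| ^ q) ^ (1/q) :=
  Real.rpow_nonneg (Finset.sum_nonneg fun i _ => Real.rpow_nonneg (abs_nonneg _) q) _

lemma groupNorm_nonneg (q s : ℝ) (A : Matrix (Fin d) (Fin m) ℝ) : 0 ≤ groupNorm q s A :=
  Real.rpow_nonneg (Finset.sum_nonneg fun j _ => Real.rpow_nonneg (colq_nonneg q A j) s) _

lemma groupNorm_zero (hq : 0 < q) (hs : 0 < s) : groupNorm q s (0 : Matrix (Fin d) (Fin m) ℝ) = 0 := by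
  rw [groupNorm]
  simp only [Matrix.zero_apply, abs_zero, Real.zero_rpow hq.ne', Finset.sum_const_zero,
    Real.zero_rpow (one_div_ne_zero hq.ne'), Real.zero_rpow hs.ne',
    Real.zero_rpow (one_div_ne_zero hs.ne')]

lemma groupNorm_smul (hq : 0 < q) (hs : 0 < s) (c : ℝ) (A : Matrix (Fin d) (Fin m) ℝ) :
    groupNorm q s (c • A) = |c| * groupNorm q s A := by
  rw [groupNorm, groupNorm]
  have habs : ∀ i j, |(c • A) i j| = |c| * |A i j| := fun i j => by
    rw [Matrix.smul_apply, smul_eq_mul, abs_mul]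
  have hcol : ∀ j, (∑ i, |(c • A) i j| ^ q) ^ (1/q)
      = |c| * (∑ i, |A i j| ^ q) ^ (1/q) := by
    intro j
    have : ∑ i, |(c • A) i j| ^ q = |c| ^ q * ∑ i, |A i j| ^ q := by
      rw [Finset.mul_sum]
      exact Finset.sum_congr rfl fun i _ => by
        rw [habs, Real.mul_rpow (abs_nonneg c) (abs_nonneg _)]
    rw [this, Real.mul_rpow (Real.rpow_nonneg (abs_nonneg c) q)
      (Finset.sum_nonneg fun i _ => Real.rpow_nonneg (abs_nonneg _) q),
      ← Real.rpow_mul (abs_nonneg c), mul_one_div, div_self hq.ne', Real.rpow_one]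
  have : ∑ j, ((∑ i, |(c • A) i j| ^ q) ^ (1/q)) ^ s
      = |c| ^ s * ∑ j, ((∑ i, |A i j| ^ q) ^ (1/q)) ^ s := by
    rw [Finset.mul_sum]
    exact Finset.sum_congr rfl fun j _ => by
      rw [hcol, Real.mul_rpow (abs_nonneg c) (colq_nonneg q A j)]
  rw [this, Real.mul_rpow (Real.rpow_nonneg (abs_nonneg c) s)
    (Finset.sum_nonneg fun j _ => Real.rpow_nonneg (colq_nonneg q A j) s),
    ← Real.rpow_mul (abs_nonneg c), mul_one_div, div_self hs.ne', Real.rpow_one]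

lemma groupNorm_add_le (hq : 1 ≤ q) (hs : 1 ≤ s) (A B : Matrix (Fin d) (Fin m) ℝ) :
    groupNorm q s (A + B) ≤ groupNorm q s A + groupNorm q s B := by
  have hq0 : (0:ℝ) < q := lt_of_lt_of_le zero_lt_one hq
  have hs0 : (0:ℝ) < s := lt_of_lt_of_le zero_lt_one hs
  have hcol : ∀ j, (∑ i, |(A + B) i j| ^ q) ^ (1/q)
      ≤ (∑ i, |A i j| ^ q) ^ (1/q) + (∑ i, |B i j| ^ q) ^ (1/q) := by
    intro j
    have h1 : (∑ i, |(A + B) i j| ^ q) ^ (1/q) = (∑ i, |A i j + B i j| ^ q) ^ (1/q) := rfl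
    rw [h1]
    exact Real.Lp_add_le Finset.univ (fun i => A i j) (fun i => B i j) hq
  rw [groupNorm, groupNorm, groupNorm]
  calc (∑ j, ((∑ i, |(A + B) i j| ^ q) ^ (1/q)) ^ s) ^ (1/s)
      ≤ (∑ j, (((∑ i, |A i j| ^ q) ^ (1/q)) + ((∑ i, |B i j| ^ q) ^ (1/q))) ^ s) ^ (1/s) := by
        apply Real.rpow_le_rpow
          (Finset.sum_nonneg fun j _ => Real.rpow_nonneg (colq_nonneg q (A+B) j) s)
          (Finset.sum_le_sum fun j _ =>
            Real.rpow_le_rpow (colq_nonneg q (A+B) j) (hcol j) hs0.le)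
          (by positivity)
    _ ≤ _ := by
        have := Real.Lp_add_le Finset.univ (fun j => (∑ i, |A i j| ^ q) ^ (1/q))
          (fun j => (∑ i, |B i j| ^ q) ^ (1/q)) hs
        refine le_trans (le_of_eq ?_) (le_trans this (le_of_eq ?_))
        · congr 1
          refine Finset.sum_congr rfl fun j _ => ?_
          rw [abs_of_nonneg (add_nonneg (colq_nonneg q A j) (colq_nonneg q B j))]
        · congr 2
          · exact Finset.sum_congr rfl fun j _ => by rw [abs_of_nonneg (colq_nonneg q A j)]
          · exact Finset.sum_congr rfl fun j _ => by rw [abs_of_nonneg (colq_nonneg q B j)]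

lemma abs_le_groupNorm (hq : 0 < q) (hs : 0 < s) (A : Matrix (Fin d) (Fin m) ℝ)
    (i : Fin d) (j : Fin m) : |A i j| ≤ groupNorm q s A := by
  have h1 : |A i j| ≤ (∑ i', |A i' j| ^ q) ^ (1/q) := by
    have := Finset.single_le_sum (f := fun i' => |A i' j| ^ q)
      (fun i' _ => Real.rpow_nonneg (abs_nonneg _) q) (Finset.mem_univ i)
    calc |A i j| = (|A i j| ^ q) ^ (1/q) := by
          rw [one_div, Real.rpow_rpow_inv (abs_nonneg _) hq.ne']
      _ ≤ _ := Real.rpow_le_rpow (Real.rpow_nonneg (abs_nonneg _) q) this (by positivity)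
  have h2 : (∑ i', |A i' j| ^ q) ^ (1/q) ≤ groupNorm q s A := by
    have := Finset.single_le_sum (f := fun j' => ((∑ i', |A i' j'| ^ q) ^ (1/q)) ^ s)
      (fun j' _ => Real.rpow_nonneg (colq_nonneg q A j') s) (Finset.mem_univ j)
    calc (∑ i', |A i' j| ^ q) ^ (1/q)
        = (((∑ i', |A i' j| ^ q) ^ (1/q)) ^ s) ^ (1/s) := by
          rw [one_div s, Real.rpow_rpow_inv (colq_nonneg q A j) hs.ne']
      _ ≤ _ := Real.rpow_le_rpow (Real.rpow_nonneg (colq_nonneg q A j) s) this (by positivity)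
  exact le_trans h1 h2

end GN


section Helpers

variable {ι : Type*} [Fintype ι]

lemma pn_nonneg (t : ℝ) (f : ι → ℝ) (hf : ∀ i, 0 ≤ f i) : 0 ≤ (∑ i, f i ^ t) ^ (1/t) :=
  Real.rpow_nonneg (Finset.sum_nonneg fun i _ => Real.rpow_nonneg (hf i) t) _

lemma sum_rpow_nonneg (t : ℝ) (f : ι → ℝ) (hf : ∀ i, 0 ≤ f i) : 0 ≤ ∑ i, f i ^ t :=
  Finset.sum_nonneg fun i _ => Real.rpow_nonneg (hf i) t

lemma single_le_pn {t : ℝ} (ht : 0 < t) (f : ι → ℝ) (hf : ∀ i, 0 ≤ f i) (i : ι) :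
    f i ≤ (∑ j, f j ^ t) ^ (1/t) := by
  have h1 : f i ^ t ≤ ∑ j, f j ^ t :=
    Finset.single_le_sum (fun j _ => Real.rpow_nonneg (hf j) t) (Finset.mem_univ i)
  have h2 : (f i ^ t) ^ (1/t) ≤ (∑ j, f j ^ t) ^ (1/t) :=
    Real.rpow_le_rpow (Real.rpow_nonneg (hf i) t) h1 (by positivity)
  calc f i = (f i ^ t) ^ (1/t) := by
        rw [one_div, Real.rpow_rpow_inv (hf i) ht.ne']
    _ ≤ _ := h2

lemma pn_mono {t : ℝ} (ht : 0 < t) (f g : ι → ℝ) (hf : ∀ i, 0 ≤ f i) (hfg : ∀ i, f i ≤ g i) :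
    (∑ i, f i ^ t) ^ (1/t) ≤ (∑ i, g i ^ t) ^ (1/t) := by
  apply Real.rpow_le_rpow (sum_rpow_nonneg t f hf) _ (by positivity)
  exact Finset.sum_le_sum fun i _ => Real.rpow_le_rpow (hf i) (hfg i) ht.le

/-- ℓ² is dominated by ℓᵖ for `0 < p ≤ 2`. -/
lemma sqrt_sum_sq_le {p : ℝ} (hp : 0 < p) (hp2 : p ≤ 2) (f : ι → ℝ) (hf : ∀ i, 0 ≤ f i) :
    Real.sqrt (∑ i, f i ^ (2:ℕ)) ≤ (∑ i, f i ^ p) ^ (1/p) := by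
  set S := ∑ i, f i ^ p with hS
  have hS0 : 0 ≤ S := sum_rpow_nonneg p f hf
  have key : ∑ i, f i ^ (2:ℕ) ≤ S ^ (2/p) := by
    rcases eq_or_lt_of_le hS0 with h0 | hSpos
    · have hz : ∀ i, f i = 0 := by
        intro i
        have h1 := (Finset.sum_eq_zero_iff_of_nonneg
          (fun j _ => Real.rpow_nonneg (hf j) p)).1 h0.symm i (Finset.mem_univ i)
        exact (Real.rpow_eq_zero (hf i) hp.ne').1 h1
      have hzz : ∑ i, f i ^ (2:ℕ) = 0 := Finset.sum_eq_zero fun i _ => by rw [hz i]; norm_num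
      rw [hzz]
      exact Real.rpow_nonneg hS0 _
    · have hterm : ∀ i, f i ^ (2:ℕ) ≤ f i ^ p * S ^ ((2 - p)/p) := by
        intro i
        rcases eq_or_lt_of_le (hf i) with h0 | hpos
        · rw [← h0]
          norm_num
          positivity
        · have hle : f i ≤ S ^ (1/p) := single_le_pn hp f hf i
          have h2 : f i ^ ((2:ℝ) - p) ≤ (S ^ (1/p)) ^ ((2:ℝ) - p) :=
            Real.rpow_le_rpow (hf i) hle (by linarith)
          have h3 : (S ^ (1/p)) ^ ((2:ℝ) - p) = S ^ ((2 - p)/p) := by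
            rw [← Real.rpow_mul hS0]
            congr 1
            field_simp
          calc f i ^ (2:ℕ) = f i ^ ((2:ℕ):ℝ) := (Real.rpow_natCast _ _).symm
            _ = f i ^ (p + ((2:ℝ) - p)) := by norm_num
            _ = f i ^ p * f i ^ ((2:ℝ) - p) := Real.rpow_add hpos _ _
            _ ≤ f i ^ p * S ^ ((2 - p)/p) := by
                rw [h3] at h2
                exact mul_le_mul_of_nonneg_left h2 (Real.rpow_nonneg (hf i) p)
      calc ∑ i, f i ^ (2:ℕ) ≤ ∑ i, f i ^ p * S ^ ((2 - p)/p) :=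
            Finset.sum_le_sum fun i _ => hterm i
        _ = S * S ^ ((2 - p)/p) := by rw [← Finset.sum_mul]
        _ = S ^ (1 + (2 - p)/p) := by
            rw [Real.rpow_add hSpos, Real.rpow_one]
        _ = S ^ (2/p) := by congr 1; field_simp; ring
  calc Real.sqrt (∑ i, f i ^ (2:ℕ)) ≤ Real.sqrt (S ^ (2/p)) := Real.sqrt_le_sqrt key
    _ = (S ^ (2/p)) ^ (1/2 : ℝ) := Real.sqrt_eq_rpow _
    _ = S ^ (1/p) := by
        rw [← Real.rpow_mul hS0]
        congr 1
        field_simp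

end Helpers


open Finset RealInnerProductSpace

section Maurey

variable {F : Type*} [NormedAddCommGroup F] [InnerProductSpace ℝ F]
variable {ι : Type*} [Fintype ι]

/-- Maurey's empirical method, existence form, by induction on `k`. -/
lemma maurey_exists (k : ℕ) (v : ι → F) (w : ι → ℝ)
    (hw0 : ∀ i, 0 ≤ w i) (hw1 : ∑ i, w i = 1) (μ : F) (hμ : ∑ i, w i • v i = μ) :
    ∃ f : Fin k → ι,
      ‖(∑ t, v (f t)) - (k:ℝ) • μ‖ ^ 2 ≤ k * ∑ i, w i * ‖v i - μ‖ ^ 2 := by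
  have hσ2 : 0 ≤ ∑ i, w i * ‖v i - μ‖ ^ 2 :=
    Finset.sum_nonneg fun i _ => mul_nonneg (hw0 i) (by positivity)
  have hmean : ∑ i, w i • (v i - μ) = 0 := by
    simp only [smul_sub, Finset.sum_sub_distrib, hμ, ← Finset.sum_smul, hw1, one_smul, sub_self]
  induction k with
  | zero =>
    refine ⟨Fin.elim0, ?_⟩
    simp
  | succ k ih =>
    obtain ⟨f, hf⟩ := ih
    set σ2 := ∑ i, w i * ‖v i - μ‖ ^ 2 with hσ2def
    set S := (∑ t, v (f t)) - (k:ℝ) • μ with hSdef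
    have key : ∑ i, w i * ‖S + (v i - μ)‖ ^ 2 = ‖S‖ ^ 2 + σ2 := by
      have expand : ∀ i, ‖S + (v i - μ)‖ ^ 2
          = ‖S‖ ^ 2 + 2 * ⟪S, v i - μ⟫ + ‖v i - μ‖ ^ 2 := fun i => norm_add_sq_real _ _
      have hinner : ∑ i, w i * ⟪S, v i - μ⟫ = 0 := by
        have : ∑ i, w i * ⟪S, v i - μ⟫ = ⟪S, ∑ i, w i • (v i - μ)⟫ := by
          rw [inner_sum]
          exact Finset.sum_congr rfl fun i _ => (real_inner_smul_right _ _ _).symm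
        rw [this, hmean, inner_zero_right]
      calc ∑ i, w i * ‖S + (v i - μ)‖ ^ 2
          = ∑ i, (w i * ‖S‖ ^ 2 + w i * (2 * ⟪S, v i - μ⟫) + w i * ‖v i - μ‖ ^ 2) := by
            refine Finset.sum_congr rfl fun i _ => ?_
            rw [expand i]; ring
        _ = (∑ i, w i) * ‖S‖ ^ 2 + 2 * (∑ i, w i * ⟪S, v i - μ⟫) + σ2 := by
            rw [Finset.sum_add_distrib, Finset.sum_add_distrib, ← Finset.sum_mul,
              Finset.mul_sum]
            congr 1
            congr 1
            exact Finset.sum_congr rfl fun i _ => by ring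
        _ = ‖S‖ ^ 2 + σ2 := by rw [hw1, hinner]; ring
    have hex : ∃ i₀, ‖S + (v i₀ - μ)‖ ^ 2 ≤ ‖S‖ ^ 2 + σ2 := by
      by_contra hcon
      push_neg at hcon
      obtain ⟨i₁, hi₁⟩ : ∃ i, 0 < w i := by
        by_contra hall
        push_neg at hall
        have : ∑ i, w i = 0 := Finset.sum_eq_zero fun i _ => le_antisymm (hall i) (hw0 i)
        rw [hw1] at this; norm_num at this
      have hlt : (∑ i, w i * (‖S‖ ^ 2 + σ2)) < ∑ i, w i * ‖S + (v i - μ)‖ ^ 2 := by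
        apply Finset.sum_lt_sum
        · exact fun i _ => mul_le_mul_of_nonneg_left (hcon i).le (hw0 i)
        · exact ⟨i₁, Finset.mem_univ i₁, by
            exact mul_lt_mul_of_pos_left (hcon i₁) hi₁⟩
      rw [key, ← Finset.sum_mul, hw1, one_mul] at hlt
      exact lt_irrefl _ hlt
    obtain ⟨i₀, hi₀⟩ := hex
    set f' : Fin (k+1) → ι := Fin.snoc f i₀ with hf'
    refine ⟨f', ?_⟩
    have hsum : (∑ t : Fin (k+1), v (f' t)) = (∑ t, v (f t)) + v i₀ := by
      rw [Fin.sum_univ_castSucc]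
      simp [hf', Fin.snoc_castSucc, Fin.snoc_last]
    have heq : (∑ t : Fin (k+1), v (f' t)) - ((k:ℕ)+1:ℝ) • μ = S + (v i₀ - μ) := by
      rw [hsum, hSdef, add_smul, one_smul]
      abel
    have : ‖(∑ t : Fin (k+1), v (f' t)) - ((k:ℕ)+1:ℝ) • μ‖ ^ 2
        ≤ (k+1) * σ2 := by
      rw [heq]
      calc ‖S + (v i₀ - μ)‖ ^ 2 ≤ ‖S‖ ^ 2 + σ2 := hi₀
        _ ≤ k * σ2 + σ2 := by linarith [hf]
        _ = (k+1) * σ2 := by ring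
    convert this using 3 <;> push_cast <;> ring
end Maurey


open Finset RealInnerProductSpace

section Proj

variable {F : Type*} [NormedAddCommGroup F] [InnerProductSpace ℝ F]
variable {ι : Type*} [Fintype ι]

lemma variance_le (v : ι → F) (w : ι → ℝ) (hw0 : ∀ i, 0 ≤ w i) (hw1 : ∑ i, w i = 1)
    (μ : F) (hμ : ∑ i, w i • v i = μ) (C : ℝ) (hC : ∀ i, ‖v i‖ ≤ C) :
    ∑ i, w i * ‖v i - μ‖ ^ 2 ≤ C ^ 2 := by
  have hne : Nonempty ι := by
    by_contra h
    rw [not_nonempty_iff] at h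
    rw [Finset.univ_eq_empty, Finset.sum_empty] at hw1
    norm_num at hw1
  have hC0 : 0 ≤ C := le_trans (norm_nonneg _) (hC (Classical.arbitrary ι))
  have hinner : ∑ i, w i * ⟪v i, μ⟫ = ‖μ‖ ^ 2 := by
    have : ∑ i, w i * ⟪v i, μ⟫ = ⟪∑ i, w i • v i, μ⟫ := by
      rw [sum_inner]
      exact Finset.sum_congr rfl fun i _ => (real_inner_smul_left _ _ _).symm
    rw [this, hμ, real_inner_self_eq_norm_sq]
  have expand : ∑ i, w i * ‖v i - μ‖ ^ 2
      = (∑ i, w i * ‖v i‖ ^ 2) - ‖μ‖ ^ 2 := by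
    calc ∑ i, w i * ‖v i - μ‖ ^ 2
        = ∑ i, (w i * ‖v i‖ ^ 2 - w i * (2 * ⟪v i, μ⟫) + w i * ‖μ‖ ^ 2) := by
          refine Finset.sum_congr rfl fun i _ => ?_
          rw [norm_sub_sq_real]; ring
      _ = (∑ i, w i * ‖v i‖ ^ 2) - 2 * (∑ i, w i * ⟪v i, μ⟫) + (∑ i, w i) * ‖μ‖ ^ 2 := by
          rw [Finset.sum_add_distrib, Finset.sum_sub_distrib, ← Finset.sum_mul, Finset.mul_sum]
          congr 2
          exact Finset.sum_congr rfl fun i _ => by ring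
      _ = (∑ i, w i * ‖v i‖ ^ 2) - ‖μ‖ ^ 2 := by rw [hinner, hw1]; ring
  rw [expand]
  have h1 : ∑ i, w i * ‖v i‖ ^ 2 ≤ C ^ 2 := by
    calc ∑ i, w i * ‖v i‖ ^ 2 ≤ ∑ i, w i * C ^ 2 := by
          refine Finset.sum_le_sum fun i _ => ?_
          exact mul_le_mul_of_nonneg_left
            (pow_le_pow_left₀ (norm_nonneg _) (hC i) 2) (hw0 i)
      _ = C ^ 2 := by rw [← Finset.sum_mul, hw1, one_mul]
  nlinarith [sq_nonneg ‖μ‖]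

/-- Metric projection onto a nonempty complete convex set does not increase distances
to points of the set. -/
lemma proj_exists {K : Set F} (ne : K.Nonempty) (hcomp : IsComplete K) (hconv : Convex ℝ K)
    (y : F) : ∃ v ∈ K, ∀ x ∈ K, ‖x - v‖ ≤ ‖x - y‖ := by
  obtain ⟨v, hvK, hveq⟩ := exists_norm_eq_iInf_of_complete_convex ne hcomp hconv y
  have hinner := (norm_eq_iInf_iff_real_inner_le_zero hconv hvK).1 hveq
  refine ⟨v, hvK, fun x hx => ?_⟩
  have h1 : ⟪y - v, x - v⟫ ≤ 0 := hinner x hx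
  have h2 : ‖x - y‖ ^ 2 = ‖(x - v) - (y - v)‖ ^ 2 := by rw [sub_sub_sub_cancel_right]
  have h3 : ‖(x - v) - (y - v)‖ ^ 2
      = ‖x - v‖ ^ 2 - 2 * ⟪x - v, y - v⟫ + ‖y - v‖ ^ 2 := norm_sub_sq_real _ _
  have h4 : ⟪x - v, y - v⟫ = ⟪y - v, x - v⟫ := real_inner_comm _ _
  have h5 : ‖x - v‖ ^ 2 ≤ ‖x - y‖ ^ 2 := by nlinarith [sq_nonneg ‖y - v‖]
  have h6 := Real.sqrt_le_sqrt h5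
  rwa [Real.sqrt_sq (norm_nonneg _), Real.sqrt_sq (norm_nonneg _)] at h6

end Proj

section Chain
lemma hoelder_chain {n d m : ℕ} {p q r s : ℝ} (hpq : p.HolderConjugate q)
    (hrs : r.HolderConjugate s) (hp2 : p ≤ 2) {a b : ℝ} (ha : 0 < a) (hb : 0 < b)
    (X : Matrix (Fin n) (Fin d) ℝ) (hX : entryNorm p X ≤ b)
    (A : Matrix (Fin d) (Fin m) ℝ) (hA : groupNorm q s A ≤ a) :
    ∑ j, ∑ i, |A i j| * Real.sqrt (∑ l, (X l i) ^ 2) ≤ a * b * (m:ℝ) ^ (1/r) := by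
  have hp0 : (0:ℝ) < p := hpq.pos
  set col2 : Fin d → ℝ := fun i => Real.sqrt (∑ l, (X l i) ^ 2) with hcol2
  set colq : Fin m → ℝ := fun j => (∑ i, |A i j| ^ q) ^ (1/q) with hcolq
  have hcol2nn : ∀ i, 0 ≤ col2 i := fun i => Real.sqrt_nonneg _
  have hcolqnn : ∀ j, 0 ≤ colq j := fun j => colq_nonneg q A j
  -- Step 1 : (∑ i, col2 i ^ p) ^ (1/p) ≤ b
  have hB2 : (∑ i, col2 i ^ p) ^ (1/p) ≤ b := by
    have h1 : ∀ i, col2 i ≤ (∑ l, |X l i| ^ p) ^ (1/p) := by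
      intro i
      have := sqrt_sum_sq_le hp0 hp2 (fun l => |X l i|) (fun l => abs_nonneg _)
      have heq : ∑ l, (X l i) ^ 2 = ∑ l, |X l i| ^ (2:ℕ) :=
        Finset.sum_congr rfl fun l _ => (sq_abs _).symm
      rw [hcol2]; dsimp only; rw [heq]; exact this
    have h2 : ∑ i, col2 i ^ p ≤ ∑ i, ∑ l, |X l i| ^ p := by
      refine Finset.sum_le_sum fun i _ => ?_
      have := Real.rpow_le_rpow (hcol2nn i) (h1 i) hp0.le
      rwa [one_div, Real.rpow_inv_rpow
        (sum_rpow_nonneg p (fun l => |X l i|) fun l => abs_nonneg _) hp0.ne'] at this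
    have h3 : ∑ i, ∑ l, |X l i| ^ p = ∑ l, ∑ i, |X l i| ^ p := Finset.sum_comm
    have h4 : ∑ l, ∑ i, |X l i| ^ p ≤ b ^ p := by
      have hW : 0 ≤ ∑ l, ∑ i, |X l i| ^ p :=
        Finset.sum_nonneg fun l _ => sum_rpow_nonneg p (fun i => |X l i|) fun i => abs_nonneg _
      have := Real.rpow_le_rpow (Real.rpow_nonneg hW _) hX hp0.le
      rwa [one_div, Real.rpow_inv_rpow hW hp0.ne'] at this
    calc (∑ i, col2 i ^ p) ^ (1/p) ≤ (b ^ p) ^ (1/p) := by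
          apply Real.rpow_le_rpow (sum_rpow_nonneg p col2 hcol2nn) _ (by positivity)
          exact le_trans h2 (le_trans (le_of_eq h3) h4)
      _ = b := by rw [one_div, Real.rpow_rpow_inv hb.le hp0.ne']
  -- Step 2 : per-column Hölder
  have hper : ∀ j, ∑ i, |A i j| * col2 i ≤ colq j * b := by
    intro j
    have hh := Real.inner_le_Lp_mul_Lq_of_nonneg (univ : Finset (Fin d)) hpq.symm
      (f := fun i => |A i j|) (g := col2) (fun i _ => abs_nonneg _) (fun i _ => hcol2nn i)
    calc ∑ i, |A i j| * col2 i
        ≤ (∑ i, |A i j| ^ q) ^ (1/q) * (∑ i, col2 i ^ p) ^ (1/p) := hh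
      _ ≤ colq j * b := by
          have : (∑ i, |A i j| ^ q) ^ (1/q) = colq j := by rw [hcolq]
          rw [this]
          exact mul_le_mul_of_nonneg_left hB2 (hcolqnn j)
  -- Step 3 : sum over columns, Hölder with (r,s)
  have hcolsum : ∑ j, colq j ≤ (m:ℝ) ^ (1/r) * a := by
    have hh := Real.inner_le_Lp_mul_Lq_of_nonneg (univ : Finset (Fin m)) hrs
      (f := fun _ => (1:ℝ)) (g := colq) (fun j _ => zero_le_one) (fun j _ => hcolqnn j)
    have h1 : ∑ j, (1:ℝ) * colq j = ∑ j, colq j := by simp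
    have h2 : (∑ _j : Fin m, (1:ℝ) ^ r) ^ (1/r) = (m:ℝ) ^ (1/r) := by
      simp [Real.one_rpow]
    have h3 : (∑ j, colq j ^ s) ^ (1/s) = groupNorm q s A := by
      rw [groupNorm, hcolq]
    rw [h1, h2, h3] at hh
    calc ∑ j, colq j ≤ (m:ℝ) ^ (1/r) * groupNorm q s A := hh
      _ ≤ (m:ℝ) ^ (1/r) * a := by
          apply mul_le_mul_of_nonneg_left hA (Real.rpow_nonneg (Nat.cast_nonneg m) _)
  calc ∑ j, ∑ i, |A i j| * col2 i ≤ ∑ j, colq j * b := Finset.sum_le_sum fun j _ => hper j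
    _ = (∑ j, colq j) * b := by rw [Finset.sum_mul]
    _ ≤ ((m:ℝ) ^ (1/r) * a) * b := mul_le_mul_of_nonneg_right hcolsum hb.le
    _ = a * b * (m:ℝ) ^ (1/r) := by ring

end Chain

set_option maxHeartbeats 1000000 in
/-- matrix covering via Maurey: for conjugate exponents (p,q) and (r,s)
with p ≤ 2, and ‖X‖_p ≤ b, the set {XA : ‖A‖_{q,s} ≤ a} has a proper ε-cover in
Frobenius norm of cardinality N with ln N ≤ ⌈a²b²m^{2/r}/ε²⌉ ln(2dm). -/
theorem matrix_covering (n d m : ℕ) (hd : 0 < d) (hm : 0 < m)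
    (p q r s : ℝ) (hpq : p.HolderConjugate q) (hrs : r.HolderConjugate s) (hp2 : p ≤ 2)
    (a b ε : ℝ) (ha : 0 < a) (hb : 0 < b) (hε : 0 < ε)
    (X : Matrix (Fin n) (Fin d) ℝ) (hX : entryNorm p X ≤ b) :
    ∃ V : Finset (Matrix (Fin n) (Fin m) ℝ),
      (↑V ⊆ {Y | ∃ A : Matrix (Fin d) (Fin m) ℝ, groupNorm q s A ≤ a ∧ Y = X * A})
      ∧ (∀ A : Matrix (Fin d) (Fin m) ℝ, groupNorm q s A ≤ a →
          ∃ Y ∈ V, frobNorm (X * A - Y) ≤ ε)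
      ∧ Real.log V.card
          ≤ (⌈a ^ 2 * b ^ 2 * (m : ℝ) ^ (2/r) / ε ^ 2⌉₊ : ℝ) * Real.log (2 * d * m) := by
  classical
  have hp0 : (0:ℝ) < p := hpq.pos
  have hq0 : (0:ℝ) < q := hpq.symm.pos
  have hr0 : (0:ℝ) < r := hrs.pos
  have hs0 : (0:ℝ) < s := hrs.symm.pos
  have hq1 : (1:ℝ) ≤ q := hpq.symm.lt.le
  have hs1 : (1:ℝ) ≤ s := hrs.symm.lt.le
  have hdR : (0:ℝ) < d := by exact_mod_cast hd
  have hmR : (0:ℝ) < m := by exact_mod_cast hm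
  set SM : Set (Matrix (Fin n) (Fin m) ℝ) :=
    {Y | ∃ A : Matrix (Fin d) (Fin m) ℝ, groupNorm q s A ≤ a ∧ Y = X * A} with hSMdef
  set SE : Set (EuclideanSpace ℝ (Fin n × Fin m)) := (matE n m) '' SM with hSEdef
  set C := a * b * (m:ℝ) ^ (1/r) with hCdef
  have hC0 : 0 < C := by
    have : (0:ℝ) < (m:ℝ) ^ (1/r) := Real.rpow_pos_of_pos hmR _
    positivity
  set k := ⌈a ^ 2 * b ^ 2 * (m : ℝ) ^ (2/r) / ε ^ 2⌉₊ with hkdef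
  have hmrpos : (0:ℝ) < (m:ℝ) ^ (2/r) := Real.rpow_pos_of_pos hmR _
  have hC2 : C ^ 2 = a ^ 2 * b ^ 2 * (m:ℝ) ^ (2/r) := by
    have h2 : ((m:ℝ) ^ (1/r)) ^ (2:ℕ) = (m:ℝ) ^ (2/r) := by
      rw [← Real.rpow_natCast ((m:ℝ) ^ (1/r)) 2, ← Real.rpow_mul (Nat.cast_nonneg m)]
      congr 1
      push_cast
      ring
    rw [hCdef, mul_pow, mul_pow, h2]
  have hk1 : 1 ≤ k := by
    rw [hkdef]
    rw [Nat.one_le_ceil_iff]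
    positivity
  have hkR : (0:ℝ) < k := by exact_mod_cast hk1
  have hkC : C ^ 2 ≤ (k:ℝ) * ε ^ 2 := by
    have h := Nat.le_ceil (a ^ 2 * b ^ 2 * (m : ℝ) ^ (2/r) / ε ^ 2)
    rw [div_le_iff₀ (by positivity : (0:ℝ) < ε ^ 2)] at h
    rw [hC2]
    exact_mod_cast h
  -- SM is nonempty and convex
  have hSM0 : (0 : Matrix (Fin n) (Fin m) ℝ) ∈ SM := by
    refine ⟨0, ?_, by rw [Matrix.mul_zero]⟩
    rw [groupNorm_zero hq0 hs0]
    exact ha.le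
  have hSMconv : Convex ℝ SM := by
    intro Y₁ hY₁ Y₂ hY₂ θ η hθ hη hsum
    obtain ⟨A₁, hA₁, rfl⟩ := hY₁
    obtain ⟨A₂, hA₂, rfl⟩ := hY₂
    refine ⟨θ • A₁ + η • A₂, ?_, ?_⟩
    · calc groupNorm q s (θ • A₁ + η • A₂)
          ≤ groupNorm q s (θ • A₁) + groupNorm q s (η • A₂) := groupNorm_add_le hq1 hs1 _ _
        _ = |θ| * groupNorm q s A₁ + |η| * groupNorm q s A₂ := by
            rw [groupNorm_smul hq0 hs0, groupNorm_smul hq0 hs0]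
        _ = θ * groupNorm q s A₁ + η * groupNorm q s A₂ := by
            rw [abs_of_nonneg hθ, abs_of_nonneg hη]
        _ ≤ θ * a + η * a := add_le_add (mul_le_mul_of_nonneg_left hA₁ hθ)
            (mul_le_mul_of_nonneg_left hA₂ hη)
        _ = a := by rw [← add_mul, hsum, one_mul]
    · rw [Matrix.mul_add, Matrix.mul_smul, Matrix.mul_smul]
  have hSEne : SE.Nonempty := ⟨matE n m 0, ⟨0, hSM0, rfl⟩⟩
  have hSEconv : Convex ℝ SE := by
    have h := hSMconv.linear_image (matE n m).toLinearMap
    rwa [show ⇑((matE n m).toLinearMap) = ⇑(matE n m) from rfl] at h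
  -- compactness of SE
  have hSEcompact : IsCompact SE := by
    set mulX : Matrix (Fin d) (Fin m) ℝ →ₗ[ℝ] Matrix (Fin n) (Fin m) ℝ :=
      { toFun := fun A => X * A
        map_add' := fun A B => Matrix.mul_add X A B
        map_smul' := fun c A => by simp [Matrix.mul_smul] } with hmulX
    set L : EuclideanSpace ℝ (Fin d × Fin m) →ₗ[ℝ] EuclideanSpace ℝ (Fin n × Fin m) :=
      (matE n m).toLinearMap ∘ₗ mulX ∘ₗ (matE d m).symm.toLinearMap with hL
    have hLcont : Continuous L := L.continuous_of_finiteDimensional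
    set K2 : Set (EuclideanSpace ℝ (Fin d × Fin m)) :=
      {x | groupNorm q s ((matE d m).symm x) ≤ a} with hK2
    have hK2closed : IsClosed K2 := by
      have hcont : Continuous fun x : EuclideanSpace ℝ (Fin d × Fin m) =>
          groupNorm q s ((matE d m).symm x) := by
        have hcoord : ∀ ij : Fin d × Fin m,
            Continuous fun x : EuclideanSpace ℝ (Fin d × Fin m) => x ij := fun ij =>
          (continuous_apply ij).comp (PiLp.continuousLinearEquiv 2 ℝ _).continuous
        have hcolc : ∀ j : Fin m, Continuous fun x : EuclideanSpace ℝ (Fin d × Fin m) =>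
            (∑ i, |((matE d m).symm x) i j| ^ q) ^ (1/q) := by
          intro j
          apply Continuous.rpow_const
          · apply continuous_finset_sum
            intro i _
            exact ((hcoord (i, j)).abs).rpow_const fun x => Or.inr hq0.le
          · exact fun x => Or.inr (by positivity)
        have : Continuous fun x : EuclideanSpace ℝ (Fin d × Fin m) =>
            (∑ j, ((∑ i, |((matE d m).symm x) i j| ^ q) ^ (1/q)) ^ s) ^ (1/s) := by
          apply Continuous.rpow_const
          · apply continuous_finset_sum
            intro j _
            exact (hcolc j).rpow_const fun x => Or.inr hs0.le
          · exact fun x => Or.inr (by positivity)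
        exact this
      have : K2 = (fun x : EuclideanSpace ℝ (Fin d × Fin m) =>
          groupNorm q s ((matE d m).symm x)) ⁻¹' (Set.Iic a) := rfl
      rw [this]
      exact isClosed_Iic.preimage hcont
    have hK2sub : K2 ⊆ Metric.closedBall 0 (a * Real.sqrt (d * m)) := by
      intro x hx
      rw [Metric.mem_closedBall, dist_zero_right]
      have hcoordb : ∀ ij : Fin d × Fin m, ‖x ij‖ ≤ a := by
        intro ij
        rw [Real.norm_eq_abs]
        have h1 : |((matE d m).symm x) ij.1 ij.2| ≤ groupNorm q s ((matE d m).symm x) :=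
          abs_le_groupNorm hq0 hs0 _ _ _
        have h2 : ((matE d m).symm x) ij.1 ij.2 = x ij := by rw [matE_symm_apply]
        rw [← h2]
        exact le_trans h1 hx
      have hnorm : ‖x‖ = Real.sqrt (∑ ij, ‖x ij‖ ^ 2) := EuclideanSpace.norm_eq x
      have hsum : ∑ ij : Fin d × Fin m, ‖x ij‖ ^ 2 ≤ (d * m) * a ^ 2 := by
        calc ∑ ij : Fin d × Fin m, ‖x ij‖ ^ 2 ≤ ∑ _ij : Fin d × Fin m, a ^ 2 :=
              Finset.sum_le_sum fun ij _ =>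
                pow_le_pow_left₀ (norm_nonneg _) (hcoordb ij) 2
          _ = (d * m) * a ^ 2 := by
              rw [Finset.sum_const, Finset.card_univ, Fintype.card_prod, Fintype.card_fin,
                Fintype.card_fin, nsmul_eq_mul]
              push_cast
              ring
      rw [hnorm]
      calc Real.sqrt (∑ ij : Fin d × Fin m, ‖x ij‖ ^ 2)
          ≤ Real.sqrt ((d * m) * a ^ 2) := Real.sqrt_le_sqrt hsum
        _ = a * Real.sqrt (d * m) := by
            rw [show (d * m : ℝ) * a ^ 2 = (a * Real.sqrt (d*m))^2 by
              rw [mul_pow, Real.sq_sqrt (by positivity)]; ring]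
            exact Real.sqrt_sq (by positivity)
    have hK2cpt : IsCompact K2 :=
      (isCompact_closedBall _ _).of_isClosed_subset hK2closed hK2sub
    have himg : SE = L '' K2 := by
      ext y
      constructor
      · rintro ⟨Y, ⟨A, hA, rfl⟩, rfl⟩
        refine ⟨matE d m A, ?_, ?_⟩
        · show groupNorm q s ((matE d m).symm (matE d m A)) ≤ a
          rwa [LinearEquiv.symm_apply_apply]
        · show ((matE n m).toLinearMap ∘ₗ mulX ∘ₗ (matE d m).symm.toLinearMap) (matE d m A)
            = matE n m (X * A)
          simp only [LinearMap.comp_apply, LinearEquiv.coe_toLinearMap,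
            LinearEquiv.symm_apply_apply]
          rfl
      · rintro ⟨x, hx, rfl⟩
        refine ⟨X * ((matE d m).symm x), ⟨(matE d m).symm x, hx, rfl⟩, ?_⟩
        rfl
    rw [himg]
    exact hK2cpt.image hLcont
  -- metric projection onto SE
  have projex : ∀ y, ∃ v ∈ SE, ∀ x ∈ SE, ‖x - v‖ ≤ ‖x - y‖ :=
    fun y => proj_exists hSEne hSEcompact.isComplete hSEconv y
  choose P hPmem hPle using projex
  -- atoms
  set col2 : Fin d → ℝ := fun i => Real.sqrt (∑ l, (X l i) ^ 2) with hcol2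
  have hcol2nn : ∀ i, 0 ≤ col2 i := fun i => Real.sqrt_nonneg _
  set colMat : Fin d → Fin m → Matrix (Fin n) (Fin m) ℝ :=
    fun i j => Matrix.of fun l j' => if j' = j then X l i else 0 with hcolMat
  set w : (Fin d × Fin m) × Bool → Matrix (Fin n) (Fin m) ℝ := fun z =>
    if col2 z.1.1 = 0 then 0
    else ((if z.2 then (1:ℝ) else -1) * (C / col2 z.1.1)) • colMat z.1.1 z.1.2 with hw
  set v : (Fin d × Fin m) × Bool → EuclideanSpace ℝ (Fin n × Fin m) :=
    fun z => matE n m (w z) with hv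
  have hXzero : ∀ i, col2 i = 0 → ∀ l, X l i = 0 := by
    intro i hi l
    have h1 : ∑ l', (X l' i) ^ 2 = 0 := by
      have := hi
      rw [hcol2] at this
      dsimp only at this
      exact (Real.sqrt_eq_zero (Finset.sum_nonneg fun l' _ => sq_nonneg _)).1 this
    have h2 := (Finset.sum_eq_zero_iff_of_nonneg fun l' _ => sq_nonneg (X l' i)).1 h1 l
      (Finset.mem_univ l)
    exact pow_eq_zero_iff (two_ne_zero).elim |>.mp h2
  have hcolMatnorm : ∀ i j, ‖matE n m (colMat i j)‖ = col2 i := by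
    intro i j
    rw [← frob_eq_norm, frobNorm, hcol2]
    dsimp only
    congr 1
    refine Finset.sum_congr rfl fun l _ => ?_
    have : ∀ j', ((colMat i j) l j') ^ 2 = if j' = j then (X l i) ^ 2 else 0 := by
      intro j'
      rw [hcolMat]
      dsimp [Matrix.of_apply]
      split <;> simp
    rw [Finset.sum_congr rfl fun j' _ => this j']
    rw [Finset.sum_ite_eq' Finset.univ j (fun _ => (X l i) ^ 2)]
    simp
  have hvnorm : ∀ z, ‖v z‖ ≤ C := by
    intro z
    rw [hv]
    dsimp only
    rw [hw]
    dsimp only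
    by_cases hz : col2 z.1.1 = 0
    · rw [if_pos hz]
      simp [hC0.le]
    · rw [if_neg hz]
      rw [map_smul, norm_smul, hcolMatnorm, Real.norm_eq_abs, abs_mul]
      have h1 : |if z.2 then (1:ℝ) else -1| = 1 := by cases z.2 <;> simp
      have h2 : |C / col2 z.1.1| = C / col2 z.1.1 :=
        abs_of_nonneg (div_nonneg hC0.le (hcol2nn _))
      rw [h1, h2, one_mul, div_mul_cancel₀ _ hz]
  -- the candidate cover
  set V : Finset (Matrix (Fin n) (Fin m) ℝ) := Finset.image
    (fun f : Fin k → (Fin d × Fin m) × Bool =>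
      (matE n m).symm (P ((k:ℝ)⁻¹ • ∑ t, v (f t)))) Finset.univ with hV
  haveI : Nonempty ((Fin d × Fin m) × Bool) := ⟨⟨⟨⟨0, hd⟩, ⟨0, hm⟩⟩, true⟩⟩
  refine ⟨V, ?_, ?_, ?_⟩
  · -- properness: every element of V lies in SM
    intro Y hY
    rw [Finset.mem_coe, hV, Finset.mem_image] at hY
    obtain ⟨f, _, rfl⟩ := hY
    obtain ⟨Z, hZ, hZe⟩ := hPmem ((k:ℝ)⁻¹ • ∑ t, v (f t))
    rw [← hZe, LinearEquiv.symm_apply_apply]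
    exact hZ
  · -- covering property
    intro A hA
    set μ := matE n m (X * A) with hμdef
    -- the weights
    set γ : Fin d × Fin m → ℝ := fun ij => A ij.1 ij.2 * col2 ij.1 / C with hγ
    set T := ∑ ij, |γ ij| with hTdef
    have hTle : T ≤ 1 := by
      have hchain : ∑ j, ∑ i, |A i j| * col2 i ≤ C := by
        have h := hoelder_chain hpq hrs hp2 ha hb X hX A hA
        rw [hCdef]
        simpa [hcol2] using h
      have hTeq : T = (∑ ij : Fin d × Fin m, |A ij.1 ij.2| * col2 ij.1) / C := by
        rw [hTdef, Finset.sum_div]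
        refine Finset.sum_congr rfl fun ij _ => ?_
        rw [hγ]
        dsimp only
        rw [abs_div, abs_mul, abs_of_nonneg (hcol2nn _), abs_of_pos hC0]
      rw [hTeq, div_le_one hC0]
      calc ∑ ij : Fin d × Fin m, |A ij.1 ij.2| * col2 ij.1
          = ∑ i, ∑ j, |A i j| * col2 i := by rw [Fintype.sum_prod_type]
        _ = ∑ j, ∑ i, |A i j| * col2 i := Finset.sum_comm
        _ ≤ C := hchain
    set wt : (Fin d × Fin m) × Bool → ℝ := fun z =>
      (|γ z.1| + (if z.2 then (1:ℝ) else -1) * γ z.1)/2 + (1 - T)/(2*d*m) with hwt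
    have hslack : 0 ≤ (1 - T)/(2*(d:ℝ)*m) := div_nonneg (by linarith) (by positivity)
    have hwt0 : ∀ z, 0 ≤ wt z := by
      rintro ⟨ij, bb⟩
      rw [hwt]
      dsimp only
      cases bb
      · rw [if_neg Bool.false_ne_true]
        have := le_abs_self (γ ij)
        have h2 := hslack
        linarith
      · rw [if_pos rfl]
        have := neg_abs_le (γ ij)
        have h2 := hslack
        linarith
    have hwt1 : ∑ z, wt z = 1 := by
      rw [Fintype.sum_prod_type]
      have hinner : ∀ ij : Fin d × Fin m, ∑ bb : Bool, wt (ij, bb)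
          = |γ ij| + (1 - T)/((d:ℝ)*m) := by
        intro ij
        rw [Fintype.sum_bool, hwt]
        dsimp only
        rw [if_pos rfl, if_neg Bool.false_ne_true]
        have hne : (d:ℝ)*m ≠ 0 := by positivity
        field_simp
        ring
      rw [Finset.sum_congr rfl fun ij _ => hinner ij]
      rw [Finset.sum_add_distrib, ← hTdef, Finset.sum_const, Finset.card_univ]
      have hcard : (Fintype.card (Fin d × Fin m) : ℝ) = (d:ℝ)*m := by
        simp [Fintype.card_prod]
      rw [nsmul_eq_mul, hcard]
      have hne : (d:ℝ)*m ≠ 0 := by positivity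
      field_simp
      ring
    have hrepM : ∑ z, wt z • w z = X * A := by
      rw [Fintype.sum_prod_type]
      have hterm : ∀ ij : Fin d × Fin m,
          (∑ bb : Bool, wt (ij, bb) • w (ij, bb)) = A ij.1 ij.2 • colMat ij.1 ij.2 := by
        intro ij
        rw [Fintype.sum_bool]
        by_cases hz : col2 ij.1 = 0
        · have hcm : colMat ij.1 ij.2 = 0 := by
            ext l j'
            rw [hcolMat]
            dsimp [Matrix.of_apply]
            split
            · exact hXzero ij.1 hz l
            · rfl
          rw [hw]
          dsimp only
          rw [if_pos hz, hcm]
          simp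
        · have hwtrue : w (ij, true) = (C / col2 ij.1) • colMat ij.1 ij.2 := by
            rw [hw]; dsimp only; rw [if_neg hz]; norm_num
          have hwfalse : w (ij, false) = (-(C / col2 ij.1)) • colMat ij.1 ij.2 := by
            rw [hw]; dsimp only; rw [if_neg hz]; norm_num
          rw [hwtrue, hwfalse, smul_smul, smul_smul, ← add_smul]
          congr 1
          have e1 : wt (ij, true) = (|γ ij| + γ ij)/2 + (1 - T)/(2*d*m) := by
            rw [hwt]
            dsimp only
            rw [if_pos rfl]
            ring
          have e2 : wt (ij, false) = (|γ ij| - γ ij)/2 + (1 - T)/(2*d*m) := by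
            rw [hwt]
            dsimp only
            rw [if_neg Bool.false_ne_true]
            ring
          have hγval : γ ij = A ij.1 ij.2 * col2 ij.1 / C := by rw [hγ]
          rw [e1, e2, hγval]
          field_simp
          ring
      rw [Finset.sum_congr rfl fun ij _ => hterm ij]
      ext l j'
      rw [Matrix.sum_apply, Matrix.mul_apply]
      rw [Fintype.sum_prod_type]
      have hterm2 : ∀ i : Fin d, ∑ j : Fin m, (A i j • colMat i j) l j' = X l i * A i j' := by
        intro i
        have : ∀ j : Fin m, (A i j • colMat i j) l j' = if j' = j then A i j * X l i else 0 := by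
          intro j
          rw [Matrix.smul_apply, hcolMat]
          dsimp [Matrix.of_apply]
          split <;> simp
        rw [Finset.sum_congr rfl fun j _ => this j]
        rw [Finset.sum_ite_eq Finset.univ j' (fun j => A i j * X l i)]
        simp [mul_comm]
      exact Finset.sum_congr rfl fun i _ => hterm2 i
    have hrep : ∑ z, wt z • v z = μ := by
      have h1 : ∀ z, wt z • v z = matE n m (wt z • w z) := by
        intro z
        rw [hv]
        dsimp only
        rw [map_smul]
      rw [Finset.sum_congr rfl fun z _ => h1 z,
        ← map_sum (matE n m) (fun z => wt z • w z) Finset.univ, hrepM, hμdef]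
    have hvar := variance_le v wt hwt0 hwt1 μ hrep C hvnorm
    obtain ⟨f, hfb⟩ := maurey_exists k v wt hwt0 hwt1 μ hrep
    have h1 : ‖(∑ t, v (f t)) - (k:ℝ) • μ‖ ^ 2 ≤ (k:ℝ) * C ^ 2 :=
      le_trans hfb (mul_le_mul_of_nonneg_left hvar (by positivity))
    have h2 : (k:ℝ) * C ^ 2 ≤ ((k:ℝ) * ε) ^ 2 := by
      calc (k:ℝ) * C ^ 2 ≤ (k:ℝ) * ((k:ℝ) * ε ^ 2) := mul_le_mul_of_nonneg_left hkC hkR.le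
        _ = ((k:ℝ) * ε) ^ 2 := by ring
    have h3 : ‖(∑ t, v (f t)) - (k:ℝ) • μ‖ ≤ (k:ℝ) * ε := by
      have h4 := Real.sqrt_le_sqrt (le_trans h1 h2)
      rwa [Real.sqrt_sq (norm_nonneg _), Real.sqrt_sq (by positivity)] at h4
    have hclose : ‖μ - (k:ℝ)⁻¹ • ∑ t, v (f t)‖ ≤ ε := by
      have h4 : μ - (k:ℝ)⁻¹ • ∑ t, v (f t)
          = -((k:ℝ)⁻¹ • ((∑ t, v (f t)) - (k:ℝ) • μ)) := by
        rw [smul_sub, smul_smul, inv_mul_cancel₀ hkR.ne', one_smul, neg_sub]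
      rw [h4, norm_neg, norm_smul, Real.norm_eq_abs, abs_of_pos (inv_pos.2 hkR)]
      calc (k:ℝ)⁻¹ * ‖(∑ t, v (f t)) - (k:ℝ) • μ‖ ≤ (k:ℝ)⁻¹ * ((k:ℝ) * ε) :=
            mul_le_mul_of_nonneg_left h3 (by positivity)
        _ = ε := by field_simp
    refine ⟨(matE n m).symm (P ((k:ℝ)⁻¹ • ∑ t, v (f t))), ?_, ?_⟩
    · rw [hV, Finset.mem_image]
      exact ⟨f, Finset.mem_univ f, rfl⟩
    · have hμmem : μ ∈ SE := ⟨X * A, ⟨A, hA, rfl⟩, hμdef.symm⟩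
      have h5 := hPle ((k:ℝ)⁻¹ • ∑ t, v (f t)) μ hμmem
      have h6 : frobNorm (X * A - (matE n m).symm (P ((k:ℝ)⁻¹ • ∑ t, v (f t))))
          = ‖μ - P ((k:ℝ)⁻¹ • ∑ t, v (f t))‖ := by
        rw [frob_eq_norm, map_sub, LinearEquiv.apply_symm_apply, hμdef]
      rw [h6]
      exact le_trans h5 hclose
  · -- cardinality bound
    have hVcard : V.card ≤ (2*d*m)^k := by
      calc V.card ≤ (Finset.univ : Finset (Fin k → (Fin d × Fin m) × Bool)).card :=
            Finset.card_image_le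
        _ = (2*d*m)^k := by
            rw [Finset.card_univ]
            simp [Fintype.card_fun, Fintype.card_prod]
            ring
    have hVpos : 0 < V.card := by
      rw [hV]
      apply Finset.card_pos.2
      apply Finset.Nonempty.image
      exact Finset.univ_nonempty
    calc Real.log V.card ≤ Real.log (((2*d*m)^k : ℕ) : ℝ) := by
          apply Real.log_le_log (by exact_mod_cast hVpos)
          exact_mod_cast hVcard
      _ = (k:ℝ) * Real.log (2*d*m) := by
          push_cast
          rw [Real.log_pow]
end

section
/- (Whole-network cover by induction on layers) Fix Lipschitz maps σ_i : W_{i+1} → V_{i+1} with constants ρ_i, operator-norm bounds c_i, and per-layer cover resolutions ε_i. Suppose weight matrices A_i range over classes B_i with |A_i|_{i→i+1} ≤ c_i. Then for input Z with |Z|_1 ≤ B, the set {F_A(Z) : A_i ∈ B_i ∀i} admits a τ-cover under |·|_{L+1} with τ = Σ_{j≤L} ε_j ρ_j ∏_{l=j+1}^L ρ_l c_l, whose cardinality is at most the product over layers i of the supremum over prefixes (A_1,…,A_{i−1}) of the ε_i-covering number of {A_i F_{(A_1,…,A_{i−1})}(Z) : A_i ∈ B_i} under the norm on W_{i+1}.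 -/
open Finset
open scoped NNReal

/-- The (partial) network map: `netMap V W σ A i Z` is
`σ_{i-1}(A_{i-1} σ_{i-2}( ⋯ σ_0(A_0 Z) ⋯ ))`, an element of `V i`,
where `A j : V j →L W j` and `σ j : W j → V (j+1)`. -/
noncomputable def netMap {L : ℕ} (V : Fin (L + 1) → Type*) (W : Fin L → Type*)
    [∀ i, NormedAddCommGroup (V i)] [∀ i, NormedSpace ℝ (V i)]
    [∀ i, NormedAddCommGroup (W i)] [∀ i, NormedSpace ℝ (W i)]
    (σ : ∀ i : Fin L, W i → V i.succ)
    (A : ∀ i : Fin L, V i.castSucc →L[ℝ] W i)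
    (i : Fin (L + 1)) (Z : V 0) : V i :=
  Fin.induction Z (fun j ih => σ j (A j ih)) i

set_option maxRecDepth 8000


open Finset
open scoped NNReal
set_option maxRecDepth 8000

section
variable {L : ℕ}

lemma filter_castSucc_lt_succ (i : Fin L) :
    (univ.filter (fun j : Fin L => j.castSucc < i.succ)) =
      insert i (univ.filter (fun j : Fin L => j.castSucc < i.castSucc)) := by
  ext j
  simp only [mem_filter, mem_univ, true_and, mem_insert, Fin.lt_def, Fin.ext_iff,
    Fin.coe_castSucc, Fin.val_succ]
  omega

lemma not_mem_filter_self (i : Fin L) :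
    i ∉ univ.filter (fun j : Fin L => j.castSucc < i.castSucc) := by
  simp

lemma tau_succ (e r : Fin L → ℝ) (i : Fin L) :
    (∑ j ∈ univ.filter (fun j : Fin L => j.castSucc < i.succ),
        e j * ∏ l ∈ univ.filter (fun l : Fin L => j < l ∧ l.castSucc < i.succ), r l)
      = r i * (∑ j ∈ univ.filter (fun j : Fin L => j.castSucc < i.castSucc),
          e j * ∏ l ∈ univ.filter (fun l : Fin L => j < l ∧ l.castSucc < i.castSucc), r l)
        + e i := by
  rw [filter_castSucc_lt_succ, sum_insert (not_mem_filter_self i)]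
  have h0 : univ.filter (fun l : Fin L => i < l ∧ l.castSucc < i.succ) = ∅ := by
    ext l
    simp only [mem_filter, mem_univ, true_and, Fin.lt_def, Fin.coe_castSucc, Fin.val_succ,
      notMem_empty, iff_false, not_and]
    omega
  have hsum : ∀ j ∈ univ.filter (fun j : Fin L => j.castSucc < i.castSucc),
      e j * ∏ l ∈ univ.filter (fun l : Fin L => j < l ∧ l.castSucc < i.succ), r l
      = r i * (e j * ∏ l ∈ univ.filter (fun l : Fin L => j < l ∧ l.castSucc < i.castSucc), r l) := by
    intro j hj
    have hj' : (j : ℕ) < (i : ℕ) := by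
      exact Fin.castSucc_lt_castSucc_iff.mp (mem_filter.mp hj).2
    have hins : univ.filter (fun l : Fin L => j < l ∧ l.castSucc < i.succ)
        = insert i (univ.filter (fun l : Fin L => j < l ∧ l.castSucc < i.castSucc)) := by
      ext l
      simp only [mem_filter, mem_univ, true_and, mem_insert, Fin.lt_def, Fin.ext_iff,
        Fin.coe_castSucc, Fin.val_succ]
      omega
    have hni : i ∉ univ.filter (fun l : Fin L => j < l ∧ l.castSucc < i.castSucc) := by
      simp
    rw [hins, prod_insert hni]
    ring
  rw [sum_congr rfl hsum, ← mul_sum, h0, prod_empty]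
  ring
end

section
variable {L : ℕ} (V : Fin (L + 1) → Type*) (W : Fin L → Type*)
    [∀ i, NormedAddCommGroup (V i)] [∀ i, NormedSpace ℝ (V i)]
    [∀ i, NormedAddCommGroup (W i)] [∀ i, NormedSpace ℝ (W i)]
    (σ : ∀ i : Fin L, W i → V i.succ)

lemma netMap_zero (A : ∀ i : Fin L, V i.castSucc →L[ℝ] W i) (Z : V 0) :
    netMap V W σ A 0 Z = Z := by
  simp [netMap]

lemma netMap_succ (A : ∀ i : Fin L, V i.castSucc →L[ℝ] W i) (i : Fin L) (Z : V 0) :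
    netMap V W σ A i.succ Z = σ i (A i (netMap V W σ A i.castSucc Z)) := by
  simp [netMap]

lemma netMap_congr (A A' : ∀ i : Fin L, V i.castSucc →L[ℝ] W i) (Z : V 0) (i : Fin (L + 1)) :
    (∀ j : Fin L, j.castSucc < i → A j = A' j) →
    netMap V W σ A i Z = netMap V W σ A' i Z := by
  induction i using Fin.induction with
  | zero => intro _; rw [netMap_zero, netMap_zero]
  | succ i ih =>
    intro h
    rw [netMap_succ, netMap_succ,
      ih (fun j hj => h j (hj.trans (Fin.castSucc_lt_succ (i := i)))),
      h i (Fin.castSucc_lt_succ (i := i))]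
end

/-- whole-network covering by induction on layers: with ρ_i-Lipschitz
nonlinearities σ_i, operator norm bounds c_i on the constraint classes B_i, per-layer
cover resolutions ε_i, and per-layer covering-number bounds N_i (uniform over prefixes),
the set of network images of an input Z admits a τ-cover of cardinality at most ∏ N_i,
where τ = Σ_j ε_j ρ_j ∏_{l>j} ρ_l c_l. -/
theorem whole_network_cover {L : ℕ} (V : Fin (L + 1) → Type*) (W : Fin L → Type*)
    [∀ i, NormedAddCommGroup (V i)] [∀ i, NormedSpace ℝ (V i)]
    [∀ i, NormedAddCommGroup (W i)] [∀ i, NormedSpace ℝ (W i)]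
    (σ : ∀ i : Fin L, W i → V i.succ) (ρ : Fin L → ℝ≥0)
    (hσ : ∀ i, LipschitzWith (ρ i) (σ i))
    (B : ∀ i : Fin L, Set (V i.castSucc →L[ℝ] W i)) (c : Fin L → ℝ)
    (hc : ∀ i, ∀ A ∈ B i, ‖A‖ ≤ c i)
    (Bnd : ℝ) (Z : V 0) (hZ : ‖Z‖ ≤ Bnd)
    (ε : Fin L → ℝ) (hε : ∀ i, 0 < ε i)
    (N : Fin L → ℕ)
    (hcov : ∀ i : Fin L, ∀ A : ∀ j : Fin L, V j.castSucc →L[ℝ] W j,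
      (∀ j, A j ∈ B j) →
      ∃ C : Finset (W i),
        (↑C ⊆ {w | ∃ A' ∈ B i, w = A' (netMap V W σ A i.castSucc Z)})
        ∧ C.card ≤ N i
        ∧ ∀ A' ∈ B i, ∃ w ∈ C, ‖A' (netMap V W σ A i.castSucc Z) - w‖ ≤ ε i) :
    ∃ C : Finset (V (Fin.last L)),
      (↑C ⊆ {v | ∃ A : ∀ j : Fin L, V j.castSucc →L[ℝ] W j,
          (∀ j, A j ∈ B j) ∧ v = netMap V W σ A (Fin.last L) Z})
      ∧ C.card ≤ ∏ i, N i
      ∧ ∀ A : ∀ j : Fin L, V j.castSucc →L[ℝ] W j, (∀ j, A j ∈ B j) →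
          ∃ v ∈ C, ‖netMap V W σ A (Fin.last L) Z - v‖
            ≤ ∑ j : Fin L, ε j * (ρ j : ℝ) *
                ∏ l ∈ Finset.univ.filter (fun l : Fin L => j < l), (ρ l : ℝ) * c l := by
    classical
  by_cases hA : ∃ A : ∀ j : Fin L, V j.castSucc →L[ℝ] W j, ∀ j, A j ∈ B j
  swap
  · exact ⟨∅, by simp, Nat.zero_le _, fun A hA' => absurd ⟨A, hA'⟩ hA⟩
  obtain ⟨A₀, hA₀⟩ := hA
  have hc0 : ∀ l, 0 ≤ c l := fun l => le_trans (norm_nonneg _) (hc l (A₀ l) (hA₀ l))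
  have key : ∀ i : Fin (L + 1), ∃ C : Finset (V i),
      (↑C ⊆ {v | ∃ A : ∀ j : Fin L, V j.castSucc →L[ℝ] W j,
          (∀ j, A j ∈ B j) ∧ v = netMap V W σ A i Z}) ∧
      C.card ≤ ∏ j ∈ univ.filter (fun j : Fin L => j.castSucc < i), N j ∧
      ∀ A : ∀ j : Fin L, V j.castSucc →L[ℝ] W j, (∀ j, A j ∈ B j) →
        ∃ v ∈ C, ‖netMap V W σ A i Z - v‖ ≤
          ∑ j ∈ univ.filter (fun j : Fin L => j.castSucc < i),
            (ε j * (ρ j : ℝ)) *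
              ∏ l ∈ univ.filter (fun l : Fin L => j < l ∧ l.castSucc < i),
                ((ρ l : ℝ) * c l) := by
    intro i
    induction i using Fin.induction with
    | zero =>
      refine ⟨{Z}, ?_, ?_, ?_⟩
      · intro v hv
        simp only [coe_singleton, Set.mem_singleton_iff] at hv
        exact ⟨A₀, hA₀, by rw [hv, netMap_zero]⟩
      · simp
      · intro A hAB
        refine ⟨Z, mem_singleton_self Z, ?_⟩
        have h0 : univ.filter (fun j : Fin L => j.castSucc < (0 : Fin (L + 1))) = ∅ := by
          ext j; simp [Fin.not_lt_zero]
        rw [netMap_zero, sub_self, norm_zero, h0, sum_empty]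
    | succ i ih =>
      obtain ⟨C, hC1, hC2, hC3⟩ := ih
      -- chosen witness for each cover point
      set Aw : ∀ v : {x // x ∈ C}, ∀ j : Fin L, V j.castSucc →L[ℝ] W j :=
        fun v => (hC1 v.2).choose with hAw
      have hAwB : ∀ v : {x // x ∈ C}, ∀ j, Aw v j ∈ B j :=
        fun v => (hC1 v.2).choose_spec.1
      have hAwv : ∀ v : {x // x ∈ C}, (v : V i.castSucc) = netMap V W σ (Aw v) i.castSucc Z :=
        fun v => (hC1 v.2).choose_spec.2
      -- chosen layer-i cover for each cover point
      set D : ∀ v : {x // x ∈ C}, Finset (W i) :=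
        fun v => (hcov i (Aw v) (hAwB v)).choose with hD
      have hD1 : ∀ v : {x // x ∈ C},
          ↑(D v) ⊆ {w | ∃ A' ∈ B i, w = A' (netMap V W σ (Aw v) i.castSucc Z)} :=
        fun v => (hcov i (Aw v) (hAwB v)).choose_spec.1
      have hD2 : ∀ v : {x // x ∈ C}, (D v).card ≤ N i :=
        fun v => (hcov i (Aw v) (hAwB v)).choose_spec.2.1
      have hD3 : ∀ v : {x // x ∈ C}, ∀ A' ∈ B i,
          ∃ w ∈ D v, ‖A' (netMap V W σ (Aw v) i.castSucc Z) - w‖ ≤ ε i :=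
        fun v => (hcov i (Aw v) (hAwB v)).choose_spec.2.2
      refine ⟨C.attach.biUnion (fun v => (D v).image (σ i)), ?_, ?_, ?_⟩
      · -- properness
        intro u hu
        simp only [coe_biUnion, mem_coe, mem_attach, Set.iUnion_true, Set.mem_iUnion,
          coe_image, Set.mem_image, mem_coe] at hu
        obtain ⟨v, w, hw, rfl⟩ := hu
        obtain ⟨A'', hA''B, rfl⟩ := hD1 v hw
        refine ⟨Function.update (Aw v) i A'', ?_, ?_⟩
        · intro j
          rcases eq_or_ne j i with rfl | hj
          · simpa using hA''B
          · simpa [Function.update_of_ne hj] using hAwB v j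
        · rw [netMap_succ]
          have hloc : netMap V W σ (Function.update (Aw v) i A'') i.castSucc Z
              = netMap V W σ (Aw v) i.castSucc Z := by
            apply netMap_congr
            intro j hj
            have : j ≠ i := by
              intro h; subst h; exact lt_irrefl _ hj
            simp [Function.update_of_ne this]
          rw [hloc, Function.update_self]
      · -- cardinality
        calc (C.attach.biUnion (fun v => (D v).image (σ i))).card
            ≤ ∑ v ∈ C.attach, ((D v).image (σ i)).card := card_biUnion_le
          _ ≤ ∑ v ∈ C.attach, N i := by
              refine sum_le_sum fun v _ => le_trans (card_image_le) (hD2 v)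
          _ = C.card * N i := by rw [sum_const, card_attach, smul_eq_mul]
          _ ≤ (∏ j ∈ univ.filter (fun j : Fin L => j.castSucc < i.castSucc), N j) * N i :=
              Nat.mul_le_mul_right _ hC2
          _ = ∏ j ∈ univ.filter (fun j : Fin L => j.castSucc < i.succ), N j := by
              rw [filter_castSucc_lt_succ, prod_insert (not_mem_filter_self i), Nat.mul_comm]
      · -- covering bound
        intro A hAB
        obtain ⟨v, hv, hvle⟩ := hC3 A hAB
        set v' : {x // x ∈ C} := ⟨v, hv⟩ with hv'
        obtain ⟨w, hw, hwle⟩ := hD3 v' (A i) (hAB i)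
        refine ⟨σ i w, ?_, ?_⟩
        · exact mem_biUnion.mpr ⟨v', mem_attach _ _, mem_image_of_mem _ hw⟩
        · set τ := ∑ j ∈ univ.filter (fun j : Fin L => j.castSucc < i.castSucc),
              (ε j * (ρ j : ℝ)) *
                ∏ l ∈ univ.filter (fun l : Fin L => j < l ∧ l.castSucc < i.castSucc),
                  ((ρ l : ℝ) * c l) with hτ
          have key2 : ‖netMap V W σ A i.succ Z - σ i w‖
              ≤ ((ρ i : ℝ) * c i) * τ + (ε i * (ρ i : ℝ)) := by
            rw [netMap_succ]
            have lip : ‖σ i (A i (netMap V W σ A i.castSucc Z)) - σ i w‖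
                ≤ (ρ i : ℝ) * ‖A i (netMap V W σ A i.castSucc Z) - w‖ := by
              have := (hσ i).dist_le_mul (A i (netMap V W σ A i.castSucc Z)) w
              simpa [dist_eq_norm] using this
            have tri : ‖A i (netMap V W σ A i.castSucc Z) - w‖
                ≤ ‖A i (netMap V W σ A i.castSucc Z)
                    - A i (netMap V W σ (Aw v') i.castSucc Z)‖
                  + ‖A i (netMap V W σ (Aw v') i.castSucc Z) - w‖ :=
              norm_sub_le_norm_sub_add_norm_sub _ _ _
            have b1 : ‖A i (netMap V W σ A i.castSucc Z)
                - A i (netMap V W σ (Aw v') i.castSucc Z)‖ ≤ c i * τ := by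
              rw [← map_sub]
              calc ‖A i (netMap V W σ A i.castSucc Z - netMap V W σ (Aw v') i.castSucc Z)‖
                  ≤ ‖A i‖ * ‖netMap V W σ A i.castSucc Z - netMap V W σ (Aw v') i.castSucc Z‖ :=
                    (A i).le_opNorm _
                _ ≤ c i * ‖netMap V W σ A i.castSucc Z - netMap V W σ (Aw v') i.castSucc Z‖ :=
                    mul_le_mul_of_nonneg_right (hc i (A i) (hAB i)) (norm_nonneg _)
                _ ≤ c i * τ := by
                    apply mul_le_mul_of_nonneg_left _ (hc0 i)
                    rw [← hAwv v']
                    exact hvle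
            calc ‖σ i (A i (netMap V W σ A i.castSucc Z)) - σ i w‖
                ≤ (ρ i : ℝ) * ‖A i (netMap V W σ A i.castSucc Z) - w‖ := lip
              _ ≤ (ρ i : ℝ) * (c i * τ + ε i) := by
                  apply mul_le_mul_of_nonneg_left _ (ρ i).coe_nonneg
                  exact le_trans tri (add_le_add b1 hwle)
              _ = ((ρ i : ℝ) * c i) * τ + (ε i * (ρ i : ℝ)) := by ring
          rw [tau_succ (fun j => ε j * (ρ j : ℝ)) (fun l => (ρ l : ℝ) * c l) i]
          exact key2
  obtain ⟨C, h1, h2, h3⟩ := key (Fin.last L)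
  have e1 : univ.filter (fun j : Fin L => j.castSucc < Fin.last L) = univ := by
    ext j; simp [Fin.castSucc_lt_last]
  refine ⟨C, h1, by simpa [e1] using h2, fun A hAB => ?_⟩
  obtain ⟨v, hv, hle⟩ := h3 A hAB
  refine ⟨v, hv, le_trans hle (le_of_eq ?_)⟩
  rw [e1]
  refine sum_congr rfl fun j _ => ?_
  have e2 : univ.filter (fun l : Fin L => j < l ∧ l.castSucc < Fin.last L)
      = univ.filter (fun l : Fin L => j < l) := by
    ext l; simp [Fin.castSucc_lt_last]
  rw [e2, mul_assoc]
end

section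
/- (Dudley entropy integral, unnormalized form) Let F be a class of functions with values in [0,1] containing the zero function, and S = (x_1,…,x_n) a sample. Then the empirical Rademacher complexity satisfies R(F_{|S}) ≤ inf_{α>0} [4α/√n + (12/n) ∫_α^{√n} √(ln N(F_{|S}, ε, ‖·‖_2)) dε], where F_{|S} ⊆ ℝ^n is the set of vectors (f(x_1),…,f(x_n)) and ‖·‖_2 is the unnormalized Euclidean norm on ℝ^n. -/
open Finset

/-- Proper covering number (as a real; infimum of cardinalities of proper ε-covers). -/
noncomputable def coverNum {n : ℕ} (U : Set (EuclideanSpace ℝ (Fin n))) (ε : ℝ) : ℝ :=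
  sInf {c : ℝ | ∃ V : Finset (EuclideanSpace ℝ (Fin n)),
    ↑V ⊆ U ∧ (V.card : ℝ) = c ∧ ∀ u ∈ U, ∃ v ∈ V, ‖u - v‖ ≤ ε}

lemma sign_sum_zero (n : ℕ) (t : Fin n) :
    ∑ e : Fin n → Bool, (if e t then (1:ℝ) else -1) = 0 := by
  classical
  refine Finset.sum_ninvolution (fun e => Function.update e t (!e t)) ?_ ?_ (fun _ => mem_univ _) ?_
  · intro e; simp [Function.update_self]; cases e t <;> simp
  · intro e _; intro h
    have h' : Function.update e t (!e t) = e := h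
    have : (Function.update e t (!e t)) t = e t := by rw [h']
    simp [Function.update_self] at this
  · intro e; funext s
    by_cases hs : s = t
    · subst hs; simp [Function.update_self]
    · simp [Function.update_of_ne hs]

lemma avg_exp_eq (n : ℕ) (lam : ℝ) (w : Fin n → ℝ) :
    ∑ e : Fin n → Bool, Real.exp (lam * ∑ t, (if e t then (1:ℝ) else -1) * w t)
      = ∏ t : Fin n, (Real.exp (lam * w t) + Real.exp (-(lam * w t))) := by
  classical
  have h1 : ∀ e : Fin n → Bool,
      Real.exp (lam * ∑ t, (if e t then (1:ℝ) else -1) * w t)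
        = ∏ t : Fin n, Real.exp (lam * ((if e t then (1:ℝ) else -1) * w t)) := by
    intro e
    rw [← Real.exp_sum, Finset.mul_sum]
  rw [Finset.sum_congr rfl fun e _ => h1 e]
  have h2 := Finset.prod_univ_sum (fun _ : Fin n => (univ : Finset Bool))
      (fun t (b : Bool) => Real.exp (lam * ((if b then (1:ℝ) else -1) * w t)))
  rw [Fintype.piFinset_univ] at h2
  rw [← h2]
  refine Finset.prod_congr rfl fun t _ => ?_
  rw [Fintype.sum_bool]
  norm_num [mul_neg]

set_option maxHeartbeats 1000000 in
/-- Massart's finite class lemma (unnormalized sign-average form). -/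
lemma massart {n : ℕ} (W : Finset (EuclideanSpace ℝ (Fin n))) (hW : W.Nonempty) {M : ℝ}
    (hM : 0 ≤ M) (hb : ∀ w ∈ W, ‖w‖ ≤ M) :
    (2 ^ n : ℝ)⁻¹ * ∑ e : Fin n → Bool,
        W.sup' hW (fun w => ∑ t, (if e t then (1:ℝ) else -1) * w t)
      ≤ M * Real.sqrt (2 * Real.log W.card) := by
  classical
  rcases eq_or_lt_of_le (show 1 ≤ W.card from hW.card_pos) with hc1 | hc2
  · obtain ⟨w₀, hw₀⟩ := Finset.card_eq_one.1 hc1.symm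
    subst hw₀
    simp only [Finset.sup'_singleton, Finset.card_singleton, Nat.cast_one, Real.log_one,
      mul_zero, Real.sqrt_zero]
    have hz : ∑ e : Fin n → Bool, ∑ t, (if e t then (1:ℝ) else -1) * w₀ t = 0 := by
      rw [Finset.sum_comm]
      refine Finset.sum_eq_zero fun t _ => ?_
      rw [← Finset.sum_mul, sign_sum_zero, zero_mul]
    rw [hz, mul_zero]
  · by_cases hM0 : M = 0
    · subst hM0
      have hz : ∀ w ∈ W, w = 0 := fun w hw => norm_le_zero_iff.1 (hb w hw)
      have hsup : ∀ e : Fin n → Bool,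
          W.sup' hW (fun w => ∑ t, (if e t then (1:ℝ) else -1) * w t) = 0 := by
        intro e
        have hzz : ∀ w ∈ W, (∑ t, (if e t then (1:ℝ) else -1) * w t) = (fun _ => (0:ℝ)) w := by
          intro w hw
          rw [hz w hw]
          simp
        rw [Finset.sup'_congr hW rfl hzz, Finset.sup'_const]
      rw [Finset.sum_congr rfl fun e _ => hsup e]
      simp
    have hMpos : 0 < M := lt_of_le_of_ne hM (Ne.symm hM0)
    have hL : 0 < Real.log W.card := Real.log_pos (by exact_mod_cast hc2)
    set L := Real.log (W.card : ℝ) with hLdef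
    set s := Real.sqrt (2 * L) with hsdef
    have hspos : 0 < s := Real.sqrt_pos.2 (by linarith)
    have hs2 : s ^ 2 = 2 * L := Real.sq_sqrt (by linarith)
    set lam : ℝ := s / M with hlam
    have hlampos : 0 < lam := div_pos hspos hMpos
    set f : (Fin n → Bool) → ℝ :=
      fun e => W.sup' hW (fun w => ∑ t, (if e t then (1:ℝ) else -1) * w t) with hf
    set A : ℝ := (2 ^ n : ℝ)⁻¹ * ∑ e : Fin n → Bool, f e with hA
    have hcard : ((Fintype.card (Fin n → Bool)) : ℝ) = 2 ^ n := by
      simp [Fintype.card_fun]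
    have h2npos : (0:ℝ) < 2 ^ n := by positivity
    -- Jensen step
    have hJ : Real.exp (lam * A) ≤ (2 ^ n : ℝ)⁻¹ * ∑ e : Fin n → Bool, Real.exp (lam * f e) := by
      have hw1 : ∑ _e : Fin n → Bool, (2 ^ n : ℝ)⁻¹ = 1 := by
        rw [Finset.sum_const, Finset.card_univ, nsmul_eq_mul, hcard]
        field_simp
      have hjen := convexOn_exp.map_sum_le (t := (univ : Finset (Fin n → Bool)))
        (w := fun _ => (2 ^ n : ℝ)⁻¹) (p := fun e => lam * f e)
        (fun _ _ => by positivity) hw1 (fun _ _ => Set.mem_univ _)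
      simp only [smul_eq_mul] at hjen
      have harg : lam * A = ∑ e : Fin n → Bool, (2 ^ n : ℝ)⁻¹ * (lam * f e) := by
        rw [hA, Finset.mul_sum, Finset.mul_sum]
        exact Finset.sum_congr rfl fun e _ => by ring
      rw [harg, Finset.mul_sum]
      exact hjen
    -- bound exp of sup by sum
    have hstep2 : ∀ e : Fin n → Bool, Real.exp (lam * f e)
        ≤ ∑ w ∈ W, Real.exp (lam * ∑ t, (if e t then (1:ℝ) else -1) * w t) := by
      intro e
      obtain ⟨w₀, hw₀, hval⟩ := Finset.exists_mem_eq_sup' hW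
        (fun w => ∑ t, (if e t then (1:ℝ) else -1) * w t)
      have hfe : f e = ∑ t, (if e t then (1:ℝ) else -1) * w₀ t := by
        rw [hf]
        exact hval
      rw [hfe]
      exact Finset.single_le_sum
        (f := fun w : EuclideanSpace ℝ (Fin n) =>
          Real.exp (lam * ∑ t, (if e t then (1:ℝ) else -1) * w t))
        (fun w _ => (Real.exp_pos _).le) hw₀
    -- MGF bound for each w
    have hstep3 : ∀ w ∈ W,
        ∑ e : Fin n → Bool, Real.exp (lam * ∑ t, (if e t then (1:ℝ) else -1) * w t)
          ≤ 2 ^ n * Real.exp (lam ^ 2 * M ^ 2 / 2) := by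
      intro w hw
      rw [avg_exp_eq]
      have hterm : ∀ t : Fin n, Real.exp (lam * w t) + Real.exp (-(lam * w t))
          ≤ 2 * Real.exp ((lam * w t) ^ 2 / 2) := by
        intro t
        have := Real.cosh_le_exp_half_sq (lam * w t)
        rw [Real.cosh_eq] at this
        linarith
      calc ∏ t : Fin n, (Real.exp (lam * w t) + Real.exp (-(lam * w t)))
          ≤ ∏ t : Fin n, 2 * Real.exp ((lam * w t) ^ 2 / 2) := by
            refine Finset.prod_le_prod (fun t _ => by positivity) (fun t _ => hterm t)
        _ = 2 ^ n * Real.exp (∑ t : Fin n, (lam * w t) ^ 2 / 2) := by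
            rw [Finset.prod_mul_distrib, Finset.prod_const, Finset.card_univ, Fintype.card_fin,
              ← Real.exp_sum]
        _ ≤ 2 ^ n * Real.exp (lam ^ 2 * M ^ 2 / 2) := by
            have hnorm : ∑ t : Fin n, (w t) ^ 2 ≤ M ^ 2 := by
              have h1 : ‖w‖ ^ 2 ≤ M ^ 2 := by
                have := hb w hw
                nlinarith [norm_nonneg w]
              have h2 : ‖w‖ ^ 2 = ∑ t : Fin n, (w t) ^ 2 := by
                rw [EuclideanSpace.norm_eq, Real.sq_sqrt (by positivity)]
                exact Finset.sum_congr rfl fun t _ => by rw [Real.norm_eq_abs, sq_abs]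
              linarith
            have : ∑ t : Fin n, (lam * w t) ^ 2 / 2 ≤ lam ^ 2 * M ^ 2 / 2 := by
              have heq : ∑ t : Fin n, (lam * w t) ^ 2 / 2
                  = lam ^ 2 * (∑ t : Fin n, (w t) ^ 2) / 2 := by
                rw [Finset.mul_sum, Finset.sum_div]
                exact Finset.sum_congr rfl fun t _ => by ring
              rw [heq]
              have hl2 : 0 ≤ lam ^ 2 := sq_nonneg lam
              nlinarith
            have := Real.exp_le_exp.2 this
            nlinarith [Real.exp_pos (∑ t : Fin n, (lam * w t) ^ 2 / 2), h2npos]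
    -- combine
    have hcomb : Real.exp (lam * A) ≤ W.card * Real.exp (lam ^ 2 * M ^ 2 / 2) := by
      calc Real.exp (lam * A) ≤ (2 ^ n : ℝ)⁻¹ * ∑ e : Fin n → Bool, Real.exp (lam * f e) := hJ
        _ ≤ (2 ^ n : ℝ)⁻¹ * ∑ e : Fin n → Bool, ∑ w ∈ W,
            Real.exp (lam * ∑ t, (if e t then (1:ℝ) else -1) * w t) := by
            have := Finset.sum_le_sum (fun e (_ : e ∈ (univ : Finset (Fin n → Bool))) => hstep2 e)
            have h2 : (0:ℝ) ≤ (2 ^ n : ℝ)⁻¹ := by positivity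
            exact mul_le_mul_of_nonneg_left this h2
        _ = (2 ^ n : ℝ)⁻¹ * ∑ w ∈ W, ∑ e : Fin n → Bool,
            Real.exp (lam * ∑ t, (if e t then (1:ℝ) else -1) * w t) := by
            rw [Finset.sum_comm]
        _ ≤ (2 ^ n : ℝ)⁻¹ * ∑ _w ∈ W, (2 ^ n * Real.exp (lam ^ 2 * M ^ 2 / 2)) := by
            have := Finset.sum_le_sum hstep3
            have h2 : (0:ℝ) ≤ (2 ^ n : ℝ)⁻¹ := by positivity
            exact mul_le_mul_of_nonneg_left this h2
        _ = W.card * Real.exp (lam ^ 2 * M ^ 2 / 2) := by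
            rw [Finset.sum_const, nsmul_eq_mul]
            field_simp
    have hcardpos : (0:ℝ) < W.card := by exact_mod_cast hW.card_pos
    have hlog : lam * A ≤ L + lam ^ 2 * M ^ 2 / 2 := by
      have hrpos : 0 < (W.card : ℝ) * Real.exp (lam ^ 2 * M ^ 2 / 2) := by positivity
      have := (Real.le_log_iff_exp_le hrpos).2 hcomb
      rwa [Real.log_mul (ne_of_gt hcardpos) (ne_of_gt (Real.exp_pos _)), Real.log_exp] at this
    have hlm : lam ^ 2 * M ^ 2 = 2 * L := by
      rw [hlam]; field_simp; exact hs2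
    have hfin : lam * A ≤ 2 * L := by
      rw [hlm] at hlog; linarith
    have : A ≤ M * s := by
      have h1 : s / M * A ≤ s ^ 2 := by rw [← hs2] at hfin; exact hlam ▸ hfin
      have h2 : s * A ≤ s ^ 2 * M := by
        have := mul_le_mul_of_nonneg_left h1 hMpos.le
        calc s * A = M * (s / M * A) := by field_simp
          _ ≤ M * s ^ 2 := by nlinarith
          _ = s ^ 2 * M := by ring
      nlinarith
    exact this

lemma coverNum_bddBelow {n : ℕ} (U : Set (EuclideanSpace ℝ (Fin n))) (ε : ℝ) :
    BddBelow {c : ℝ | ∃ V : Finset (EuclideanSpace ℝ (Fin n)),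
      ↑V ⊆ U ∧ (V.card : ℝ) = c ∧ ∀ u ∈ U, ∃ v ∈ V, ‖u - v‖ ≤ ε} :=
  ⟨0, fun _c ⟨_V, _, hc, _⟩ => hc ▸ Nat.cast_nonneg _⟩

/-- Existence of a finite proper cover of minimal cardinality. -/
lemma coverNum_exists {n : ℕ} {U : Set (EuclideanSpace ℝ (Fin n))}
    {R : ℝ} (hbd : ∀ u ∈ U, ‖u‖ ≤ R) {ε : ℝ} (hε : 0 < ε) :
    ∃ V : Finset (EuclideanSpace ℝ (Fin n)), ↑V ⊆ U ∧ (V.card : ℝ) = coverNum U ε ∧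
      ∀ u ∈ U, ∃ v ∈ V, ‖u - v‖ ≤ ε := by
  classical
  have htb : TotallyBounded U := by
    have hsub : U ⊆ Metric.closedBall 0 R := by
      intro u hu
      simpa [Metric.mem_closedBall, dist_eq_norm] using hbd u hu
    exact (isCompact_closedBall (0 : EuclideanSpace ℝ (Fin n)) R).totallyBounded.subset hsub
  have hd : {p : EuclideanSpace ℝ (Fin n) × EuclideanSpace ℝ (Fin n) | dist p.1 p.2 < ε}
      ∈ uniformity (EuclideanSpace ℝ (Fin n)) := Metric.dist_mem_uniformity hε
  obtain ⟨t, hts, htf, htcov⟩ := htb.exists_subset hd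
  set S : Set ℕ := {k : ℕ | ∃ V : Finset (EuclideanSpace ℝ (Fin n)),
    ↑V ⊆ U ∧ V.card = k ∧ ∀ u ∈ U, ∃ v ∈ V, ‖u - v‖ ≤ ε} with hS
  have hSne : S.Nonempty := by
    refine ⟨htf.toFinset.card, htf.toFinset, ?_, rfl, ?_⟩
    · intro v hv
      exact hts (by simpa using hv)
    · intro u hu
      obtain ⟨y, hy, hxy⟩ := Set.mem_iUnion₂.1 (htcov hu)
      exact ⟨y, by simpa using hy, by
        have : dist u y < ε := hxy
        rw [dist_eq_norm] at this
        linarith⟩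
  obtain ⟨V, hV1, hV2, hV3⟩ := Nat.sInf_mem hSne
  refine ⟨V, hV1, ?_, hV3⟩
  have h1 : coverNum U ε ≤ V.card := csInf_le (coverNum_bddBelow U ε) ⟨V, hV1, rfl, hV3⟩
  have h2 : (V.card : ℝ) ≤ coverNum U ε := by
    refine le_csInf ⟨V.card, V, hV1, rfl, hV3⟩ ?_
    rintro c ⟨V', hV'1, hV'2, hV'3⟩
    have : sInf S ≤ V'.card := Nat.sInf_le ⟨V', hV'1, rfl, hV'3⟩
    rw [← hV'2, hV2]
    exact_mod_cast this
  linarith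

lemma coverNum_antitone {n : ℕ} {U : Set (EuclideanSpace ℝ (Fin n))}
    {R : ℝ} (hbd : ∀ u ∈ U, ‖u‖ ≤ R) {ε ε' : ℝ} (hε : 0 < ε) (h : ε ≤ ε') :
    coverNum U ε' ≤ coverNum U ε := by
  obtain ⟨V, h1, h2, h3⟩ := coverNum_exists hbd hε
  rw [← h2]
  exact csInf_le (coverNum_bddBelow U ε')
    ⟨V, h1, rfl, fun u hu => (h3 u hu).imp fun v ⟨hv, hvle⟩ => ⟨hv, hvle.trans h⟩⟩

lemma one_le_coverNum {n : ℕ} {U : Set (EuclideanSpace ℝ (Fin n))} (hne : U.Nonempty)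
    {R : ℝ} (hbd : ∀ u ∈ U, ‖u‖ ≤ R) {ε : ℝ} (hε : 0 < ε) :
    1 ≤ coverNum U ε := by
  refine le_csInf ?_ ?_
  · obtain ⟨V, h1, h2, h3⟩ := coverNum_exists hbd hε
    exact ⟨V.card, V, h1, rfl, h3⟩
  · rintro c ⟨V, hV1, hV2, hV3⟩
    obtain ⟨u, hu⟩ := hne
    obtain ⟨v, hv, -⟩ := hV3 u hu
    have : 1 ≤ V.card := Finset.card_pos.2 ⟨v, hv⟩
    rw [← hV2]
    exact_mod_cast this

lemma coverNum_eq_one {n : ℕ} {U : Set (EuclideanSpace ℝ (Fin n))}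
    (h0 : (0:EuclideanSpace ℝ (Fin n)) ∈ U)
    {R : ℝ} (hbd : ∀ u ∈ U, ‖u‖ ≤ R) {ε : ℝ} (hε : 0 < ε) (hRε : R ≤ ε) :
    coverNum U ε = 1 := by
  have h1 : coverNum U ε ≤ 1 := by
    refine csInf_le (coverNum_bddBelow U ε) ⟨{0}, by simpa using h0, by simp, ?_⟩
    intro u hu
    exact ⟨0, by simp, by simpa using (hbd u hu).trans hRε⟩
  have h2 : 1 ≤ coverNum U ε := one_le_coverNum ⟨0, h0⟩ hbd hε
  linarith

noncomputable def dudleyEps (n : ℕ) (j : ℕ) : ℝ := Real.sqrt n / 2 ^ j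

lemma dudleyEps_pos {n : ℕ} (hn : 0 < n) (j : ℕ) : 0 < dudleyEps n j := by
  have : (0:ℝ) < Real.sqrt n := Real.sqrt_pos.2 (by exact_mod_cast hn)
  unfold dudleyEps
  positivity

lemma dudleyEps_zero (n : ℕ) : dudleyEps n 0 = Real.sqrt n := by simp [dudleyEps]

lemma dudleyEps_succ (n j : ℕ) : dudleyEps n (j + 1) = dudleyEps n j / 2 := by
  unfold dudleyEps
  rw [pow_succ]
  ring

lemma dudleyEps_anti {n : ℕ} (hn : 0 < n) {j k : ℕ} (h : j ≤ k) :
    dudleyEps n k ≤ dudleyEps n j := by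
  unfold dudleyEps
  have h1 : (0:ℝ) < Real.sqrt n := Real.sqrt_pos.2 (by exact_mod_cast hn)
  have h2 : (2:ℝ) ^ j ≤ 2 ^ k := pow_le_pow_right₀ (by norm_num) h
  have h3 : (0:ℝ) < 2 ^ j := by positivity
  exact div_le_div_of_nonneg_left h1.le h3 h2 |>.trans_eq rfl

set_option maxHeartbeats 4000000 in
/-- Dudley entropy integral, unnormalized: for a class F of [0,1]-valued
functions containing 0, the empirical Rademacher complexity satisfies, for every α > 0,
R(F_{|S}) ≤ 4α/√n + (12/n) ∫_α^{√n} √(ln N(F_{|S}, ε, ‖·‖₂)) dε. -/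
theorem dudley_entropy_integral {X : Type*} (n : ℕ) (hn : 0 < n)
    (F : Set (X → ℝ)) (hF : ∀ f ∈ F, ∀ x, f x ∈ Set.Icc (0:ℝ) 1)
    (h0 : (fun _ => (0:ℝ)) ∈ F) (x : Fin n → X) (α : ℝ) (hα : 0 < α) :
    (1 / n) * ((2 ^ n : ℝ)⁻¹ *
        ∑ e : Fin n → Bool,
          sSup {r : ℝ | ∃ f ∈ F, r = ∑ t, (if e t then (1:ℝ) else -1) * f (x t)})
      ≤ 4 * α / Real.sqrt n
        + (12 / n) * ∫ ε in α..(Real.sqrt n),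
            Real.sqrt (Real.log
              (coverNum {v | ∃ f ∈ F, ∀ t, v t = f (x t)} ε)) := by
  classical
  have hnpos : (0:ℝ) < n := by exact_mod_cast hn
  have hsn : 0 < Real.sqrt n := Real.sqrt_pos.2 hnpos
  set U : Set (EuclideanSpace ℝ (Fin n)) := {v | ∃ f ∈ F, ∀ t, v t = f (x t)} with hUdef
  have hU0 : (0 : EuclideanSpace ℝ (Fin n)) ∈ U := ⟨fun _ => (0:ℝ), h0, fun t => rfl⟩
  have hUne : U.Nonempty := ⟨0, hU0⟩
  have hUb : ∀ u ∈ U, ‖u‖ ≤ Real.sqrt n := by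
    rintro u ⟨f, hfF, hfe⟩
    rw [EuclideanSpace.norm_eq]
    have hle : ∑ t : Fin n, ‖u t‖ ^ 2 ≤ (n : ℝ) := by
      calc ∑ t : Fin n, ‖u t‖ ^ 2 ≤ ∑ _t : Fin n, (1:ℝ) := by
            refine Finset.sum_le_sum fun t _ => ?_
            obtain ⟨ha, hb⟩ := hF f hfF (x t)
            rw [hfe t, Real.norm_eq_abs, sq_abs]
            nlinarith
        _ = (n : ℝ) := by simp
    exact Real.sqrt_le_sqrt hle
  -- the integrand
  set g : ℝ → ℝ := fun ε => Real.sqrt (Real.log (coverNum U ε)) with hgdef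
  have hg_nonneg : ∀ ε, 0 ≤ g ε := fun ε => Real.sqrt_nonneg _
  have hg_anti : ∀ a b, 0 < a → a ≤ b → g b ≤ g a := by
    intro a b ha hab
    refine Real.sqrt_le_sqrt (Real.log_le_log ?_ (coverNum_antitone hUb ha hab))
    have := one_le_coverNum hUne hUb (lt_of_lt_of_le ha hab)
    linarith
  have hg_int : ∀ a b : ℝ, 0 < a → 0 < b → IntervalIntegrable g MeasureTheory.volume a b := by
    intro a b ha hb
    refine AntitoneOn.intervalIntegrable ?_
    intro u hu v hv huv
    have hmin : 0 < min a b := lt_min ha hb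
    exact hg_anti u v (lt_of_lt_of_le hmin hu.1) huv
  -- nonemptiness of the sup sets
  have hSne : ∀ e : Fin n → Bool,
      {r : ℝ | ∃ f ∈ F, r = ∑ t, (if e t then (1:ℝ) else -1) * f (x t)}.Nonempty := by
    intro e
    exact ⟨0, (fun _ => (0:ℝ)), h0, by simp⟩
  have hr_le : ∀ (e : Fin n → Bool) r,
      r ∈ {r : ℝ | ∃ f ∈ F, r = ∑ t, (if e t then (1:ℝ) else -1) * f (x t)} → r ≤ n := by
    rintro e r ⟨f, hfF, rfl⟩
    calc ∑ t, (if e t then (1:ℝ) else -1) * f (x t) ≤ ∑ _t : Fin n, (1:ℝ) := by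
          refine Finset.sum_le_sum fun t _ => ?_
          obtain ⟨ha, hb⟩ := hF f hfF (x t)
          cases he : e t <;> simp <;> linarith
      _ = (n : ℝ) := by simp
  by_cases hcase : 4 * α ≤ Real.sqrt n
  · -- main case: 4α ≤ √n
    -- dyadic scales
    have heps_pos : ∀ j, 0 < dudleyEps n j := dudleyEps_pos hn
    have heps_le_sn : ∀ j, dudleyEps n j ≤ Real.sqrt n :=
      fun j => (dudleyEps_anti hn (Nat.zero_le j)).trans_eq (dudleyEps_zero n)
    -- choice of K
    have hex : ∃ m : ℕ, dudleyEps n m < 2 * α := by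
      obtain ⟨m, hm⟩ := pow_unbounded_of_one_lt (Real.sqrt n / (2 * α))
        (by norm_num : (1:ℝ) < 2)
      refine ⟨m, ?_⟩
      unfold dudleyEps
      rw [div_lt_iff₀ (by positivity : (0:ℝ) < 2 ^ m)]
      rw [div_lt_iff₀ (by positivity : (0:ℝ) < 2 * α)] at hm
      nlinarith
    have hm₀pos : 0 < Nat.find hex := by
      rcases Nat.eq_zero_or_pos (Nat.find hex) with h | h
      · exfalso
        have := Nat.find_spec hex
        rw [h, dudleyEps_zero] at this
        nlinarith
      · exact h
    set K := Nat.find hex - 1 with hKdef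
    have hKsucc : K + 1 = Nat.find hex := Nat.succ_pred_eq_of_pos hm₀pos
    have hK2α : 2 * α ≤ dudleyEps n K := by
      have := Nat.find_min hex (show K < Nat.find hex by omega)
      linarith [not_lt.1 this]
    have heK1 : dudleyEps n (K + 1) < 2 * α := by
      rw [hKsucc]; exact Nat.find_spec hex
    have hαeK1 : α ≤ dudleyEps n (K + 1) := by
      rw [dudleyEps_succ]; linarith
    have heK4 : dudleyEps n K < 4 * α := by
      have h := dudleyEps_succ n K
      have := heps_pos K
      linarith [heK1]
    -- covers of minimal cardinality
    have hVex : ∀ j : ℕ, ∃ V : Finset (EuclideanSpace ℝ (Fin n)), ↑V ⊆ U ∧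
        (V.card : ℝ) = coverNum U (dudleyEps n j) ∧
        ∀ u ∈ U, ∃ v ∈ V, ‖u - v‖ ≤ dudleyEps n j :=
      fun j => coverNum_exists hUb (heps_pos j)
    choose V hVsub hVcard hVcov using hVex
    -- chain maps
    have hπex : ∀ (j : ℕ) (u : EuclideanSpace ℝ (Fin n)), ∃ w : EuclideanSpace ℝ (Fin n),
        (j = 0 → w = 0) ∧ (j ≠ 0 → u ∈ U → w ∈ V j ∧ ‖u - w‖ ≤ dudleyEps n j) := by
      intro j u
      by_cases hj : j = 0
      · exact ⟨0, fun _ => rfl, fun h => absurd hj h⟩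
      · by_cases hu : u ∈ U
        · obtain ⟨v, hv1, hv2⟩ := hVcov j u hu
          exact ⟨v, fun h => absurd h hj, fun _ _ => ⟨hv1, hv2⟩⟩
        · exact ⟨0, fun h => rfl, fun _ h => absurd h hu⟩
    choose π hπ0 hπ1 using hπex
    set Wf : ℕ → Finset (EuclideanSpace ℝ (Fin n)) :=
      fun j => if j = 0 then {0} else V j with hWfdef
    have hπW : ∀ j u, u ∈ U → π j u ∈ Wf j := by
      intro j u hu
      by_cases hj : j = 0
      · subst hj
        simp [hWfdef, hπ0 0 u rfl]
      · simp only [hWfdef, hj, if_false]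
        exact (hπ1 j u hj hu).1
    have hπdist : ∀ j u, u ∈ U → ‖u - π j u‖ ≤ dudleyEps n j := by
      intro j u hu
      by_cases hj : j = 0
      · subst hj
        rw [hπ0 0 u rfl, sub_zero, dudleyEps_zero]
        exact hUb u hu
      · exact (hπ1 j u hj hu).2
    -- difference sets
    set D : ℕ → Finset (EuclideanSpace ℝ (Fin n)) := fun j =>
      ((Wf j ×ˢ Wf (j-1)).filter (fun p => ‖p.1 - p.2‖ ≤ 3 * dudleyEps n j)).image
        (fun p => p.1 - p.2) with hDdef
    have hDmem : ∀ (j : ℕ) u, u ∈ U → π (j+1) u - π j u ∈ D (j+1) := by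
      intro j u hu
      simp only [hDdef]
      refine Finset.mem_image.2 ⟨(π (j+1) u, π j u),
        Finset.mem_filter.2 ⟨Finset.mem_product.2 ⟨hπW (j+1) u hu, ?_⟩, ?_⟩, rfl⟩
      · simpa using hπW j u hu
      · have h1 : ‖π (j+1) u - π j u‖ ≤ ‖π (j+1) u - u‖ + ‖u - π j u‖ := by
          have := norm_sub_le (π (j+1) u - u) (π j u - u)
          simpa [sub_sub_sub_cancel_right, norm_sub_rev (π j u) u] using this
        have h2 : ‖π (j+1) u - u‖ = ‖u - π (j+1) u‖ := norm_sub_rev _ _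
        have h3 := hπdist (j+1) u hu
        have h4 := hπdist j u hu
        have h5 : dudleyEps n j = 2 * dudleyEps n (j+1) := by
          rw [dudleyEps_succ]; ring
        simp only
        linarith
    have hDne : ∀ j : ℕ, (D (j+1)).Nonempty := fun j => ⟨_, hDmem j 0 hU0⟩
    have hDnorm : ∀ (j : ℕ), ∀ w ∈ D (j+1), ‖w‖ ≤ 3 * dudleyEps n (j+1) := by
      intro j w hw
      simp only [hDdef] at hw
      obtain ⟨p, hp, rfl⟩ := Finset.mem_image.1 hw
      exact (Finset.mem_filter.1 hp).2
    have hN1 : ∀ j : ℕ, 1 ≤ coverNum U (dudleyEps n j) :=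
      fun j => one_le_coverNum hUne hUb (heps_pos j)
    have hDcard : ∀ j : ℕ, ((D (j+1)).card : ℝ) ≤ (coverNum U (dudleyEps n (j+1)))^2 := by
      intro j
      have h1 : (D (j+1)).card ≤ (Wf (j+1)).card * (Wf j).card := by
        simp only [hDdef]
        refine Finset.card_image_le.trans ((Finset.card_filter_le _ _).trans ?_)
        rw [Finset.card_product]
        simp
      have h2 : ((Wf (j+1)).card : ℝ) = coverNum U (dudleyEps n (j+1)) := by
        simp only [hWfdef, Nat.succ_ne_zero, if_false]
        exact hVcard (j+1)
      have h3 : ((Wf j).card : ℝ) ≤ coverNum U (dudleyEps n (j+1)) := by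
        by_cases hj : j = 0
        · subst hj
          simp only [hWfdef, if_pos rfl, Finset.card_singleton, Nat.cast_one]
          exact hN1 1
        · simp only [hWfdef, hj, if_false]
          rw [hVcard j]
          exact coverNum_antitone hUb (heps_pos (j+1)) (dudleyEps_anti hn (by omega))
      have hcast : ((D (j+1)).card : ℝ) ≤ ((Wf (j+1)).card : ℝ) * (Wf j).card := by
        exact_mod_cast h1
      have hpos : (0:ℝ) ≤ coverNum U (dudleyEps n (j+1)) := by linarith [hN1 (j+1)]
      calc ((D (j+1)).card : ℝ) ≤ ((Wf (j+1)).card : ℝ) * (Wf j).card := hcast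
        _ ≤ coverNum U (dudleyEps n (j+1)) * coverNum U (dudleyEps n (j+1)) := by
            rw [h2]
            exact mul_le_mul_of_nonneg_left h3 hpos
        _ = (coverNum U (dudleyEps n (j+1)))^2 := (sq _).symm
    -- chaining bound for each sign vector
    have hchain : ∀ e : Fin n → Bool,
        sSup {r : ℝ | ∃ f ∈ F, r = ∑ t, (if e t then (1:ℝ) else -1) * f (x t)}
          ≤ Real.sqrt n * dudleyEps n K + ∑ j ∈ Finset.range K,
              (D (j+1)).sup' (hDne j) (fun w => ∑ t, (if e t then (1:ℝ) else -1) * w t) := by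
      intro e
      refine csSup_le (hSne e) ?_
      rintro r ⟨f, hfF, rfl⟩
      set φ : EuclideanSpace ℝ (Fin n) → ℝ :=
        fun w => ∑ t, (if e t then (1:ℝ) else -1) * w t with hφdef
      set v : EuclideanSpace ℝ (Fin n) := WithLp.toLp 2 (fun t => f (x t)) with hvdef
      have hvU : v ∈ U := ⟨f, hfF, fun t => rfl⟩
      have hφsub : ∀ a b : EuclideanSpace ℝ (Fin n), φ (a - b) = φ a - φ b := by
        intro a b
        simp only [hφdef]
        rw [← Finset.sum_sub_distrib]
        refine Finset.sum_congr rfl fun t _ => ?_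
        have hab : (a - b) t = a t - b t := rfl
        rw [hab]; ring
      have hφ0 : φ (0 : EuclideanSpace ℝ (Fin n)) = 0 := by
        simp only [hφdef]
        refine Finset.sum_eq_zero fun t _ => ?_
        have h0t : (0 : EuclideanSpace ℝ (Fin n)) t = 0 := rfl
        rw [h0t, mul_zero]
      have hgoal_eq : ∑ t, (if e t then (1:ℝ) else -1) * f (x t) = φ v := rfl
      rw [hgoal_eq]
      have htel : φ v = φ (v - π K v) + ∑ j ∈ Finset.range K, φ (π (j+1) v - π j v) := by
        have h1 : ∑ j ∈ Finset.range K, φ (π (j+1) v - π j v)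
            = φ (π K v) - φ (π 0 v) := by
          rw [Finset.sum_congr rfl fun j _ => hφsub _ _]
          exact Finset.sum_range_sub (fun j => φ (π j v)) K
        rw [h1, hπ0 0 v rfl, hφ0, hφsub]
        ring
      have hCS : φ (v - π K v) ≤ Real.sqrt n * dudleyEps n K := by
        set w : EuclideanSpace ℝ (Fin n) := v - π K v with hwdef
        have hsq := Finset.sum_mul_sq_le_sq_mul_sq Finset.univ
          (fun t => (if e t then (1:ℝ) else -1)) (fun t => w t)
        have h2 : φ w ≤ Real.sqrt ((φ w)^2) := by
          rw [Real.sqrt_sq_eq_abs]; exact le_abs_self _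
        have h1 : φ w ≤ Real.sqrt (∑ t : Fin n, (if e t then (1:ℝ) else -1)^2)
            * Real.sqrt (∑ t : Fin n, (w t)^2) := by
          refine h2.trans ?_
          rw [← Real.sqrt_mul (Finset.sum_nonneg fun t _ => sq_nonneg _)]
          exact Real.sqrt_le_sqrt hsq
        have h3 : ∑ t : Fin n, (if e t then (1:ℝ) else -1)^2 = (n:ℝ) := by
          have : ∀ t : Fin n, (if e t then (1:ℝ) else -1)^2 = 1 := by
            intro t; cases e t <;> norm_num
          rw [Finset.sum_congr rfl fun t _ => this t]
          simp
        have h4 : Real.sqrt (∑ t : Fin n, (w t)^2) = ‖w‖ := by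
          rw [EuclideanSpace.norm_eq]
          congr 1
          exact Finset.sum_congr rfl fun t _ => by rw [Real.norm_eq_abs, sq_abs]
        have h5 : ‖w‖ ≤ dudleyEps n K := hπdist K v hvU
        calc φ w ≤ Real.sqrt (∑ t : Fin n, (if e t then (1:ℝ) else -1)^2)
              * Real.sqrt (∑ t : Fin n, (w t)^2) := h1
          _ = Real.sqrt n * ‖w‖ := by rw [h3, h4]
          _ ≤ Real.sqrt n * dudleyEps n K := mul_le_mul_of_nonneg_left h5 hsn.le
      have hterm : ∀ j ∈ Finset.range K, φ (π (j+1) v - π j v)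
          ≤ (D (j+1)).sup' (hDne j) φ :=
        fun j _ => Finset.le_sup' φ (hDmem j v hvU)
      calc φ v = φ (v - π K v) + ∑ j ∈ Finset.range K, φ (π (j+1) v - π j v) := htel
        _ ≤ Real.sqrt n * dudleyEps n K + ∑ j ∈ Finset.range K, (D (j+1)).sup' (hDne j) φ :=
            add_le_add hCS (Finset.sum_le_sum hterm)
    -- averaging over signs and Massart
    have h2npos : (0:ℝ) < 2 ^ n := by positivity
    have hmassj : ∀ j ∈ Finset.range K,
        (2 ^ n : ℝ)⁻¹ * ∑ e : Fin n → Bool,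
            (D (j+1)).sup' (hDne j) (fun w => ∑ t, (if e t then (1:ℝ) else -1) * w t)
          ≤ 6 * dudleyEps n (j+1) * g (dudleyEps n (j+1)) := by
      intro j _
      have hmas := massart (D (j+1)) (hDne j) (M := 3 * dudleyEps n (j+1))
        (by have := heps_pos (j+1); linarith) (hDnorm j)
      have hlogb : Real.sqrt (2 * Real.log ((D (j+1)).card))
          ≤ 2 * Real.sqrt (Real.log (coverNum U (dudleyEps n (j+1)))) := by
        have hc1 : (1:ℝ) ≤ ((D (j+1)).card : ℝ) := by exact_mod_cast (hDne j).card_pos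
        have hl1 : Real.log ((D (j+1)).card : ℝ)
            ≤ Real.log ((coverNum U (dudleyEps n (j+1)))^2) :=
          Real.log_le_log (by linarith) (hDcard j)
        have hl2 : Real.log ((coverNum U (dudleyEps n (j+1)))^2)
            = 2 * Real.log (coverNum U (dudleyEps n (j+1))) := by
          rw [Real.log_pow]; norm_num
        have hlogN : 0 ≤ Real.log (coverNum U (dudleyEps n (j+1))) :=
          Real.log_nonneg (hN1 (j+1))
        calc Real.sqrt (2 * Real.log ((D (j+1)).card))
            ≤ Real.sqrt (2 ^ 2 * Real.log (coverNum U (dudleyEps n (j+1)))) := by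
              refine Real.sqrt_le_sqrt ?_
              rw [hl2] at hl1
              nlinarith
          _ = 2 * Real.sqrt (Real.log (coverNum U (dudleyEps n (j+1)))) := by
              rw [Real.sqrt_mul (by norm_num : (0:ℝ) ≤ 2 ^ 2),
                Real.sqrt_sq (by norm_num : (0:ℝ) ≤ 2)]
      calc (2 ^ n : ℝ)⁻¹ * ∑ e : Fin n → Bool,
            (D (j+1)).sup' (hDne j) (fun w => ∑ t, (if e t then (1:ℝ) else -1) * w t)
          ≤ 3 * dudleyEps n (j+1) * Real.sqrt (2 * Real.log ((D (j+1)).card)) := hmas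
        _ ≤ 3 * dudleyEps n (j+1) * (2 * Real.sqrt (Real.log (coverNum U (dudleyEps n (j+1))))) := by
            refine mul_le_mul_of_nonneg_left hlogb ?_
            have := heps_pos (j+1)
            positivity
        _ = 6 * dudleyEps n (j+1) * g (dudleyEps n (j+1)) := by
            simp only [hgdef]
            ring
    have havg : (2 ^ n : ℝ)⁻¹ * ∑ e : Fin n → Bool,
        sSup {r : ℝ | ∃ f ∈ F, r = ∑ t, (if e t then (1:ℝ) else -1) * f (x t)}
          ≤ Real.sqrt n * dudleyEps n K
            + ∑ j ∈ Finset.range K, 6 * dudleyEps n (j+1) * g (dudleyEps n (j+1)) := by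
      have h1 : ∑ e : Fin n → Bool,
          sSup {r : ℝ | ∃ f ∈ F, r = ∑ t, (if e t then (1:ℝ) else -1) * f (x t)}
            ≤ ∑ e : Fin n → Bool, (Real.sqrt n * dudleyEps n K + ∑ j ∈ Finset.range K,
              (D (j+1)).sup' (hDne j) (fun w => ∑ t, (if e t then (1:ℝ) else -1) * w t)) :=
        Finset.sum_le_sum fun e _ => hchain e
      have h2 : ∑ e : Fin n → Bool, (Real.sqrt n * dudleyEps n K + ∑ j ∈ Finset.range K,
            (D (j+1)).sup' (hDne j) (fun w => ∑ t, (if e t then (1:ℝ) else -1) * w t))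
          = 2 ^ n * (Real.sqrt n * dudleyEps n K) + ∑ j ∈ Finset.range K,
            ∑ e : Fin n → Bool,
              (D (j+1)).sup' (hDne j) (fun w => ∑ t, (if e t then (1:ℝ) else -1) * w t) := by
        rw [Finset.sum_add_distrib, Finset.sum_const, Finset.card_univ, nsmul_eq_mul,
          Finset.sum_comm]
        norm_num [Fintype.card_fun]
      calc (2 ^ n : ℝ)⁻¹ * ∑ e : Fin n → Bool,
          sSup {r : ℝ | ∃ f ∈ F, r = ∑ t, (if e t then (1:ℝ) else -1) * f (x t)}
            ≤ (2 ^ n : ℝ)⁻¹ * (2 ^ n * (Real.sqrt n * dudleyEps n K) + ∑ j ∈ Finset.range K,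
              ∑ e : Fin n → Bool,
                (D (j+1)).sup' (hDne j) (fun w => ∑ t, (if e t then (1:ℝ) else -1) * w t)) := by
              refine mul_le_mul_of_nonneg_left ?_ (le_of_lt (inv_pos.2 h2npos))
              rw [← h2]
              exact h1
        _ = Real.sqrt n * dudleyEps n K + ∑ j ∈ Finset.range K,
              (2 ^ n : ℝ)⁻¹ * ∑ e : Fin n → Bool,
                (D (j+1)).sup' (hDne j) (fun w => ∑ t, (if e t then (1:ℝ) else -1) * w t) := by
              rw [mul_add, ← mul_assoc, inv_mul_cancel₀ (ne_of_gt h2npos), one_mul,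
                Finset.mul_sum]
        _ ≤ Real.sqrt n * dudleyEps n K
              + ∑ j ∈ Finset.range K, 6 * dudleyEps n (j+1) * g (dudleyEps n (j+1)) :=
            add_le_add le_rfl (Finset.sum_le_sum hmassj)
    -- comparison of the Riemann sum with the entropy integral
    have hsum_le_int : ∑ j ∈ Finset.range K, 6 * dudleyEps n (j+1) * g (dudleyEps n (j+1))
        ≤ 12 * ∫ ε in α..(Real.sqrt n), g ε := by
      have hpiece : ∀ j : ℕ, 6 * dudleyEps n (j+1) * g (dudleyEps n (j+1))
          ≤ 12 * ∫ ε in dudleyEps n (j+2)..dudleyEps n (j+1), g ε := by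
        intro j
        have hlt : dudleyEps n (j+2) ≤ dudleyEps n (j+1) := dudleyEps_anti hn (by omega)
        have hconst : ∫ _ε in dudleyEps n (j+2)..dudleyEps n (j+1), g (dudleyEps n (j+1))
            = (dudleyEps n (j+1) - dudleyEps n (j+2)) * g (dudleyEps n (j+1)) := by
          rw [intervalIntegral.integral_const, smul_eq_mul]
        have hmono : ∫ _ε in dudleyEps n (j+2)..dudleyEps n (j+1), g (dudleyEps n (j+1))
            ≤ ∫ ε in dudleyEps n (j+2)..dudleyEps n (j+1), g ε := by
          refine intervalIntegral.integral_mono_on hlt intervalIntegrable_const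
            (hg_int _ _ (heps_pos _) (heps_pos _)) ?_
          intro u hu
          exact hg_anti u (dudleyEps n (j+1)) (lt_of_lt_of_le (heps_pos (j+2)) hu.1) hu.2
        have hdiff : dudleyEps n (j+1) - dudleyEps n (j+2) = dudleyEps n (j+1) / 2 := by
          rw [dudleyEps_succ n (j+1)]; ring
        calc 6 * dudleyEps n (j+1) * g (dudleyEps n (j+1))
            = 12 * ((dudleyEps n (j+1) - dudleyEps n (j+2)) * g (dudleyEps n (j+1))) := by
              rw [hdiff]; ring
          _ = 12 * ∫ _ε in dudleyEps n (j+2)..dudleyEps n (j+1), g (dudleyEps n (j+1)) := by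
              rw [hconst]
          _ ≤ 12 * ∫ ε in dudleyEps n (j+2)..dudleyEps n (j+1), g ε := by
              exact mul_le_mul_of_nonneg_left hmono (by norm_num)
      have htelint : ∀ m : ℕ, ∑ j ∈ Finset.range m, ∫ ε in dudleyEps n (j+2)..dudleyEps n (j+1), g ε
          = ∫ ε in (dudleyEps n (m+1))..(dudleyEps n 1), g ε := by
        intro m
        induction m with
        | zero => simp
        | succ m ih =>
          rw [Finset.sum_range_succ, ih, add_comm]
          exact intervalIntegral.integral_add_adjacent_intervals
            (hg_int _ _ (heps_pos _) (heps_pos _)) (hg_int _ _ (heps_pos _) (heps_pos _))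
      have hsplit : (∫ ε in α..(Real.sqrt n), g ε)
          = (∫ ε in α..(dudleyEps n (K+1)), g ε) + (∫ ε in (dudleyEps n (K+1))..(dudleyEps n 1), g ε)
            + (∫ ε in (dudleyEps n 1)..(Real.sqrt n), g ε) := by
        rw [intervalIntegral.integral_add_adjacent_intervals
            (hg_int α (dudleyEps n (K+1)) hα (heps_pos _))
            (hg_int _ _ (heps_pos _) (heps_pos _)),
          intervalIntegral.integral_add_adjacent_intervals
            (hg_int α (dudleyEps n 1) hα (heps_pos _))
            (hg_int (dudleyEps n 1) (Real.sqrt n) (heps_pos _) hsn)]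
      have hnn1 : 0 ≤ ∫ ε in α..(dudleyEps n (K+1)), g ε :=
        intervalIntegral.integral_nonneg hαeK1 (fun u _ => hg_nonneg u)
      have hnn2 : 0 ≤ ∫ ε in (dudleyEps n 1)..(Real.sqrt n), g ε :=
        intervalIntegral.integral_nonneg (heps_le_sn 1) (fun u _ => hg_nonneg u)
      calc ∑ j ∈ Finset.range K, 6 * dudleyEps n (j+1) * g (dudleyEps n (j+1))
          ≤ ∑ j ∈ Finset.range K, 12 * ∫ ε in dudleyEps n (j+2)..dudleyEps n (j+1), g ε :=
            Finset.sum_le_sum fun j _ => hpiece j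
        _ = 12 * ∑ j ∈ Finset.range K, ∫ ε in dudleyEps n (j+2)..dudleyEps n (j+1), g ε := by
            rw [Finset.mul_sum]
        _ = 12 * ∫ ε in (dudleyEps n (K+1))..(dudleyEps n 1), g ε := by rw [htelint K]
        _ ≤ 12 * ∫ ε in α..(Real.sqrt n), g ε := by
            have : (∫ ε in (dudleyEps n (K+1))..(dudleyEps n 1), g ε)
                ≤ ∫ ε in α..(Real.sqrt n), g ε := by
              rw [hsplit]; linarith
            linarith
    -- final assembly
    have hmulself : Real.sqrt n * Real.sqrt n = (n:ℝ) := Real.mul_self_sqrt hnpos.le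
    have hfirst : (1 / n : ℝ) * (Real.sqrt n * dudleyEps n K) ≤ 4 * α / Real.sqrt n := by
      have h1 : (1 / (n:ℝ)) * (Real.sqrt n * dudleyEps n K) = dudleyEps n K / Real.sqrt n := by
        set s := Real.sqrt (n:ℝ) with hs
        have hs0 : s ≠ 0 := hsn.ne'
        rw [← hmulself, one_div, mul_inv, mul_assoc, ← mul_assoc (s⁻¹) s, inv_mul_cancel₀ hs0,
          one_mul, div_eq_inv_mul]
      rw [h1]
      exact (div_le_div_iff_of_pos_right hsn).2 heK4.le
    calc (1 / n : ℝ) * ((2 ^ n : ℝ)⁻¹ * ∑ e : Fin n → Bool,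
        sSup {r : ℝ | ∃ f ∈ F, r = ∑ t, (if e t then (1:ℝ) else -1) * f (x t)})
        ≤ (1 / n : ℝ) * (Real.sqrt n * dudleyEps n K
            + ∑ j ∈ Finset.range K, 6 * dudleyEps n (j+1) * g (dudleyEps n (j+1))) := by
          refine mul_le_mul_of_nonneg_left havg ?_
          positivity
      _ = (1 / n : ℝ) * (Real.sqrt n * dudleyEps n K)
            + (1 / n : ℝ) * ∑ j ∈ Finset.range K, 6 * dudleyEps n (j+1) * g (dudleyEps n (j+1)) := by
          ring
      _ ≤ 4 * α / Real.sqrt n + (1 / n : ℝ) * (12 * ∫ ε in α..(Real.sqrt n), g ε) := by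
          refine add_le_add hfirst (mul_le_mul_of_nonneg_left hsum_le_int ?_)
          positivity
      _ = 4 * α / Real.sqrt n + (12 / n) * ∫ ε in α..(Real.sqrt n), g ε := by
          ring
  · -- easy case : √n < 4α
    push_neg at hcase
    have hLHS : (1 / n : ℝ) * ((2 ^ n : ℝ)⁻¹ *
        ∑ e : Fin n → Bool,
          sSup {r : ℝ | ∃ f ∈ F, r = ∑ t, (if e t then (1:ℝ) else -1) * f (x t)}) ≤ 1 := by
      have h1 : ∑ e : Fin n → Bool,
          sSup {r : ℝ | ∃ f ∈ F, r = ∑ t, (if e t then (1:ℝ) else -1) * f (x t)}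
            ≤ (2 ^ n : ℝ) * n := by
        calc ∑ e : Fin n → Bool,
            sSup {r : ℝ | ∃ f ∈ F, r = ∑ t, (if e t then (1:ℝ) else -1) * f (x t)}
              ≤ ∑ _e : Fin n → Bool, (n : ℝ) := by
              refine Finset.sum_le_sum fun e _ => csSup_le (hSne e) (hr_le e)
          _ = (2 ^ n : ℝ) * n := by
              rw [Finset.sum_const, Finset.card_univ, nsmul_eq_mul]
              norm_num [Fintype.card_fun]
      have h2n : (0:ℝ) < 2 ^ n := by positivity
      calc (1 / n : ℝ) * ((2 ^ n : ℝ)⁻¹ * ∑ e : Fin n → Bool,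
          sSup {r : ℝ | ∃ f ∈ F, r = ∑ t, (if e t then (1:ℝ) else -1) * f (x t)})
            ≤ (1 / n : ℝ) * ((2 ^ n : ℝ)⁻¹ * ((2 ^ n : ℝ) * n)) := by
            have hmono := mul_le_mul_of_nonneg_left h1 (le_of_lt (inv_pos.2 h2n))
            have : (0:ℝ) ≤ 1 / n := by positivity
            exact mul_le_mul_of_nonneg_left hmono this
        _ = 1 := by field_simp
    have hint : 0 ≤ ∫ ε in α..(Real.sqrt n), g ε := by
      by_cases hα' : α ≤ Real.sqrt n
      · exact intervalIntegral.integral_nonneg hα' (fun u _ => hg_nonneg u)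
      · push_neg at hα'
        have hz : Set.EqOn g 0 (Set.uIcc α (Real.sqrt n)) := by
          intro ε hε
          have hmem : Real.sqrt n ≤ ε := by
            rcases Set.mem_uIcc.1 hε with h | h
            · linarith [h.1]
            · exact h.1
          have hεpos : 0 < ε := lt_of_lt_of_le hsn hmem
          have : coverNum U ε = 1 := coverNum_eq_one hU0 hUb hεpos hmem
          simp [hgdef, this]
        rw [intervalIntegral.integral_congr hz]
        simp
    have hgt : (1:ℝ) < 4 * α / Real.sqrt n := (one_lt_div hsn).2 hcase
    have h12n : (0:ℝ) ≤ 12 / n := by positivity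
    linarith [mul_nonneg h12n hint]
end

section
/- (Rademacher lower bound for spectrally-bounded ReLU networks) There exists a universal constant c > 0 such that for any depth L ≥ 2, any data x_1,…,x_n ∈ ℝ^d collected as rows of X, and any r > 0, the class of L-layer ReLU networks with output dimension 1, all hidden dimensions at least 2, and ∏_i ‖A_i‖_σ ≤ r has empirical Rademacher complexity at least c · ‖X‖_2 · r / n (in the normalized convention), i.e. E_ε sup Σ_t ε_t F_A(x_t) ≥ c r ‖X‖_2. -/
open Finset

/-- Euclidean norm of a vector. -/
noncomputable def euclNorm {d : ℕ} (v : Fin d → ℝ) : ℝ := Real.sqrt (∑ i, v i ^ 2)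

/-- Spectral (operator ℓ_2 → ℓ_2) norm. -/
noncomputable def specNorm {d m : ℕ} (A : Matrix (Fin d) (Fin m) ℝ) : ℝ :=
  ⨆ x : {x : Fin m → ℝ // euclNorm x ≤ 1}, euclNorm (A.mulVec x.1)

/-- Coordinate-wise ReLU. -/
def relu {d : ℕ} (v : Fin d → ℝ) : Fin d → ℝ := fun i => max 0 (v i)

/-- Hidden layers of a ReLU network. -/
noncomputable def netHidden (d : ℕ → ℕ)
    (A : ∀ j : ℕ, Matrix (Fin (d (j + 1))) (Fin (d j)) ℝ)
    (x : Fin (d 0) → ℝ) : ∀ i : ℕ, Fin (d i) → ℝ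
  | 0 => x
  | (i + 1) => relu ((A i).mulVec (netHidden d A x i))

/-- Scalar output of an L-layer ReLU network with linear output layer of dimension 1
(the sum over the single output coordinate). -/
noncomputable def netOut (L : ℕ) (d : ℕ → ℕ)
    (A : ∀ j : ℕ, Matrix (Fin (d (j + 1))) (Fin (d j)) ℝ)
    (x : Fin (d 0) → ℝ) : ℝ :=
  ∑ j, (A (L - 1)).mulVec (netHidden d A x (L - 1)) j



namespace RadLB

def sgn (b : Bool) : ℝ := if b then 1 else -1

lemma sgn_mul_self (b : Bool) : sgn b * sgn b = 1 := by cases b <;> simp [sgn]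

lemma sum_prod_sgn_pow {n : ℕ} (m : Fin n → ℕ) :
    ∑ e : Fin n → Bool, ∏ w, (sgn (e w)) ^ (m w)
      = ∏ w : Fin n, (if Even (m w) then (2:ℝ) else 0) := by
  have h := Finset.prod_univ_sum (fun _ : Fin n => (univ : Finset Bool))
      (fun w b => (sgn b) ^ (m w))
  rw [Fintype.piFinset_univ] at h
  rw [← h]
  refine Finset.prod_congr rfl fun w _ => ?_
  rcases Nat.even_or_odd (m w) with he | ho
  · rw [if_pos he]
    simp [sgn, he.neg_one_pow]
  · rw [if_neg (by simpa using ho)]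
    simp [sgn, ho.neg_one_pow]

lemma sgn_eq_prod {n : ℕ} (e : Fin n → Bool) (t : Fin n) :
    sgn (e t) = ∏ w, sgn (e w) ^ (if w = t then 1 else 0) := by
  have : ∀ w : Fin n, sgn (e w) ^ (if w = t then 1 else 0)
      = if w = t then sgn (e w) else 1 := by
    intro w; by_cases h : w = t <;> simp [h]
  rw [Finset.prod_congr rfl fun w _ => this w, Finset.prod_ite_eq' univ t, if_pos (mem_univ t)]

lemma sum_sgn_two {n : ℕ} (t s : Fin n) :
    ∑ e : Fin n → Bool, sgn (e t) * sgn (e s) = if t = s then (2:ℝ)^n else 0 := by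
  have key : ∀ e : Fin n → Bool, sgn (e t) * sgn (e s)
      = ∏ w, sgn (e w) ^ ((if w = t then 1 else 0) + (if w = s then 1 else 0)) := by
    intro e
    rw [sgn_eq_prod e t, sgn_eq_prod e s, ← Finset.prod_mul_distrib]
    exact Finset.prod_congr rfl fun w _ => (pow_add _ _ _).symm
  rw [Finset.sum_congr rfl fun e _ => key e, sum_prod_sgn_pow]
  by_cases h : t = s
  · subst h
    rw [if_pos rfl]
    have : ∀ w : Fin n, (if Even ((if w = t then 1 else 0) + (if w = t then 1 else 0)) then (2:ℝ) else 0) = 2 := by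
      intro w; rw [if_pos ⟨(if w = t then 1 else 0), by ring⟩]
    rw [Finset.prod_congr rfl fun w _ => this w, Finset.prod_const, card_univ, Fintype.card_fin]
  · rw [if_neg h]
    apply Finset.prod_eq_zero (mem_univ t)
    rw [if_pos rfl, if_neg h, if_neg (by decide)]

lemma sum_sgn_four {n : ℕ} (t s u v : Fin n) (hts : t ≠ s) (huv : u ≠ v) :
    ∑ e : Fin n → Bool, sgn (e t) * sgn (e s) * (sgn (e u) * sgn (e v))
      = if (t = u ∧ s = v) ∨ (t = v ∧ s = u) then (2:ℝ)^n else 0 := by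
  set m : Fin n → ℕ := fun w => (if w = t then 1 else 0) + (if w = s then 1 else 0)
      + ((if w = u then 1 else 0) + (if w = v then 1 else 0)) with hm
  have key : ∀ e : Fin n → Bool, sgn (e t) * sgn (e s) * (sgn (e u) * sgn (e v))
      = ∏ w, sgn (e w) ^ (m w) := by
    intro e
    rw [sgn_eq_prod e t, sgn_eq_prod e s, sgn_eq_prod e u, sgn_eq_prod e v,
      ← Finset.prod_mul_distrib, ← Finset.prod_mul_distrib, ← Finset.prod_mul_distrib]
    exact Finset.prod_congr rfl fun w _ => by rw [hm]; ring
  rw [Finset.sum_congr rfl fun e _ => key e, sum_prod_sgn_pow]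
  by_cases hcase : (t = u ∧ s = v) ∨ (t = v ∧ s = u)
  · rw [if_pos hcase]
    have hall : ∀ w : Fin n, (if Even (m w) then (2:ℝ) else 0) = 2 := by
      intro w
      rcases hcase with ⟨h1, h2⟩ | ⟨h1, h2⟩ <;>
      · subst h1; subst h2
        rw [if_pos ⟨(if w = t then 1 else 0) + (if w = s then 1 else 0), by rw [hm]; try ring⟩]
    rw [Finset.prod_congr rfl fun w _ => hall w, Finset.prod_const, card_univ, Fintype.card_fin]
  · rw [if_neg hcase]
    push_neg at hcase
    -- find a witness with odd multiplicity
    have hodd : ∃ w : Fin n, m w = 1 := by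
      by_cases htu : t = u
      · have hsv : s ≠ v := fun h => hcase.1 htu h
        have htv : t ≠ v := by rw [htu]; exact huv
        have hsu : s ≠ u := by rw [← htu]; exact hts.symm
        exact ⟨s, by simp [hm, if_neg (Ne.symm hts), if_neg hsu, if_neg hsv]⟩
      · by_cases htv : t = v
        · have hsu : s ≠ u := fun h => hcase.2 htv h
          have hsv : s ≠ v := by rw [← htv]; exact hts.symm
          exact ⟨s, by simp [hm, if_neg (Ne.symm hts), if_neg hsu, if_neg hsv]⟩
        · exact ⟨t, by simp [hm, if_neg hts, if_neg htu, if_neg htv]⟩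
    obtain ⟨w, hw⟩ := hodd
    apply Finset.prod_eq_zero (mem_univ w)
    rw [hw, if_neg (by decide)]


lemma euclNorm_nonneg {d : ℕ} (v : Fin d → ℝ) : 0 ≤ euclNorm v := Real.sqrt_nonneg _

lemma euclNorm_sq {d : ℕ} (v : Fin d → ℝ) : euclNorm v ^ 2 = ∑ i, v i ^ 2 :=
  Real.sq_sqrt (Finset.sum_nonneg fun i _ => sq_nonneg _)

lemma euclNorm_zero {d : ℕ} : euclNorm (fun _ : Fin d => (0:ℝ)) = 0 := by
  simp [euclNorm]

instance instNE {m : ℕ} : Nonempty {x : Fin m → ℝ // euclNorm x ≤ 1} :=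
  ⟨⟨fun _ => 0, by rw [euclNorm_zero]; norm_num⟩⟩

lemma specNorm_nonneg {d m : ℕ} (A : Matrix (Fin d) (Fin m) ℝ) : 0 ≤ specNorm A :=
  Real.iSup_nonneg fun x => euclNorm_nonneg _

lemma specNorm_le {d m : ℕ} (A : Matrix (Fin d) (Fin m) ℝ) {C : ℝ}
    (h : ∀ u : Fin m → ℝ, euclNorm u ≤ 1 → euclNorm (A.mulVec u) ≤ C) : specNorm A ≤ C :=
  ciSup_le fun x => h x.1 x.2

lemma euclNorm_le_of_sq_le {d : ℕ} {v : Fin d → ℝ} {B : ℝ} (hB : 0 ≤ B)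
    (h : ∑ i, v i ^ 2 ≤ B ^ 2) : euclNorm v ≤ B := by
  rw [euclNorm]
  calc Real.sqrt (∑ i, v i ^ 2) ≤ Real.sqrt (B ^ 2) := Real.sqrt_le_sqrt h
  _ = B := by rw [Real.sqrt_sq hB]

lemma euclNorm_smul {d : ℕ} (c : ℝ) (v : Fin d → ℝ) :
    euclNorm (c • v) = |c| * euclNorm v := by
  simp only [euclNorm, Pi.smul_apply, smul_eq_mul, mul_pow, ← Finset.mul_sum]
  rw [Real.sqrt_mul (sq_nonneg c), Real.sqrt_sq_eq_abs]

lemma bddAbove_specNorm {d m : ℕ} (A : Matrix (Fin d) (Fin m) ℝ) :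
    BddAbove (Set.range fun x : {x : Fin m → ℝ // euclNorm x ≤ 1} =>
      euclNorm (A.mulVec x.1)) := by
  refine ⟨Real.sqrt (∑ j, ∑ k, A j k ^ 2), ?_⟩
  rintro y ⟨⟨u, hu⟩, rfl⟩
  have hsum : ∑ i, (A.mulVec u) i ^ 2 ≤ (∑ j, ∑ k, A j k ^ 2) := by
    have husq : ∑ k, u k ^ 2 ≤ 1 := by
      have := euclNorm_sq u
      nlinarith [euclNorm_nonneg u, euclNorm_sq u]
    refine Finset.sum_le_sum fun j _ => ?_
    have hrow : (A.mulVec u) j ^ 2 ≤ (∑ k, A j k ^ 2) * ∑ k, u k ^ 2 := by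
      simpa [Matrix.mulVec, dotProduct] using
        Finset.sum_mul_sq_le_sq_mul_sq univ (fun k => A j k) u
    have hnn : 0 ≤ ∑ k, A j k ^ 2 := Finset.sum_nonneg fun k _ => sq_nonneg _
    nlinarith
  have := Real.sqrt_le_sqrt hsum
  simpa [euclNorm] using this

lemma euclNorm_mulVec_le {d m : ℕ} (A : Matrix (Fin d) (Fin m) ℝ) (v : Fin m → ℝ) :
    euclNorm (A.mulVec v) ≤ specNorm A * euclNorm v := by
  rcases eq_or_ne (euclNorm v) 0 with h0 | hne
  · have hz : v = fun _ => 0 := by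
      funext i
      have hsumz : ∑ i, v i ^ 2 = 0 := by
        have h1 := euclNorm_sq v
        rw [h0] at h1; simpa using h1.symm
      have := (Finset.sum_eq_zero_iff_of_nonneg (fun i _ => sq_nonneg (v i))).mp hsumz i (mem_univ i)
      exact pow_eq_zero_iff two_ne_zero |>.mp this
    rw [h0, mul_zero, hz]
    have hmv : A.mulVec (fun _ => 0) = fun _ => 0 := by
      funext j; simp [Matrix.mulVec, dotProduct]
    rw [hmv, euclNorm_zero]
  · have hc : 0 < euclNorm v := lt_of_le_of_ne (euclNorm_nonneg v) (Ne.symm hne)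
    set c := euclNorm v with hcdef
    have hu : euclNorm (c⁻¹ • v) = 1 := by
      rw [euclNorm_smul, abs_of_pos (inv_pos.mpr hc), inv_mul_cancel₀ (ne_of_gt hc)]
    have hle : euclNorm (A.mulVec (c⁻¹ • v)) ≤ specNorm A :=
      le_ciSup (bddAbove_specNorm A) (⟨c⁻¹ • v, le_of_eq hu⟩ :
        {x : Fin m → ℝ // euclNorm x ≤ 1})
    rw [Matrix.mulVec_smul, euclNorm_smul, abs_of_pos (inv_pos.mpr hc)] at hle
    calc euclNorm (A.mulVec v) = c * (c⁻¹ * euclNorm (A.mulVec v)) := by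
          field_simp
    _ ≤ c * specNorm A := by
          apply mul_le_mul_of_nonneg_left hle (le_of_lt hc)
    _ = specNorm A * c := mul_comm _ _

lemma euclNorm_relu_le {d : ℕ} (v : Fin d → ℝ) : euclNorm (relu v) ≤ euclNorm v := by
  apply Real.sqrt_le_sqrt
  refine Finset.sum_le_sum fun i _ => ?_
  have : |max 0 (v i)| ≤ |v i| := by
    rcases le_total 0 (v i) with h | h
    · rw [max_eq_right h]
    · rw [max_eq_left h]; simp [abs_of_nonpos h]; exact h
  calc (relu v i) ^ 2 = |max 0 (v i)| ^ 2 := by rw [sq_abs]; rfl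
  _ ≤ |v i| ^ 2 := by nlinarith [abs_nonneg (v i), abs_nonneg (max 0 (v i))]
  _ = v i ^ 2 := sq_abs _


/-- sum of a two-hot pattern -/
lemma sum_two_pattern {D : ℕ} (hD : 2 ≤ D) (P Q : ℝ) :
    ∑ j : Fin D, (if (j:ℕ) = 0 then P else if (j:ℕ) = 1 then Q else 0) = P + Q := by
  have h0 : (0:ℕ) < D := by omega
  have h1 : (1:ℕ) < D := by omega
  have hpt : ∀ j : Fin D, (if (j:ℕ) = 0 then P else if (j:ℕ) = 1 then Q else 0)
      = (if j = ⟨0,h0⟩ then P else 0) + (if j = ⟨1,h1⟩ then Q else 0) := by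
    intro j
    by_cases hj0 : (j:ℕ) = 0
    · have hj : j = ⟨0,h0⟩ := Fin.ext hj0
      subst hj; norm_num
    · by_cases hj1 : (j:ℕ) = 1
      · have hj : j = ⟨1,h1⟩ := Fin.ext hj1
        subst hj; norm_num
      · have hne0 : j ≠ ⟨0,h0⟩ := fun h => hj0 (by rw [h])
        have hne1 : j ≠ ⟨1,h1⟩ := fun h => hj1 (by rw [h])
        simp [hj0, hj1, hne0, hne1]
  rw [Finset.sum_congr rfl fun j _ => hpt j, Finset.sum_add_distrib,
    Finset.sum_ite_eq' univ, Finset.sum_ite_eq' univ, if_pos (mem_univ _), if_pos (mem_univ _)]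

lemma sum_pick_one {D : ℕ} {c : ℕ} (hc : c < D) (w : Fin D → ℝ) :
    ∑ k : Fin D, (if c = (k:ℕ) then (1:ℝ) else 0) * w k = w ⟨c, hc⟩ := by
  have hpt : ∀ k : Fin D, (if c = (k:ℕ) then (1:ℝ) else 0) * w k
      = if k = ⟨c,hc⟩ then w k else 0 := by
    intro k
    by_cases hk : k = ⟨c, hc⟩
    · subst hk; norm_num
    · have : c ≠ (k:ℕ) := fun h => hk (Fin.ext h.symm)
      simp [this, hk]
  rw [Finset.sum_congr rfl fun k _ => hpt k, Finset.sum_ite_eq' univ, if_pos (mem_univ _)]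

lemma sum_pick_two {D : ℕ} (hD : 2 ≤ D) (w : Fin D → ℝ) :
    ∑ k : Fin D, (if (k:ℕ) = 0 then (1:ℝ) else if (k:ℕ) = 1 then -1 else 0) * w k
      = w ⟨0, by omega⟩ - w ⟨1, by omega⟩ := by
  have h0 : (0:ℕ) < D := by omega
  have h1 : (1:ℕ) < D := by omega
  have hpt : ∀ k : Fin D, (if (k:ℕ) = 0 then (1:ℝ) else if (k:ℕ) = 1 then -1 else 0) * w k
      = (if k = ⟨0,h0⟩ then w k else 0) + (if k = ⟨1,h1⟩ then -(w k) else 0) := by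
    intro k
    by_cases hk0 : (k:ℕ) = 0
    · have hk : k = ⟨0,h0⟩ := Fin.ext hk0
      subst hk; norm_num
    · by_cases hk1 : (k:ℕ) = 1
      · have hk : k = ⟨1,h1⟩ := Fin.ext hk1
        subst hk; norm_num
      · have hne0 : k ≠ ⟨0,h0⟩ := fun h => hk0 (by rw [h])
        have hne1 : k ≠ ⟨1,h1⟩ := fun h => hk1 (by rw [h])
        simp [hk0, hk1, hne0, hne1]
  rw [Finset.sum_congr rfl fun k _ => hpt k, Finset.sum_add_distrib,
    Finset.sum_ite_eq' univ, Finset.sum_ite_eq' univ, if_pos (mem_univ _), if_pos (mem_univ _)]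
  ring

lemma two_sq_le_sum {D : ℕ} (hD : 2 ≤ D) (w : Fin D → ℝ) :
    w ⟨0, by omega⟩ ^ 2 + w ⟨1, by omega⟩ ^ 2 ≤ ∑ k, w k ^ 2 := by
  have h0 : (0:ℕ) < D := by omega
  have h1 : (1:ℕ) < D := by omega
  have := sum_two_pattern hD (w ⟨0,h0⟩ ^ 2) (w ⟨1,h1⟩ ^ 2)
  rw [← this]
  refine Finset.sum_le_sum fun k _ => ?_
  by_cases hk0 : (k:ℕ) = 0
  · have hk : k = ⟨0,h0⟩ := Fin.ext hk0
    subst hk; norm_num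
  · by_cases hk1 : (k:ℕ) = 1
    · have hk : k = ⟨1,h1⟩ := Fin.ext hk1
      subst hk; simp [hk1]
    · simp [hk0, hk1, sq_nonneg]

lemma max_zero_idem (t : ℝ) : max 0 (max 0 t) = max 0 t :=
  max_eq_right (le_max_left 0 t)

lemma max_zero_sub (t : ℝ) : max 0 t - max 0 (-t) = t := by
  rcases le_total 0 t with h | h
  · rw [max_eq_right h, max_eq_left (by linarith)]; ring
  · rw [max_eq_left h, max_eq_right (by linarith)]; ring

lemma exists_net (L : ℕ) (hL : 2 ≤ L) (d : ℕ → ℕ) (hdL : d L = 1)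
    (hd : ∀ i, 1 ≤ i → i < L → 2 ≤ d i) (a : Fin (d 0) → ℝ) :
    ∃ A : ∀ j : ℕ, Matrix (Fin (d (j + 1))) (Fin (d j)) ℝ,
      (∏ i ∈ Finset.range L, specNorm (A i)) ≤ 2 * euclNorm a ∧
      ∀ x : Fin (d 0) → ℝ, netOut L d A x = ∑ k, a k * x k := by
  classical
  set a' : ℕ → ℝ := fun m => if h : m < d 0 then a ⟨m, h⟩ else 0 with ha'
  have ha'k : ∀ k : Fin (d 0), a' (k:ℕ) = a k := by
    intro k; simp [ha', k.isLt]
  set A : ∀ j : ℕ, Matrix (Fin (d (j + 1))) (Fin (d j)) ℝ := fun j =>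
    Matrix.of fun jj k =>
      if j = 0 then (if (jj:ℕ) = 0 then a' (k:ℕ) else if (jj:ℕ) = 1 then -(a' (k:ℕ)) else 0)
      else if j + 1 = L then (if (k:ℕ) = 0 then 1 else if (k:ℕ) = 1 then -1 else 0)
      else if (jj:ℕ) = (k:ℕ) ∧ (jj:ℕ) < 2 then 1 else 0 with hA
  refine ⟨A, ?_, ?_⟩
  · -- spectral norm bound
    -- layer 0
    have hA0 : specNorm (A 0) ≤ Real.sqrt 2 * euclNorm a := by
      apply specNorm_le
      intro u hu
      have hq : ∀ jj : Fin (d 1), (A 0).mulVec u jj =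
          (if (jj:ℕ) = 0 then (∑ k, a k * u k)
           else if (jj:ℕ) = 1 then -(∑ k, a k * u k) else 0) := by
        intro jj
        simp only [hA, Matrix.mulVec, dotProduct, Matrix.of_apply, if_pos rfl]
        by_cases hj0 : (jj:ℕ) = 0
        · simp only [hj0, if_pos rfl]
          refine Finset.sum_congr rfl fun k _ => ?_
          simp [ha'k]
        · by_cases hj1 : (jj:ℕ) = 1
          · simp only [hj0, hj1, ite_true, ite_false]
            rw [← Finset.sum_neg_distrib]
            refine Finset.sum_congr rfl fun k _ => ?_
            simp [ha'k, neg_mul]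
          · simp [hj0, hj1]
      set q := ∑ k, a k * u k with hqd
      have hq2 : q ^ 2 ≤ euclNorm a ^ 2 := by
        have hcs : q ^ 2 ≤ (∑ k, a k ^ 2) * (∑ k, u k ^ 2) :=
          Finset.sum_mul_sq_le_sq_mul_sq univ a u
        have hu2 : ∑ k, u k ^ 2 ≤ 1 := by
          have := euclNorm_sq u
          nlinarith [euclNorm_nonneg u]
        have ha2 : (0:ℝ) ≤ ∑ k, a k ^ 2 := Finset.sum_nonneg fun k _ => sq_nonneg _
        rw [euclNorm_sq]
        nlinarith
      apply euclNorm_le_of_sq_le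
        (mul_nonneg (Real.sqrt_nonneg 2) (euclNorm_nonneg a))
      have hsum : ∑ jj, ((A 0).mulVec u) jj ^ 2 = q ^ 2 + q ^ 2 := by
        rw [show ∑ jj, ((A 0).mulVec u) jj ^ 2
            = ∑ jj : Fin (d 1), (if (jj:ℕ) = 0 then q ^ 2 else if (jj:ℕ) = 1 then q ^ 2 else 0)
          from Finset.sum_congr rfl fun jj _ => by
            rw [hq jj]
            by_cases hj0 : (jj:ℕ) = 0
            · simp [hj0]
            · by_cases hj1 : (jj:ℕ) = 1
              · simp [hj0, hj1]
              · simp [hj0, hj1]]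
        exact sum_two_pattern (hd 1 le_rfl (by omega)) _ _
      rw [hsum, mul_pow, Real.sq_sqrt (by norm_num : (0:ℝ) ≤ 2)]
      nlinarith
    -- middle layers
    have hAmid : ∀ i, 1 ≤ i → i + 1 < L → specNorm (A i) ≤ 1 := by
      intro i hi1 hiL
      apply specNorm_le
      intro u hu
      have hd_i : 2 ≤ d i := hd i hi1 (by omega)
      have hd_i1 : 2 ≤ d (i+1) := hd (i+1) (by omega) hiL
      have hq : ∀ jj : Fin (d (i+1)), (A i).mulVec u jj =
          (if (jj:ℕ) = 0 then u ⟨0, by omega⟩ else if (jj:ℕ) = 1 then u ⟨1, by omega⟩ else 0) := by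
        intro jj
        simp only [hA, Matrix.mulVec, dotProduct, Matrix.of_apply,
          if_neg (by omega : ¬i = 0), if_neg (by omega : ¬i + 1 = L)]
        by_cases hj0 : (jj:ℕ) = 0
        · rw [if_pos hj0]
          rw [show ∑ k : Fin (d i), (if (jj:ℕ) = (k:ℕ) ∧ (jj:ℕ) < 2 then (1:ℝ) else 0) * u k
              = ∑ k : Fin (d i), (if (0:ℕ) = (k:ℕ) then (1:ℝ) else 0) * u k
            from Finset.sum_congr rfl fun k _ => by
              have hcond : ((jj:ℕ) = (k:ℕ) ∧ (jj:ℕ) < 2) ↔ ((0:ℕ) = (k:ℕ)) := by omega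
              simp only [hcond]]
          exact sum_pick_one (by omega) u
        · by_cases hj1 : (jj:ℕ) = 1
          · rw [if_neg hj0, if_pos hj1]
            rw [show ∑ k : Fin (d i), (if (jj:ℕ) = (k:ℕ) ∧ (jj:ℕ) < 2 then (1:ℝ) else 0) * u k
                = ∑ k : Fin (d i), (if (1:ℕ) = (k:ℕ) then (1:ℝ) else 0) * u k
              from Finset.sum_congr rfl fun k _ => by
                have hcond : ((jj:ℕ) = (k:ℕ) ∧ (jj:ℕ) < 2) ↔ ((1:ℕ) = (k:ℕ)) := by omega
                simp only [hcond]]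
            exact sum_pick_one (by omega) u
          · rw [if_neg hj0, if_neg hj1]
            apply Finset.sum_eq_zero
            intro k _
            have : ¬((jj:ℕ) = (k:ℕ) ∧ (jj:ℕ) < 2) := by omega
            rw [if_neg this, zero_mul]
      apply euclNorm_le_of_sq_le (by norm_num)
      have hsum : ∑ jj, ((A i).mulVec u) jj ^ 2
          = u ⟨0, by omega⟩ ^ 2 + u ⟨1, by omega⟩ ^ 2 := by
        rw [show ∑ jj, ((A i).mulVec u) jj ^ 2
            = ∑ jj : Fin (d (i+1)), (if (jj:ℕ) = 0 then u ⟨0, by omega⟩ ^ 2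
                else if (jj:ℕ) = 1 then u ⟨1, by omega⟩ ^ 2 else 0)
          from Finset.sum_congr rfl fun jj _ => by
            rw [hq jj]
            by_cases hj0 : (jj:ℕ) = 0
            · simp [hj0]
            · by_cases hj1 : (jj:ℕ) = 1
              · simp [hj0, hj1]
              · simp [hj0, hj1]]
        exact sum_two_pattern hd_i1 _ _
      rw [hsum, one_pow]
      have h1 := two_sq_le_sum hd_i u
      have hu2 : ∑ k, u k ^ 2 ≤ 1 := by
        have := euclNorm_sq u
        nlinarith [euclNorm_nonneg u]
      linarith
    -- last layer
    have hAlast : specNorm (A (L-1)) ≤ Real.sqrt 2 := by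
      apply specNorm_le
      intro u hu
      have hdL1 : 2 ≤ d (L-1) := hd (L-1) (by omega) (by omega)
      have hq : ∀ jj : Fin (d (L-1+1)), (A (L-1)).mulVec u jj
          = u ⟨0, by omega⟩ - u ⟨1, by omega⟩ := by
        intro jj
        simp only [hA, Matrix.mulVec, dotProduct, Matrix.of_apply,
          if_neg (by omega : ¬L - 1 = 0), if_pos (by omega : L - 1 + 1 = L)]
        exact sum_pick_two hdL1 u
      apply euclNorm_le_of_sq_le (Real.sqrt_nonneg 2)
      rw [Real.sq_sqrt (by norm_num : (0:ℝ) ≤ 2)]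
      have hsum : ∑ jj, ((A (L-1)).mulVec u) jj ^ 2
          = ∑ jj : Fin (d (L-1+1)), (u ⟨0, by omega⟩ - u ⟨1, by omega⟩) ^ 2 :=
        Finset.sum_congr rfl fun jj _ => by rw [hq jj]
      rw [hsum, Finset.sum_const, card_univ, Fintype.card_fin]
      have hcard : d (L-1+1) = 1 := by
        have : L - 1 + 1 = L := by omega
        rw [this, hdL]
      rw [hcard, one_smul]
      have h1 := two_sq_le_sum hdL1 u
      have hu2 : ∑ k, u k ^ 2 ≤ 1 := by
        have := euclNorm_sq u
        nlinarith [euclNorm_nonneg u]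
      nlinarith [sq_nonneg (u ⟨0, by omega⟩ + u ⟨1, by omega⟩)]
    -- combine
    have hbound : ∀ i ∈ Finset.range L, specNorm (A i) ≤
        (if i = 0 then Real.sqrt 2 * euclNorm a else 1) * (if i + 1 = L then Real.sqrt 2 else 1) := by
      intro i hi
      rw [Finset.mem_range] at hi
      by_cases h0 : i = 0
      · subst h0
        rw [if_pos rfl, if_neg (by omega)]
        simpa using hA0
      · by_cases hlast : i + 1 = L
        · rw [if_neg h0, if_pos hlast, one_mul]
          have : i = L - 1 := by omega
          rw [this]; exact hAlast
        · rw [if_neg h0, if_neg hlast, one_mul]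
          exact hAmid i (by omega) (by omega)
    calc ∏ i ∈ Finset.range L, specNorm (A i)
        ≤ ∏ i ∈ Finset.range L, ((if i = 0 then Real.sqrt 2 * euclNorm a else 1)
            * (if i + 1 = L then Real.sqrt 2 else 1)) :=
          Finset.prod_le_prod (fun i _ => specNorm_nonneg _) hbound
      _ = (∏ i ∈ Finset.range L, (if i = 0 then Real.sqrt 2 * euclNorm a else 1))
            * ∏ i ∈ Finset.range L, (if i + 1 = L then Real.sqrt 2 else 1) :=
          Finset.prod_mul_distrib
      _ = (Real.sqrt 2 * euclNorm a) * Real.sqrt 2 := by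
          rw [Finset.prod_ite_eq' (Finset.range L) 0
              (fun _ => Real.sqrt 2 * euclNorm a), if_pos (Finset.mem_range.mpr (by omega))]
          congr 1
          have hfun : ∀ i, (if i + 1 = L then Real.sqrt 2 else (1:ℝ))
              = if i = L - 1 then Real.sqrt 2 else 1 := by
            intro i
            have hiff : i + 1 = L ↔ i = L - 1 := by omega
            simp only [hiff]
          rw [Finset.prod_congr rfl fun i _ => hfun i,
            Finset.prod_ite_eq' (Finset.range L) (L-1) (fun _ => Real.sqrt 2),
            if_pos (Finset.mem_range.mpr (by omega))]
      _ = 2 * euclNorm a := by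
          rw [mul_comm (Real.sqrt 2) (euclNorm a), mul_assoc,
            Real.mul_self_sqrt (by norm_num : (0:ℝ) ≤ 2)]
          ring
  · -- output computation
    intro x
    set p := ∑ k, a k * x k with hp
    have hhid : ∀ i, 1 ≤ i → i < L →
        netHidden d A x i = fun jj : Fin (d i) =>
          (if (jj:ℕ) = 0 then max 0 p else if (jj:ℕ) = 1 then max 0 (-p) else 0) := by
      intro i
      induction i with
      | zero => omega
      | succ i ih =>
        intro _ hlt
        rcases Nat.eq_zero_or_pos i with h0 | hpos
        · subst h0
          funext jj
          show max 0 (((A 0).mulVec x) jj) = _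
          have : ((A 0).mulVec x) jj =
              (if (jj:ℕ) = 0 then p else if (jj:ℕ) = 1 then -p else 0) := by
            simp only [hA, Matrix.mulVec, dotProduct, Matrix.of_apply, if_pos rfl]
            by_cases hj0 : (jj:ℕ) = 0
            · simp only [hj0, if_pos rfl]
              refine Finset.sum_congr rfl fun k _ => ?_
              simp [ha'k]
            · by_cases hj1 : (jj:ℕ) = 1
              · simp only [hj0, hj1, ite_true, ite_false]
                rw [hp, ← Finset.sum_neg_distrib]
                refine Finset.sum_congr rfl fun k _ => ?_
                simp [ha'k, neg_mul]
              · simp [hj0, hj1]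
          rw [this]
          by_cases hj0 : (jj:ℕ) = 0
          · simp [hj0]
          · by_cases hj1 : (jj:ℕ) = 1
            · simp [hj0, hj1]
            · simp [hj0, hj1]
        · have hiL : i < L := by omega
          have hprev := ih hpos hiL
          have hd_i : 2 ≤ d i := hd i hpos hiL
          funext jj
          show max 0 (((A i).mulVec (netHidden d A x i)) jj) = _
          rw [hprev]
          set w : Fin (d i) → ℝ := fun k =>
            (if (k:ℕ) = 0 then max 0 p else if (k:ℕ) = 1 then max 0 (-p) else 0) with hwdef
          have hrow : ((A i).mulVec w) jj =
              (if (jj:ℕ) = 0 then max 0 p else if (jj:ℕ) = 1 then max 0 (-p) else 0) := by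
            simp only [hA, Matrix.mulVec, dotProduct, Matrix.of_apply,
              if_neg (by omega : ¬i = 0), if_neg (by omega : ¬i + 1 = L)]
            by_cases hj0 : (jj:ℕ) = 0
            · rw [if_pos hj0]
              rw [show ∑ k : Fin (d i), (if (jj:ℕ) = (k:ℕ) ∧ (jj:ℕ) < 2 then (1:ℝ) else 0) * w k
                  = ∑ k : Fin (d i), (if (0:ℕ) = (k:ℕ) then (1:ℝ) else 0) * w k
                from Finset.sum_congr rfl fun k _ => by
                  have hcond : ((jj:ℕ) = (k:ℕ) ∧ (jj:ℕ) < 2) ↔ ((0:ℕ) = (k:ℕ)) := by omega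
                  simp only [hcond]]
              rw [sum_pick_one (by omega : 0 < d i) w]
              simp [hwdef]
            · by_cases hj1 : (jj:ℕ) = 1
              · rw [if_neg hj0, if_pos hj1]
                rw [show ∑ k : Fin (d i), (if (jj:ℕ) = (k:ℕ) ∧ (jj:ℕ) < 2 then (1:ℝ) else 0) * w k
                    = ∑ k : Fin (d i), (if (1:ℕ) = (k:ℕ) then (1:ℝ) else 0) * w k
                  from Finset.sum_congr rfl fun k _ => by
                    have hcond : ((jj:ℕ) = (k:ℕ) ∧ (jj:ℕ) < 2) ↔ ((1:ℕ) = (k:ℕ)) := by omega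
                    simp only [hcond]]
                rw [sum_pick_one (by omega : 1 < d i) w]
                simp [hwdef]
              · rw [if_neg hj0, if_neg hj1]
                apply Finset.sum_eq_zero
                intro k _
                have : ¬((jj:ℕ) = (k:ℕ) ∧ (jj:ℕ) < 2) := by omega
                rw [if_neg this, zero_mul]
          rw [hrow]
          by_cases hj0 : (jj:ℕ) = 0
          · simp [hj0, max_zero_idem]
          · by_cases hj1 : (jj:ℕ) = 1
            · simp [hj0, hj1, max_zero_idem]
            · simp [hj0, hj1]
    -- final output
    have hdL1 : 2 ≤ d (L-1) := hd (L-1) (by omega) (by omega)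
    have hlast := hhid (L-1) (by omega) (by omega)
    show ∑ jj, ((A (L-1)).mulVec (netHidden d A x (L-1))) jj = p
    rw [hlast]
    set w : Fin (d (L-1)) → ℝ := fun k =>
      (if (k:ℕ) = 0 then max 0 p else if (k:ℕ) = 1 then max 0 (-p) else 0) with hwdef
    have hrow : ∀ jj : Fin (d (L-1+1)), ((A (L-1)).mulVec w) jj = p := by
      intro jj
      simp only [hA, Matrix.mulVec, dotProduct, Matrix.of_apply,
        if_neg (by omega : ¬L - 1 = 0), if_pos (by omega : L - 1 + 1 = L)]
      rw [sum_pick_two hdL1 w]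
      have : w ⟨0, by omega⟩ = max 0 p := by simp [hwdef]
      rw [this]
      have : w ⟨1, by omega⟩ = max 0 (-p) := by simp [hwdef]
      rw [this, max_zero_sub]
    rw [Finset.sum_congr rfl fun jj _ => hrow jj, Finset.sum_const, card_univ, Fintype.card_fin]
    have hcard : d (L-1+1) = 1 := by
      have : L - 1 + 1 = L := by omega
      rw [this, hdL]
    rw [hcard, one_smul]


lemma abs_netOut_le (L : ℕ) (hL : 1 ≤ L) (d : ℕ → ℕ) (hdL : d L = 1)
    (A : ∀ j : ℕ, Matrix (Fin (d (j + 1))) (Fin (d j)) ℝ) (y : Fin (d 0) → ℝ) :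
    |netOut L d A y| ≤ (∏ i ∈ Finset.range L, specNorm (A i)) * euclNorm y := by
  have hhid : ∀ i, euclNorm (netHidden d A y i)
      ≤ (∏ j ∈ Finset.range i, specNorm (A j)) * euclNorm y := by
    intro i
    induction i with
    | zero => simp [netHidden]
    | succ i ih =>
      calc euclNorm (netHidden d A y (i+1))
          ≤ euclNorm ((A i).mulVec (netHidden d A y i)) := euclNorm_relu_le _
        _ ≤ specNorm (A i) * euclNorm (netHidden d A y i) := euclNorm_mulVec_le _ _
        _ ≤ specNorm (A i) * ((∏ j ∈ Finset.range i, specNorm (A j)) * euclNorm y) :=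
            mul_le_mul_of_nonneg_left ih (specNorm_nonneg _)
        _ = (∏ j ∈ Finset.range (i+1), specNorm (A j)) * euclNorm y := by
            rw [Finset.prod_range_succ]; ring
  set w := (A (L-1)).mulVec (netHidden d A y (L-1)) with hw
  have h1 : |netOut L d A y| ≤ ∑ j, |w j| := by
    rw [netOut]
    exact Finset.abs_sum_le_sum_abs _ _
  have hcard : d (L - 1 + 1) = 1 := by
    have hLs : L - 1 + 1 = L := by omega
    rw [hLs, hdL]
  have h2 : (∑ j, |w j|) ^ 2 ≤ ∑ j, w j ^ 2 := by
    have hcs : (∑ j, 1 * |w j|) ^ 2 ≤ (∑ _j : Fin (d (L-1+1)), (1:ℝ) ^ 2) * ∑ j, |w j| ^ 2 :=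
      Finset.sum_mul_sq_le_sq_mul_sq univ (fun _ => 1) (fun j => |w j|)
    simp only [one_mul, one_pow, sq_abs] at hcs
    calc (∑ j, |w j|) ^ 2 ≤ (∑ _j : Fin (d (L-1+1)), (1:ℝ)) * ∑ j, w j ^ 2 := by
          simpa using hcs
      _ = ∑ j, w j ^ 2 := by
          rw [Finset.sum_const, card_univ, Fintype.card_fin]
          have hone : (d (L-1+1)) • (1:ℝ) = 1 := by rw [hcard]; simp
          rw [hone, one_mul]
  have h3 : ∑ j, |w j| ≤ euclNorm w := by
    have hnn : 0 ≤ ∑ j, |w j| := Finset.sum_nonneg fun j _ => abs_nonneg _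
    have := euclNorm_sq w
    nlinarith [euclNorm_nonneg w]
  have h4 : euclNorm w ≤ specNorm (A (L-1)) * euclNorm (netHidden d A y (L-1)) :=
    euclNorm_mulVec_le _ _
  have h5 : specNorm (A (L-1)) * euclNorm (netHidden d A y (L-1))
      ≤ specNorm (A (L-1)) * ((∏ j ∈ Finset.range (L-1), specNorm (A j)) * euclNorm y) :=
    mul_le_mul_of_nonneg_left (hhid (L-1)) (specNorm_nonneg _)
  have hLs : L - 1 + 1 = L := by omega
  have h6 : (∏ i ∈ Finset.range L, specNorm (A i))
      = (∏ j ∈ Finset.range (L-1), specNorm (A j)) * specNorm (A (L-1)) := by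
    conv_lhs => rw [← hLs]
    rw [Finset.prod_range_succ]
  calc |netOut L d A y| ≤ euclNorm w := le_trans h1 h3
    _ ≤ specNorm (A (L-1)) * euclNorm (netHidden d A y (L-1)) := h4
    _ ≤ specNorm (A (L-1)) * ((∏ j ∈ Finset.range (L-1), specNorm (A j)) * euclNorm y) := h5
    _ = (∏ i ∈ Finset.range L, specNorm (A i)) * euclNorm y := by rw [h6]; ring


lemma khintchine {n D : ℕ} (x : Fin n → Fin D → ℝ) :
    (2:ℝ)^n * Real.sqrt (∑ t, ∑ i, x t i ^ 2)
      ≤ 2 * ∑ e : Fin n → Bool, euclNorm (fun i => ∑ t, sgn (e t) * x t i) := by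
  classical
  set c : Fin n → Fin n → ℝ := fun t s => ∑ i, x t i * x s i with hc
  set K : ℝ := ∑ t, c t t with hK
  have hctt : ∀ t, c t t = ∑ i, x t i ^ 2 := by
    intro t; simp only [hc]
    exact Finset.sum_congr rfl fun i _ => (sq (x t i)).symm
  have hcnn : ∀ t, 0 ≤ c t t := by
    intro t; rw [hctt]; exact Finset.sum_nonneg fun i _ => sq_nonneg _
  have hKnn : 0 ≤ K := Finset.sum_nonneg fun t _ => hcnn t
  have hKsq : ∑ t, ∑ i, x t i ^ 2 = K := by
    rw [hK]; exact Finset.sum_congr rfl fun t _ => (hctt t).symm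
  have hcsymm : ∀ t s, c s t = c t s := by
    intro t s; simp only [hc]
    exact Finset.sum_congr rfl fun i _ => mul_comm _ _
  have hCS : ∀ t s, c t s ^ 2 ≤ c t t * c s s := by
    intro t s
    have h := Finset.sum_mul_sq_le_sq_mul_sq univ (x t) (x s)
    rw [hctt t, hctt s]
    simpa only [hc] using h
  set N : (Fin n → Bool) → ℝ := fun e => euclNorm (fun i => ∑ t, sgn (e t) * x t i) with hNdef
  have hNnn : ∀ e, 0 ≤ N e := fun e => euclNorm_nonneg _
  have hN2 : ∀ e, N e ^ 2 = ∑ t, ∑ s, sgn (e t) * sgn (e s) * c t s := by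
    intro e
    rw [hNdef]
    simp only []
    rw [euclNorm_sq]
    have hsq : ∀ i : Fin D, (∑ t, sgn (e t) * x t i) ^ 2
        = ∑ t, ∑ s, (sgn (e t) * x t i) * (sgn (e s) * x s i) := by
      intro i; rw [sq, Finset.sum_mul_sum]
    rw [Finset.sum_congr rfl fun i _ => hsq i]
    rw [Finset.sum_comm]
    refine Finset.sum_congr rfl fun t _ => ?_
    rw [Finset.sum_comm]
    refine Finset.sum_congr rfl fun s _ => ?_
    simp only [hc]
    rw [Finset.mul_sum]
    exact Finset.sum_congr rfl fun i _ => by ring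
  set R : (Fin n → Bool) → ℝ :=
    fun e => ∑ p ∈ univ.offDiag, sgn (e p.1) * sgn (e p.2) * c p.1 p.2 with hR
  have hsplit : ∀ e, N e ^ 2 = K + R e := by
    intro e
    rw [hN2 e, ← Finset.sum_product']
    rw [← Finset.diag_union_offDiag (univ : Finset (Fin n)),
      Finset.sum_union (Finset.disjoint_diag_offDiag _)]
    congr 1
    rw [Finset.sum_diag, hK]
    exact Finset.sum_congr rfl fun t _ => by rw [sgn_mul_self, one_mul]
  have hcard : (Finset.univ : Finset (Fin n → Bool)).card = 2^n := by
    rw [Finset.card_univ, Fintype.card_fun]; simp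
  have hRsum : ∑ e : Fin n → Bool, R e = 0 := by
    simp only [hR]
    rw [Finset.sum_comm]
    apply Finset.sum_eq_zero
    intro p hp
    have hne : p.1 ≠ p.2 := (Finset.mem_offDiag.mp hp).2.2
    rw [← Finset.sum_mul, sum_sgn_two, if_neg hne, zero_mul]
  have hT2 : ∑ e : Fin n → Bool, N e ^ 2 = 2^n * K := by
    rw [Finset.sum_congr rfl fun e _ => hsplit e, Finset.sum_add_distrib,
      Finset.sum_const, hcard, hRsum, add_zero, nsmul_eq_mul]
    push_cast; ring
  -- second moment of R
  have hRsq : ∑ e : Fin n → Bool, R e ^ 2 ≤ (2:ℝ)^n * (2 * K ^ 2) := by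
    have hexp : ∀ e, R e ^ 2 = ∑ p ∈ univ.offDiag, ∑ q ∈ univ.offDiag,
        (sgn (e p.1) * sgn (e p.2) * (sgn (e q.1) * sgn (e q.2)))
          * (c p.1 p.2 * c q.1 q.2) := by
      intro e
      rw [hR]
      simp only []
      rw [sq, Finset.sum_mul_sum]
      exact Finset.sum_congr rfl fun p _ => Finset.sum_congr rfl fun q _ => by ring
    rw [Finset.sum_congr rfl fun e _ => hexp e, Finset.sum_comm]
    have hinner : ∀ p ∈ univ.offDiag (α := Fin n),
        (∑ e : Fin n → Bool, ∑ q ∈ univ.offDiag,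
          (sgn (e p.1) * sgn (e p.2) * (sgn (e q.1) * sgn (e q.2)))
            * (c p.1 p.2 * c q.1 q.2))
        = (2:ℝ)^n * (c p.1 p.2 * c p.1 p.2) + (2:ℝ)^n * (c p.1 p.2 * c p.2 p.1) := by
      intro p hp
      have hne : p.1 ≠ p.2 := (Finset.mem_offDiag.mp hp).2.2
      rw [Finset.sum_comm]
      have hq : ∀ q ∈ univ.offDiag (α := Fin n),
          (∑ e : Fin n → Bool,
            (sgn (e p.1) * sgn (e p.2) * (sgn (e q.1) * sgn (e q.2)))
              * (c p.1 p.2 * c q.1 q.2))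
          = ((if q = p then (2:ℝ)^n * (c p.1 p.2 * c q.1 q.2) else 0)
            + (if q = (p.2, p.1) then (2:ℝ)^n * (c p.1 p.2 * c q.1 q.2) else 0)) := by
        intro q hq
        have hneq : q.1 ≠ q.2 := (Finset.mem_offDiag.mp hq).2.2
        rw [← Finset.sum_mul, sum_sgn_four p.1 p.2 q.1 q.2 hne hneq]
        have hiff : ((p.1 = q.1 ∧ p.2 = q.2) ∨ (p.1 = q.2 ∧ p.2 = q.1))
            ↔ (q = p ∨ q = (p.2, p.1)) := by
          constructor
          · rintro (⟨h1, h2⟩ | ⟨h1, h2⟩)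
            · exact Or.inl (Prod.ext h1.symm h2.symm)
            · exact Or.inr (Prod.ext h2.symm h1.symm)
          · rintro (h | h) <;> subst h
            · exact Or.inl ⟨rfl, rfl⟩
            · exact Or.inr ⟨rfl, rfl⟩
        rw [if_congr hiff rfl rfl]
        by_cases h1 : q = p
        · have h2 : q ≠ (p.2, p.1) := by
            subst h1
            intro hcon
            exact hne (congrArg Prod.fst hcon)
          rw [if_pos (Or.inl h1), if_pos h1, if_neg h2, add_zero]
        · by_cases h2 : q = (p.2, p.1)
          · rw [if_pos (Or.inr h2), if_neg h1, if_pos h2, zero_add]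
          · rw [if_neg (by tauto), if_neg h1, if_neg h2, add_zero, zero_mul]
      rw [Finset.sum_congr rfl hq, Finset.sum_add_distrib,
        Finset.sum_ite_eq' univ.offDiag p, Finset.sum_ite_eq' univ.offDiag (p.2, p.1),
        if_pos hp, if_pos (Finset.mem_offDiag.mpr ⟨mem_univ _, mem_univ _, by simpa using hne.symm⟩)]
    rw [Finset.sum_congr rfl hinner]
    have hterm : ∀ p ∈ univ.offDiag (α := Fin n),
        (2:ℝ)^n * (c p.1 p.2 * c p.1 p.2) + (2:ℝ)^n * (c p.1 p.2 * c p.2 p.1)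
          ≤ (2:ℝ)^n * 2 * (c p.1 p.1 * c p.2 p.2) := by
      intro p _
      have h1 := hCS p.1 p.2
      have h2 : (0:ℝ) < 2^n := by positivity
      have h3 : c p.2 p.1 = c p.1 p.2 := hcsymm p.1 p.2
      rw [h3]
      nlinarith [mul_le_mul_of_nonneg_left h1 h2.le]
    calc ∑ p ∈ univ.offDiag, ((2:ℝ)^n * (c p.1 p.2 * c p.1 p.2)
            + (2:ℝ)^n * (c p.1 p.2 * c p.2 p.1))
        ≤ ∑ p ∈ univ.offDiag, (2:ℝ)^n * 2 * (c p.1 p.1 * c p.2 p.2) :=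
          Finset.sum_le_sum hterm
      _ ≤ ∑ p ∈ univ ×ˢ univ, (2:ℝ)^n * 2 * (c p.1 p.1 * c p.2 p.2) := by
          apply Finset.sum_le_sum_of_subset_of_nonneg
          · rw [← Finset.diag_union_offDiag (univ : Finset (Fin n))]
            exact Finset.subset_union_right
          · intro p _ _
            have := hcnn p.1
            have := hcnn p.2
            positivity
      _ = (2:ℝ)^n * (2 * K ^ 2) := by
          rw [← Finset.mul_sum]
          rw [Finset.sum_product' univ univ (fun t s => c t t * c s s)]
          rw [show (∑ t, ∑ s, c t t * c s s) = K * K from by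
            rw [Finset.sum_mul_sum]]
          ring
  -- fourth moment
  have hT4 : ∑ e : Fin n → Bool, N e ^ 4 ≤ 3 * 2^n * K ^ 2 := by
    have h4 : ∀ e, N e ^ 4 = K^2 + 2 * K * R e + R e ^2 := by
      intro e
      have := hsplit e
      have hN4 : N e ^ 4 = (N e ^ 2) ^ 2 := by ring
      rw [hN4, this]; ring
    rw [Finset.sum_congr rfl fun e _ => h4 e]
    rw [Finset.sum_add_distrib, Finset.sum_add_distrib, Finset.sum_const, hcard]
    rw [← Finset.mul_sum, hRsum, mul_zero, nsmul_eq_mul]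
    push_cast
    nlinarith [hRsq]
  -- Cauchy-Schwarz chaining
  set T1 : ℝ := ∑ e : Fin n → Bool, N e with hT1
  set T3 : ℝ := ∑ e : Fin n → Bool, N e ^ 3 with hT3
  have hT1nn : 0 ≤ T1 := Finset.sum_nonneg fun e _ => hNnn e
  have hcs1 : ((2:ℝ)^n * K) ^ 2 ≤ T1 * T3 := by
    have h := Finset.sum_mul_sq_le_sq_mul_sq univ
      (fun e : Fin n → Bool => Real.sqrt (N e)) (fun e => N e * Real.sqrt (N e))
    have hpt1 : ∀ e : Fin n → Bool, Real.sqrt (N e) * (N e * Real.sqrt (N e)) = N e ^ 2 := by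
      intro e
      rw [show Real.sqrt (N e) * (N e * Real.sqrt (N e))
          = N e * (Real.sqrt (N e) * Real.sqrt (N e)) from by ring,
        Real.mul_self_sqrt (hNnn e)]
      ring
    have hpt2 : ∀ e : Fin n → Bool, Real.sqrt (N e) ^ 2 = N e := fun e => Real.sq_sqrt (hNnn e)
    have hpt3 : ∀ e : Fin n → Bool, (N e * Real.sqrt (N e)) ^ 2 = N e ^ 3 := by
      intro e
      rw [mul_pow, hpt2 e]; ring
    rw [Finset.sum_congr rfl fun e _ => hpt1 e, Finset.sum_congr rfl fun e _ => hpt2 e,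
      Finset.sum_congr rfl fun e _ => hpt3 e] at h
    rw [← hT2]
    exact h
  have hcs2 : T3 ^ 2 ≤ ((2:ℝ)^n * K) * ∑ e : Fin n → Bool, N e ^ 4 := by
    have h := Finset.sum_mul_sq_le_sq_mul_sq univ
      (fun e : Fin n → Bool => N e) (fun e => N e ^ 2)
    have hpt1 : ∀ e : Fin n → Bool, N e * N e ^ 2 = N e ^ 3 := fun e => by ring
    have hpt2 : ∀ e : Fin n → Bool, (N e ^ 2) ^ 2 = N e ^ 4 := fun e => by ring
    rw [Finset.sum_congr rfl fun e _ => hpt1 e, Finset.sum_congr rfl fun e _ => hpt2 e] at h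
    rw [← hT2]
    exact h
  -- conclude
  rw [hKsq]
  rcases eq_or_lt_of_le hKnn with hK0 | hKpos
  · rw [← hK0, Real.sqrt_zero, mul_zero]
    linarith
  · set P : ℝ := (2:ℝ)^n with hP
    have hPpos : 0 < P := by rw [hP]; positivity
    have hT3nn : 0 ≤ T3 := Finset.sum_nonneg fun e _ => pow_nonneg (hNnn e) 3
    have hcomb : (P * K) ^ 4 ≤ T1^2 * ((P * K) * (3 * P * K^2)) := by
      have e1 : ((P*K)^2)^2 ≤ (T1 * T3)^2 := pow_le_pow_left₀ (sq_nonneg _) hcs1 2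
      have e2 : (T1 * T3)^2 = T1^2 * T3^2 := by ring
      have e3 : T1^2 * T3^2 ≤ T1^2 * ((P*K) * ∑ e : Fin n → Bool, N e ^4) :=
        mul_le_mul_of_nonneg_left hcs2 (sq_nonneg T1)
      have e4 : T1^2 * ((P*K) * ∑ e : Fin n → Bool, N e ^4)
          ≤ T1^2 * ((P*K) * (3 * P * K^2)) := by
        apply mul_le_mul_of_nonneg_left _ (sq_nonneg T1)
        apply mul_le_mul_of_nonneg_left _ (le_of_lt (mul_pos hPpos hKpos))
        calc (∑ e : Fin n → Bool, N e ^ 4) ≤ 3 * 2^n * K^2 := hT4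
          _ = 3 * P * K^2 := by rw [hP]
      calc (P*K)^4 = ((P*K)^2)^2 := by ring
        _ ≤ (T1*T3)^2 := e1
        _ = T1^2 * T3^2 := e2
        _ ≤ _ := le_trans e3 e4
    have hstep : P^2 * K ≤ 3 * T1^2 := by
      have hfac : (0:ℝ) < P^2 * K^3 := by positivity
      have hmul : P^2 * K^3 * (P^2 * K) ≤ P^2 * K^3 * (3 * T1^2) := by
        calc P^2 * K^3 * (P^2 * K) = (P*K)^4 := by ring
          _ ≤ T1^2 * ((P * K) * (3 * P * K^2)) := hcomb
          _ = P^2 * K^3 * (3 * T1^2) := by ring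
      exact le_of_mul_le_mul_left hmul hfac
    have hsqK : Real.sqrt K ^ 2 = K := Real.sq_sqrt hKnn
    have hfin : (P * Real.sqrt K) ^ 2 ≤ (2 * T1) ^ 2 := by
      nlinarith [sq_nonneg T1]
    have hmono := Real.sqrt_le_sqrt hfin
    rw [Real.sqrt_sq (by positivity), Real.sqrt_sq (by linarith)] at hmono
    exact hmono


end RadLB

open RadLB

/-- Rademacher lower bound for spectrally-bounded ReLU networks:
there is a universal c > 0 such that for any depth L ≥ 2, architecture with output
dimension 1 and hidden dimensions at least 2, data x_1,…,x_n, and r > 0,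
E_ε sup_{∏‖A_i‖_σ ≤ r} Σ_t ε_t F_A(x_t) ≥ c·r·‖X‖₂. -/
theorem rademacher_lower_bound :
    ∃ c : ℝ, 0 < c ∧
      ∀ (L n : ℕ) (_ : 2 ≤ L) (d : ℕ → ℕ) (_ : d L = 1)
        (_ : ∀ i, 1 ≤ i → i < L → 2 ≤ d i)
        (x : Fin n → Fin (d 0) → ℝ) (r : ℝ) (_ : 0 < r),
        c * r * Real.sqrt (∑ t, ∑ i, (x t i) ^ 2)
          ≤ (2 ^ n : ℝ)⁻¹ * ∑ e : Fin n → Bool,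
              sSup {v : ℝ | ∃ A : ∀ j : ℕ, Matrix (Fin (d (j + 1))) (Fin (d j)) ℝ,
                (∏ i ∈ Finset.range L, specNorm (A i)) ≤ r
                ∧ v = ∑ t, (if e t then (1:ℝ) else -1) * netOut L d A (x t)} := by
  classical
  refine ⟨1/4, by norm_num, ?_⟩
  intro L n hL d hdL hd x r hr
  have hL1 : 1 ≤ L := by omega
  -- the sign sum vector
  have hmain : ∀ e : Fin n → Bool,
      (r/2) * euclNorm (fun i => ∑ t, sgn (e t) * x t i)
        ≤ sSup {v : ℝ | ∃ A : ∀ j : ℕ, Matrix (Fin (d (j + 1))) (Fin (d j)) ℝ,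
            (∏ i ∈ Finset.range L, specNorm (A i)) ≤ r
            ∧ v = ∑ t, (if e t then (1:ℝ) else -1) * netOut L d A (x t)} := by
    intro e
    set S : Fin (d 0) → ℝ := fun i => ∑ t, sgn (e t) * x t i with hS
    set Ne : ℝ := euclNorm S with hNe
    have hNnn : 0 ≤ Ne := euclNorm_nonneg S
    -- bounded above
    have hbdd : BddAbove {v : ℝ | ∃ A : ∀ j : ℕ, Matrix (Fin (d (j + 1))) (Fin (d j)) ℝ,
        (∏ i ∈ Finset.range L, specNorm (A i)) ≤ r
        ∧ v = ∑ t, (if e t then (1:ℝ) else -1) * netOut L d A (x t)} := by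
      refine ⟨r * ∑ t, euclNorm (x t), ?_⟩
      rintro v ⟨A, hA, rfl⟩
      have hterm : ∀ t : Fin n, (if e t then (1:ℝ) else -1) * netOut L d A (x t)
          ≤ r * euclNorm (x t) := by
        intro t
        have h1 : (if e t then (1:ℝ) else -1) * netOut L d A (x t) ≤ |netOut L d A (x t)| := by
          cases he : e t <;> simp [he, neg_le_abs, le_abs_self]
        have h2 := abs_netOut_le L hL1 d hdL A (x t)
        have h3 : (∏ i ∈ Finset.range L, specNorm (A i)) * euclNorm (x t)
            ≤ r * euclNorm (x t) :=
          mul_le_mul_of_nonneg_right hA (euclNorm_nonneg _)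
        linarith
      calc ∑ t, (if e t then (1:ℝ) else -1) * netOut L d A (x t)
          ≤ ∑ t, r * euclNorm (x t) := Finset.sum_le_sum fun t _ => hterm t
        _ = r * ∑ t, euclNorm (x t) := (Finset.mul_sum _ _ _).symm
    -- membership of the realized value
    set γ : ℝ := (r/2) * Ne⁻¹ with hγ
    have hγnn : 0 ≤ γ := by
      apply mul_nonneg (by linarith) (inv_nonneg.mpr hNnn)
    obtain ⟨A, hAprod, hAval⟩ := exists_net L hL d hdL hd (γ • S)
    have hnormval : euclNorm (γ • S) = γ * Ne := by
      rw [euclNorm_smul, abs_of_nonneg hγnn]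
    have hprod_r : (∏ i ∈ Finset.range L, specNorm (A i)) ≤ r := by
      refine le_trans hAprod ?_
      rw [hnormval]
      rcases eq_or_ne Ne 0 with h0 | h0
      · rw [h0, mul_zero, mul_zero]; linarith
      · rw [hγ, mul_assoc, inv_mul_cancel₀ h0, mul_one]; linarith
    have hvalue : ∑ t, (if e t then (1:ℝ) else -1) * netOut L d A (x t) = (r/2) * Ne := by
      have hsgn : ∀ t, (if e t then (1:ℝ) else -1) = sgn (e t) := fun t => rfl
      calc ∑ t, (if e t then (1:ℝ) else -1) * netOut L d A (x t)
          = ∑ t, sgn (e t) * ∑ k, (γ • S) k * x t k := by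
            refine Finset.sum_congr rfl fun t _ => ?_
            rw [hsgn t, hAval (x t)]
        _ = ∑ t, ∑ k, γ * (S k * (sgn (e t) * x t k)) := by
            refine Finset.sum_congr rfl fun t _ => ?_
            rw [Finset.mul_sum]
            refine Finset.sum_congr rfl fun k _ => ?_
            simp only [Pi.smul_apply, smul_eq_mul]
            ring
        _ = ∑ k, ∑ t, γ * (S k * (sgn (e t) * x t k)) := Finset.sum_comm
        _ = ∑ k, γ * (S k * S k) := by
            refine Finset.sum_congr rfl fun k _ => ?_
            rw [← Finset.mul_sum, ← Finset.mul_sum]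
        _ = γ * ∑ k, S k * S k := (Finset.mul_sum _ _ _).symm
        _ = γ * Ne ^ 2 := by
            rw [hNe, euclNorm_sq]
            congr 1
            exact Finset.sum_congr rfl fun k _ => (sq (S k)).symm
        _ = (r/2) * Ne := by
            rcases eq_or_ne Ne 0 with h0 | h0
            · rw [h0]; ring
            · rw [hγ]; field_simp
    have hmem : (r/2) * Ne ∈ {v : ℝ | ∃ A : ∀ j : ℕ, Matrix (Fin (d (j + 1))) (Fin (d j)) ℝ,
        (∏ i ∈ Finset.range L, specNorm (A i)) ≤ r
        ∧ v = ∑ t, (if e t then (1:ℝ) else -1) * netOut L d A (x t)} :=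
      ⟨A, hprod_r, hvalue.symm⟩
    exact le_csSup hbdd hmem
  -- assemble
  set K : ℝ := Real.sqrt (∑ t, ∑ i, (x t i) ^ 2) with hKdef
  have hKnn : 0 ≤ K := Real.sqrt_nonneg _
  have hkh := khintchine x
  have hP : (0:ℝ) < 2 ^ n := by positivity
  have hsum : ∑ e : Fin n → Bool, (r/2) * euclNorm (fun i => ∑ t, sgn (e t) * x t i)
      ≤ ∑ e : Fin n → Bool,
          sSup {v : ℝ | ∃ A : ∀ j : ℕ, Matrix (Fin (d (j + 1))) (Fin (d j)) ℝ,
            (∏ i ∈ Finset.range L, specNorm (A i)) ≤ r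
            ∧ v = ∑ t, (if e t then (1:ℝ) else -1) * netOut L d A (x t)} :=
    Finset.sum_le_sum fun e _ => hmain e
  have hfin : 2 ^ n * ((1/4) * r * K) ≤ ∑ e : Fin n → Bool,
      sSup {v : ℝ | ∃ A : ∀ j : ℕ, Matrix (Fin (d (j + 1))) (Fin (d j)) ℝ,
        (∏ i ∈ Finset.range L, specNorm (A i)) ≤ r
        ∧ v = ∑ t, (if e t then (1:ℝ) else -1) * netOut L d A (x t)} := by
    have h1 : (2:ℝ)^n * ((1/4) * r * K) = (r/2) * ((2^n * K)/2) := by ring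
    rw [h1]
    calc (r/2) * ((2^n * K)/2)
        ≤ (r/2) * ∑ e : Fin n → Bool, euclNorm (fun i => ∑ t, sgn (e t) * x t i) := by
          apply mul_le_mul_of_nonneg_left _ (by linarith : (0:ℝ) ≤ r/2)
          rw [hKdef]
          linarith [hkh]
      _ = ∑ e : Fin n → Bool, (r/2) * euclNorm (fun i => ∑ t, sgn (e t) * x t i) :=
          Finset.mul_sum _ _ _
      _ ≤ _ := hsum
  calc (1/4) * r * K = (2^n : ℝ)⁻¹ * (2^n * ((1/4) * r * K)) := by field_simp
    _ ≤ _ := mul_le_mul_of_nonneg_left hfin (by positivity)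
end
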